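/- arXiv:2503.18918 — 8 statements merged into one kernel-verified Lean document; each statement's English description precedes it below -/
import Mathlib

section
/- Let R be a commutative ring, let h : ℤ → R be any function, let r ≥ 1 be an integer, and let λ = (λ₁ ≥ ⋯ ≥ λ_r ≥ 0) be a partition with at most r parts. Then det( h(λ_i − i + j) + h(λ_i − i − j + 2) )_{i,j=1}^{r} = 2 · Σ_μ (−1)^{|μ|/2} · det( h(λ_i − μ_j − i + j) )_{i,j=1}^{r}, where the sum ranges over all partitions μ ∈ Q₋₁ with at most r nonzero parts (each such μ automatically satisfies μ₁ ≤ r−1, so the sum is finite; μ is padded with zeros to length r, and |μ| is even for every μ ∈ Q₋₁). -/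
open Finset Equiv

namespace Stmt0

/-- sign = signAux for permutations of `Fin n`. -/
lemma sign_eq_signAux : ∀ {n : ℕ} (f : Perm (Fin n)), Perm.sign f = Perm.signAux f := by
  intro n f
  match n with
  | 0 => have : f = 1 := Subsingleton.elim _ _
         simp [this, Perm.signAux_one]
  | 1 => have : f = 1 := Subsingleton.elim _ _
         simp [this, Perm.signAux_one]
  | (n+2) =>
    let s : Perm (Fin (n+2)) →* ℤˣ := MonoidHom.mk' Perm.signAux Perm.signAux_mul
    have hs : Function.Surjective s := by
      intro u
      rcases Int.units_eq_one_or u with h | h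
      · exact ⟨1, by simp [s, Perm.signAux_one, h]⟩
      · refine ⟨Equiv.swap 0 1, ?_⟩
        have : Perm.signAux (Equiv.swap (0 : Fin (n+2)) 1) = -1 :=
          Perm.signAux_swap (by simp [Fin.ext_iff])
        simp [s, this, h]
    have := Perm.eq_sign_of_surjective_hom hs
    rw [← this]
    rfl

variable {r : ℕ}

/-- Downward-closed finset of `Fin r`: membership is determined by cardinality. -/
lemma mem_iff_lt_card_of_dc (T : Finset (Fin r))
    (hdc : ∀ a b : Fin r, a ≤ b → b ∈ T → a ∈ T) (t : Fin r) :
    t ∈ T ↔ (t : ℕ) < T.card := by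
  constructor
  · intro ht
    have h1 : Finset.Iic t ⊆ T := fun a ha => hdc a t (Finset.mem_Iic.mp ha) ht
    have := Finset.card_le_card h1
    rw [Fin.card_Iic] at this
    omega
  · intro hlt
    by_contra hnt
    have h2 : T ⊆ Finset.Iio t := by
      intro b hb
      rw [Finset.mem_Iio]
      by_contra hbt
      exact hnt (hdc t b (le_of_not_gt hbt) hb)
    have := Finset.card_le_card h2
    rw [Fin.card_Iio] at this
    omega


variable {r : ℕ}

/-- signed value associated to a sign vector -/
def sgn (ε : Fin r → Bool) (j : Fin r) : ℤ := if ε j then (j : ℤ) else -(j : ℤ)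

lemma natAbs_sgn (ε : Fin r → Bool) (j : Fin r) : (sgn ε j).natAbs = (j : ℕ) := by
  unfold sgn; split <;> simp

lemma sgn_injective (ε : Fin r → Bool) : Function.Injective (sgn ε) := by
  intro a b hab
  have := congrArg Int.natAbs hab
  rw [natAbs_sgn, natAbs_sgn] at this
  exact Fin.ext this

lemma sgn_le (ε : Fin r → Bool) (j : Fin r) : sgn ε j ≤ (j : ℤ) := by
  unfold sgn; split
  · exact le_refl _
  · omega

lemma neg_le_sgn (ε : Fin r → Bool) (j : Fin r) : -(j : ℤ) ≤ sgn ε j := by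
  unfold sgn; split
  · omega
  · exact le_refl _

/-- the set of signed values -/
def Sset (ε : Fin r → Bool) : Finset ℤ := Finset.image (sgn ε) Finset.univ

lemma card_Sset (ε : Fin r → Bool) : (Sset ε).card = r := by
  rw [Sset, Finset.card_image_of_injective _ (sgn_injective ε), Finset.card_univ,
    Fintype.card_fin]

lemma mem_Sset {ε : Fin r → Bool} {s : ℤ} : s ∈ Sset ε ↔ ∃ j, sgn ε j = s := by
  simp [Sset]

/-- the sorted enumeration of the signed values -/
def gam (ε : Fin r → Bool) (t : Fin r) : ℤ := ((Sset ε).orderIsoOfFin (card_Sset ε) t : ℤ)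

lemma gam_strictMono (ε : Fin r → Bool) : StrictMono (gam ε) := by
  intro a b hab
  exact_mod_cast ((Sset ε).orderIsoOfFin (card_Sset ε)).strictMono hab

lemma gam_mem (ε : Fin r → Bool) (t : Fin r) : gam ε t ∈ Sset ε :=
  (((Sset ε).orderIsoOfFin (card_Sset ε)) t).2

/-- the permutation sending `j` to the position of `sgn ε j` in sorted order -/
noncomputable def perm' (ε : Fin r → Bool) : Fin r ≃ Fin r :=
  (Equiv.ofBijective (fun j => (⟨sgn ε j, mem_Sset.mpr ⟨j, rfl⟩⟩ : (Sset ε : Finset ℤ)))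
    (by
      rw [Fintype.bijective_iff_injective_and_card]
      constructor
      · intro a b hab
        exact sgn_injective ε (congrArg Subtype.val hab)
      · simp [card_Sset ε])).trans
    ((Sset ε).orderIsoOfFin (card_Sset ε)).toEquiv.symm

lemma gam_perm' (ε : Fin r → Bool) (j : Fin r) : gam ε (perm' ε j) = sgn ε j := by
  unfold gam perm'
  simp

lemma perm'_le_iff (ε : Fin r → Bool) {a b : Fin r} :
    perm' ε a ≤ perm' ε b ↔ sgn ε a ≤ sgn ε b := by
  constructor
  · intro hle
    have := (gam_strictMono ε).monotone hle
    rwa [gam_perm', gam_perm'] at this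
  · intro hle
    by_contra hlt
    push_neg at hlt
    have := gam_strictMono ε hlt
    rw [gam_perm', gam_perm'] at this
    omega

lemma perm'_lt_iff (ε : Fin r → Bool) {a b : Fin r} :
    perm' ε a < perm' ε b ↔ sgn ε a < sgn ε b := by
  constructor
  · intro hlt
    have := gam_strictMono ε hlt
    rwa [gam_perm', gam_perm'] at this
  · intro hlt
    by_contra hle
    push_neg at hle
    have := (perm'_le_iff ε).mp hle
    omega


/-- transport counting along the permutation -/
lemma filter_gam_eq (ε : Fin r → Bool) (c : ℤ) :
    Finset.filter (fun t => gam ε t < c) Finset.univ =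
      Finset.image (perm' ε) (Finset.filter (fun y => sgn ε y < c) Finset.univ) := by
  ext t
  simp only [Finset.mem_filter, Finset.mem_univ, true_and, Finset.mem_image]
  constructor
  · intro ht
    refine ⟨(perm' ε).symm t, ?_, by simp⟩
    have : gam ε (perm' ε ((perm' ε).symm t)) = sgn ε ((perm' ε).symm t) := gam_perm' ε _
    simp only [Equiv.apply_symm_apply] at this
    omega
  · rintro ⟨y, hy, rfl⟩
    rw [gam_perm']
    exact hy

lemma card_gam_lt (ε : Fin r → Bool) (c : ℤ) :
    (Finset.filter (fun t => gam ε t < c) Finset.univ).card =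
      (Finset.filter (fun y => sgn ε y < c) Finset.univ).card := by
  rw [filter_gam_eq, Finset.card_image_of_injective _ (perm' ε).injective]

lemma gam_le (ε : Fin r → Bool) (t : Fin r) : gam ε t ≤ (t : ℤ) := by
  by_contra hgt
  push_neg at hgt
  -- consider the set of positions with value < t+1
  have hcard : (Finset.filter (fun t' => gam ε t' < (t : ℤ) + 1) Finset.univ).card =
      (Finset.filter (fun y => sgn ε y < (t : ℤ) + 1) Finset.univ).card := card_gam_lt ε _
  have hsub : Finset.Iic t ⊆ Finset.filter (fun y => sgn ε y < (t : ℤ) + 1) Finset.univ := by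
    intro y hy
    simp only [Finset.mem_filter, Finset.mem_univ, true_and]
    have h1 : sgn ε y ≤ (y : ℤ) := sgn_le ε y
    have h2 : (y : ℕ) ≤ (t : ℕ) := Fin.le_iff_val_le_val.mp (Finset.mem_Iic.mp hy)
    omega
  have h3 := Finset.card_le_card hsub
  rw [Fin.card_Iic] at h3
  -- so the filter set on gam side has card ≥ t+1, hence t belongs to it
  have hdc : ∀ a b : Fin r, a ≤ b →
      b ∈ Finset.filter (fun t' => gam ε t' < (t : ℤ) + 1) Finset.univ →
      a ∈ Finset.filter (fun t' => gam ε t' < (t : ℤ) + 1) Finset.univ := by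
    intro a b hab hb
    simp only [Finset.mem_filter, Finset.mem_univ, true_and] at hb ⊢
    have := (gam_strictMono ε).monotone hab
    omega
  have := (mem_iff_lt_card_of_dc _ hdc t).mpr (by omega)
  simp only [Finset.mem_filter, Finset.mem_univ, true_and] at this
  omega

noncomputable def mu (ε : Fin r → Bool) (t : Fin r) : ℕ := ((t : ℤ) - gam ε t).toNat

lemma mu_coe (ε : Fin r → Bool) (t : Fin r) : (mu ε t : ℤ) = (t : ℤ) - gam ε t := by
  rw [mu, Int.toNat_of_nonneg]
  have := gam_le ε t
  omega

lemma gam_succ (ε : Fin r → Bool) (a b : Fin r) (hab : a ≤ b) :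
    (b : ℤ) - (a : ℤ) ≤ gam ε b - gam ε a := by
  rcases eq_or_lt_of_le hab with rfl | hlt
  · omega
  -- induction on the distance
  · have key : ∀ d : ℕ, ∀ a b : Fin r, (b : ℕ) = (a : ℕ) + d →
        (d : ℤ) ≤ gam ε b - gam ε a := by
      intro d
      induction d with
      | zero => intro a b hab; have : a = b := Fin.ext (by omega); simp [this]
      | succ n ih =>
        intro a b hab
        have hbr : (a : ℕ) + n < r := by have := b.isLt; omega
        have h1 := ih a ⟨(a : ℕ) + n, hbr⟩ rfl
        have h2 : (⟨(a : ℕ) + n, hbr⟩ : Fin r) < b := by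
          simp [Fin.lt_iff_val_lt_val, hab]
        have := gam_strictMono ε h2
        push_cast
        omega
    have h := key ((b : ℕ) - (a : ℕ)) a b (by omega)
    have : (a : ℕ) ≤ (b : ℕ) := hab
    push_cast at h ⊢
    omega

lemma mu_antitone (ε : Fin r → Bool) : Antitone (mu ε) := by
  intro a b hab
  have h1 := gam_succ ε a b hab
  have h2 := mu_coe ε a
  have h3 := mu_coe ε b
  omega


lemma frob_card (ε : Fin r → Bool) (t : Fin r) (ht : (t : ℕ) + 1 ≤ mu ε t) :
    (Finset.filter (fun y => (t : ℕ) + 1 ≤ mu ε y) Finset.univ).card = mu ε t + 1 := by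
  classical
  set x : Fin r := (perm' ε).symm t with hx
  have hgx : gam ε t = sgn ε x := by
    rw [hx, ← gam_perm' ε ((perm' ε).symm t), Equiv.apply_symm_apply]
  have hmut := mu_coe ε t
  have hneg : sgn ε x ≤ -1 := by omega
  have hεx : ε x = false := by
    by_contra hc
    rw [Bool.not_eq_false] at hc
    have h1 : sgn ε x = (x : ℤ) := by rw [sgn, if_pos hc]
    have h2 : (0:ℤ) ≤ ((x : ℕ) : ℤ) := Int.ofNat_nonneg _
    omega
  have hsgnx : sgn ε x = -(x : ℤ) := by rw [sgn, if_neg (by simp [hεx])]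
  have hx1 : 1 ≤ (x : ℕ) := by omega
  -- Step 1: t.val = #{y | ε y = false ∧ x < y}
  have step1 : (t : ℕ) =
      (Finset.filter (fun y => ε y = false ∧ x < y) Finset.univ).card := by
    have e1 : (t : ℕ) = (Finset.filter (fun y => y < t) Finset.univ).card := by
      rw [← Fin.card_Iio t]
      congr 1
      ext y
      simp [Finset.mem_filter]
    have e2 : Finset.filter (fun y => y < t) Finset.univ =
        Finset.filter (fun y => gam ε y < gam ε t) Finset.univ := by
      apply Finset.filter_congr
      intro y _
      simp [(gam_strictMono ε).lt_iff_lt]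
    have e3 := card_gam_lt ε (gam ε t)
    have e4 : Finset.filter (fun y => sgn ε y < gam ε t) Finset.univ =
        Finset.filter (fun y => ε y = false ∧ x < y) Finset.univ := by
      apply Finset.filter_congr
      intro y _
      rw [hgx, hsgnx]
      constructor
      · intro hlt
        by_cases hεy : ε y
        · exfalso
          have : sgn ε y = (y : ℤ) := by rw [sgn, if_pos hεy]
          omega
        · have : sgn ε y = -(y : ℤ) := by rw [sgn, if_neg (by simp_all)]
          refine ⟨by simp_all, ?_⟩
          rw [Fin.lt_iff_val_lt_val]
          omega
      · rintro ⟨hεy, hxy⟩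
        have : sgn ε y = -(y : ℤ) := by rw [sgn, if_neg (by simp [hεy])]
        rw [Fin.lt_iff_val_lt_val] at hxy
        omega
    rw [e1, e2, e3, e4]
  -- Step 2: #{y | gam y < x} = t + x + 1
  have step2 : (Finset.filter (fun y => gam ε y < (x : ℤ)) Finset.univ).card =
      (t : ℕ) + (x : ℕ) + 1 := by
    rw [card_gam_lt]
    have e5 : Finset.filter (fun y => sgn ε y < (x : ℤ)) Finset.univ =
        Finset.filter (fun y => y < x) Finset.univ ∪
          Finset.filter (fun y => ε y = false ∧ x ≤ y) Finset.univ := by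
      ext y
      simp only [Finset.mem_filter, Finset.mem_univ, true_and, Finset.mem_union]
      constructor
      · intro hlt
        by_cases hεy : ε y
        · left
          have : sgn ε y = (y : ℤ) := by rw [sgn, if_pos hεy]
          rw [Fin.lt_iff_val_lt_val]
          omega
        · rcases lt_or_ge y x with hc | hc
          · exact Or.inl hc
          · exact Or.inr ⟨by simp_all, hc⟩
      · intro hor
        rcases hor with hc | ⟨hεy, _⟩
        · have := sgn_le ε y
          rw [Fin.lt_iff_val_lt_val] at hc
          omega
        · have : sgn ε y = -(y : ℤ) := by rw [sgn, if_neg (by simp [hεy])]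
          omega
    have hdisj : Disjoint (Finset.filter (fun y => y < x) Finset.univ)
        (Finset.filter (fun y => ε y = false ∧ x ≤ y) Finset.univ) := by
      rw [Finset.disjoint_left]
      intro y hy1 hy2
      simp only [Finset.mem_filter, Finset.mem_univ, true_and] at hy1 hy2
      exact absurd hy2.2 (not_le.mpr hy1)
    have e6 : (Finset.filter (fun y => y < x) Finset.univ).card = (x : ℕ) := by
      rw [← Fin.card_Iio x]
      congr 1
      ext y
      simp
    have e7 : Finset.filter (fun y => ε y = false ∧ x ≤ y) Finset.univ =
        insert x (Finset.filter (fun y => ε y = false ∧ x < y) Finset.univ) := by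
      ext y
      simp only [Finset.mem_filter, Finset.mem_univ, true_and, Finset.mem_insert]
      constructor
      · rintro ⟨h1, h2⟩
        rcases eq_or_lt_of_le h2 with h3 | h3
        · exact Or.inl h3.symm
        · exact Or.inr ⟨h1, h3⟩
      · rintro (rfl | ⟨h1, h2⟩)
        · exact ⟨hεx, le_refl _⟩
        · exact ⟨h1, le_of_lt h2⟩
    have hnotmem : x ∉ Finset.filter (fun y => ε y = false ∧ x < y) Finset.univ := by
      simp
    rw [e5, Finset.card_union_of_disjoint hdisj, e6, e7,
      Finset.card_insert_of_notMem hnotmem, ← step1]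
    omega
  -- dc property of the gam-filter
  have hdcT : ∀ a b : Fin r, a ≤ b →
      b ∈ Finset.filter (fun y => gam ε y < (x : ℤ)) Finset.univ →
      a ∈ Finset.filter (fun y => gam ε y < (x : ℤ)) Finset.univ := by
    intro a b hab hb
    simp only [Finset.mem_filter, Finset.mem_univ, true_and] at hb ⊢
    have := (gam_strictMono ε).monotone hab
    omega
  have hcardr : (Finset.filter (fun y => gam ε y < (x : ℤ)) Finset.univ).card ≤ r := by
    have := Finset.card_filter_le (Finset.univ : Finset (Fin r)) (fun y => gam ε y < (x : ℤ))
    simpa using this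
  have hr1 : (t : ℕ) + (x : ℕ) < r := by omega
  set A : Fin r := ⟨(t : ℕ) + (x : ℕ), hr1⟩ with hA
  have hAmem : A ∈ Finset.filter (fun y => gam ε y < (x : ℤ)) Finset.univ := by
    rw [mem_iff_lt_card_of_dc _ hdcT, step2]
    simp [hA]
  have hgamA : gam ε A < (x : ℤ) := by
    simpa using (Finset.mem_filter.mp hAmem).2
  have hAval : ((A : ℕ) : ℤ) = ((t : ℕ) : ℤ) + ((x : ℕ) : ℤ) := by simp [hA]
  have hmuA : (t : ℕ) + 1 ≤ mu ε A := by
    have := mu_coe ε A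
    omega
  -- upper part: index t+x+1 if valid
  have hmuB : ∀ hB : (t : ℕ) + (x : ℕ) + 1 < r, mu ε ⟨(t : ℕ) + (x : ℕ) + 1, hB⟩ ≤ (t : ℕ) := by
    intro hB
    set B : Fin r := ⟨(t : ℕ) + (x : ℕ) + 1, hB⟩ with hBdef
    have hBnot : B ∉ Finset.filter (fun y => gam ε y < (x : ℤ)) Finset.univ := by
      rw [mem_iff_lt_card_of_dc _ hdcT, step2]
      simp [hBdef]
    have hgamB : (x : ℤ) ≤ gam ε B := by
      simp only [Finset.mem_filter, Finset.mem_univ, true_and, not_lt] at hBnot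
      exact hBnot
    have hxnot : ((x : ℕ) : ℤ) ∉ Sset ε := by
      intro hmem
      obtain ⟨y, hy⟩ := mem_Sset.mp hmem
      have h1 := natAbs_sgn ε y
      rw [hy] at h1
      simp only [Int.natAbs_natCast] at h1
      have : y = x := Fin.ext h1.symm
      rw [this] at hy
      omega
    have hne : gam ε B ≠ (x : ℤ) := by
      intro hc
      exact hxnot (hc ▸ gam_mem ε B)
    have hBval : ((B : ℕ) : ℤ) = ((t : ℕ) : ℤ) + ((x : ℕ) : ℤ) + 1 := by simp [hBdef]
    have := mu_coe ε B
    omega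
  -- Final counting for U
  set U := Finset.filter (fun y => (t : ℕ) + 1 ≤ mu ε y) Finset.univ with hU
  have hdcU : ∀ a b : Fin r, a ≤ b → b ∈ U → a ∈ U := by
    intro a b hab hb
    simp only [hU, Finset.mem_filter, Finset.mem_univ, true_and] at hb ⊢
    exact le_trans hb (mu_antitone ε hab)
  have hAU : A ∈ U := by
    simp only [hU, Finset.mem_filter, Finset.mem_univ, true_and]
    exact hmuA
  have hcardU_le : U.card ≤ r := by
    have := Finset.card_filter_le (Finset.univ : Finset (Fin r)) (fun y => (t : ℕ) + 1 ≤ mu ε y)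
    simpa [hU] using this
  have hlow : (t : ℕ) + (x : ℕ) < U.card := by
    have := (mem_iff_lt_card_of_dc U hdcU A).mp hAU
    simpa [hA] using this
  have hmut2 : mu ε t = (t : ℕ) + (x : ℕ) := by omega
  have hhigh : U.card ≤ (t : ℕ) + (x : ℕ) + 1 := by
    by_contra hc
    push_neg at hc
    have hB : (t : ℕ) + (x : ℕ) + 1 < r := by omega
    have hBU : (⟨(t : ℕ) + (x : ℕ) + 1, hB⟩ : Fin r) ∈ U := by
      rw [mem_iff_lt_card_of_dc U hdcU]
      simpa using hc
    simp only [hU, Finset.mem_filter, Finset.mem_univ, true_and] at hBU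
    have := hmuB hB
    omega
  omega



lemma sum_gam (ε : Fin r → Bool) : ∑ t, gam ε t = ∑ j, sgn ε j := by
  rw [← Equiv.sum_comp (perm' ε) (gam ε)]
  exact Finset.sum_congr rfl fun j _ => gam_perm' ε j

lemma sum_mu (ε : Fin r → Bool) :
    ∑ t, mu ε t = 2 * ∑ j ∈ Finset.filter (fun j => ε j = false) Finset.univ, (j : ℕ) := by
  have h1 : ∑ t, (mu ε t : ℤ) = ∑ t : Fin r, (((t : ℕ) : ℤ) - gam ε t) :=
    Finset.sum_congr rfl (fun t _ => mu_coe ε t)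
  rw [Finset.sum_sub_distrib, sum_gam] at h1
  have split1 := Finset.sum_filter_add_sum_filter_not Finset.univ
    (fun j => ε j = false) (sgn ε)
  have split2 := Finset.sum_filter_add_sum_filter_not Finset.univ
    (fun j => ε j = false) (fun j : Fin r => ((j : ℕ) : ℤ))
  have hA : ∑ j ∈ Finset.filter (fun j => ε j = false) Finset.univ, sgn ε j =
      - ∑ j ∈ Finset.filter (fun j => ε j = false) Finset.univ, ((j : ℕ) : ℤ) := by
    rw [← Finset.sum_neg_distrib]
    apply Finset.sum_congr rfl
    intro j hj
    simp only [Finset.mem_filter, Finset.mem_univ, true_and] at hj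
    rw [sgn, if_neg (by simp [hj])]
  have hB : ∑ j ∈ Finset.filter (fun j => ¬ε j = false) Finset.univ, sgn ε j =
      ∑ j ∈ Finset.filter (fun j => ¬ε j = false) Finset.univ, ((j : ℕ) : ℤ) := by
    apply Finset.sum_congr rfl
    intro j hj
    simp only [Finset.mem_filter, Finset.mem_univ, true_and, Bool.not_eq_false] at hj
    rw [sgn, if_pos hj]
  have key : ((∑ t, mu ε t : ℕ) : ℤ) =
      2 * ((∑ j ∈ Finset.filter (fun j => ε j = false) Finset.univ, (j : ℕ) : ℕ) : ℤ) := by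
    push_cast
    omega
  exact_mod_cast key

lemma sign_perm' (ε : Fin r → Bool) :
    Perm.sign (perm' ε) =
      (-1 : ℤˣ) ^ (∑ j ∈ Finset.filter (fun j => ε j = false) Finset.univ, (j : ℕ)) := by
  rw [sign_eq_signAux, Perm.signAux]
  have step : ∀ x ∈ Perm.finPairsLT r,
      (if perm' ε x.1 ≤ perm' ε x.2 then (-1 : ℤˣ) else 1) =
        (if ε x.1 = false then (-1 : ℤˣ) else 1) := by
    intro x hx
    have hlt : x.2 < x.1 := Perm.mem_finPairsLT.mp hx
    have hvlt : (x.2 : ℕ) < (x.1 : ℕ) := hlt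
    have hcond : (perm' ε x.1 ≤ perm' ε x.2) ↔ (ε x.1 = false) := by
      rw [perm'_le_iff]
      constructor
      · intro hle
        by_contra hc
        rw [Bool.not_eq_false] at hc
        have h1 : sgn ε x.1 = (x.1 : ℤ) := by rw [sgn, if_pos hc]
        have h2 := sgn_le ε x.2
        omega
      · intro hc
        have h1 : sgn ε x.1 = -(x.1 : ℤ) := by rw [sgn, if_neg (by simp [hc])]
        have h2 := neg_le_sgn ε x.2
        omega
    simp only [hcond]
  rw [Finset.prod_congr rfl step]
  rw [Perm.finPairsLT, Finset.prod_sigma]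
  have inner : ∀ a : Fin r,
      (∏ _b ∈ (Finset.range (a : ℕ)).attachFin
          (fun _ hm => (Finset.mem_range.1 hm).trans a.2),
        (if ε a = false then (-1 : ℤˣ) else 1)) =
        (if ε a = false then (-1 : ℤˣ) ^ (a : ℕ) else 1) := by
    intro a
    rw [Finset.prod_const, Finset.card_attachFin, Finset.card_range]
    by_cases hεa : ε a = false
    · rw [if_pos hεa, if_pos hεa]
    · rw [if_neg hεa, if_neg hεa, one_pow]
  rw [Finset.prod_congr rfl (fun a _ => inner a), ← Finset.prod_filter,
    Finset.prod_pow_eq_pow_sum]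



lemma gam_eq_emb (ε : Fin r → Bool) (t : Fin r) :
    gam ε t = (Sset ε).orderEmbOfFin (card_Sset ε) t := by
  rw [gam, Finset.coe_orderIsoOfFin_apply]

lemma Sset_eq_image_gam (ε : Fin r → Bool) :
    Sset ε = Finset.image (gam ε) Finset.univ := by
  apply Finset.eq_of_subset_of_card_le
  · intro s hs
    obtain ⟨j, hj⟩ := mem_Sset.mp hs
    exact Finset.mem_image.mpr ⟨perm' ε j, Finset.mem_univ _, by rw [gam_perm', hj]⟩
  · rw [card_Sset, Finset.card_image_of_injective _ (gam_strictMono ε).injective]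
    simp

lemma mem_Sset_pos {ε : Fin r → Bool} {j : Fin r} (hj : 1 ≤ (j : ℕ)) :
    ((j : ℕ) : ℤ) ∈ Sset ε ↔ ε j = true := by
  constructor
  · intro hmem
    obtain ⟨y, hy⟩ := mem_Sset.mp hmem
    have h1 := natAbs_sgn ε y
    rw [hy] at h1
    simp only [Int.natAbs_natCast] at h1
    have hyj : y = j := Fin.ext h1.symm
    subst hyj
    by_contra hc
    rw [Bool.not_eq_true] at hc
    rw [sgn, if_neg (by simp [hc])] at hy
    omega
  · intro hε
    exact mem_Sset.mpr ⟨j, by rw [sgn, if_pos hε]⟩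

lemma zero_mem_Sset (ε : Fin r → Bool) (hr : 0 < r) : (0 : ℤ) ∈ Sset ε := by
  refine mem_Sset.mpr ⟨⟨0, hr⟩, ?_⟩
  rw [sgn]
  split <;> simp

/-- injectivity of `mu` on sign vectors with `ε 0 = true` -/
lemma mu_injective {ε ε' : Fin r → Bool} (hr : 0 < r)
    (h0 : ε ⟨0, hr⟩ = true) (h0' : ε' ⟨0, hr⟩ = true) (hmu : mu ε = mu ε') : ε = ε' := by
  have hgam : gam ε = gam ε' := by
    funext t
    have h1 := mu_coe ε t
    have h2 := mu_coe ε' t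
    rw [hmu] at h1
    omega
  have hS : Sset ε = Sset ε' := by
    rw [Sset_eq_image_gam, Sset_eq_image_gam, hgam]
  funext j
  by_cases hj : (j : ℕ) = 0
  · have : j = ⟨0, hr⟩ := Fin.ext hj
    rw [this, h0, h0']
  · have hj1 : 1 ≤ (j : ℕ) := by omega
    have := (mem_Sset_pos (ε := ε) hj1).symm.trans (hS ▸ mem_Sset_pos (ε := ε') hj1)
    rcases Bool.eq_false_or_eq_true (ε j) with h | h <;>
      rcases Bool.eq_false_or_eq_true (ε' j) with h' | h' <;> simp_all

section Surj

variable {μ : Fin r → ℕ} (hr : 0 < r) (hanti : Antitone μ)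
  (hfrob : ∀ t : Fin r, (t : ℕ) + 1 ≤ μ t →
    (Finset.filter (fun y => (t : ℕ) + 1 ≤ μ y) Finset.univ).card = μ t + 1)

/-- the candidate strictly monotone enumeration attached to `μ` -/
def gmu (μ : Fin r → ℕ) (t : Fin r) : ℤ := (t : ℤ) - μ t

include hanti in
lemma gmu_strictMono : StrictMono (gmu μ) := by
  intro a b hab
  have h1 : μ b ≤ μ a := hanti (le_of_lt hab)
  have h2 : (a : ℕ) < (b : ℕ) := hab
  unfold gmu
  omega

include hr hanti hfrob in
lemma mu0_le : μ ⟨0, hr⟩ ≤ r - 1 := by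
  by_cases h0 : μ ⟨0, hr⟩ = 0
  · omega
  · have hv : ((⟨0, hr⟩ : Fin r) : ℕ) = 0 := rfl
    have h1 : ((⟨0, hr⟩ : Fin r) : ℕ) + 1 ≤ μ ⟨0, hr⟩ := by omega
    have h2 := hfrob _ h1
    have h3 : (Finset.filter (fun y => ((⟨0, hr⟩ : Fin r) : ℕ) + 1 ≤ μ y)
        Finset.univ).card ≤ r := by
      calc (Finset.filter (fun y => ((⟨0, hr⟩ : Fin r) : ℕ) + 1 ≤ μ y)
          Finset.univ).card ≤ (Finset.univ : Finset (Fin r)).card :=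
            Finset.card_filter_le _ _
        _ = r := by simp
    omega

include hr hanti hfrob in
lemma no_pair {a b : Fin r} {x : ℕ} (hx : 1 ≤ x)
    (ha : gmu μ a = -(x : ℤ)) (hb : gmu μ b = (x : ℤ)) : False := by
  have hμa : (μ a : ℤ) = (a : ℤ) + x := by unfold gmu at ha; omega
  have hfa : (a : ℕ) + 1 ≤ μ a := by omega
  have hcard := hfrob a hfa
  have hdc : ∀ c d : Fin r, c ≤ d →
      d ∈ Finset.filter (fun y => (a : ℕ) + 1 ≤ μ y) Finset.univ →
      c ∈ Finset.filter (fun y => (a : ℕ) + 1 ≤ μ y) Finset.univ := by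
    intro c d hcd hd
    simp only [Finset.mem_filter, Finset.mem_univ, true_and] at hd ⊢
    exact le_trans hd (hanti hcd)
  have hmem := mem_iff_lt_card_of_dc _ hdc b
  rw [hcard] at hmem
  simp only [Finset.mem_filter, Finset.mem_univ, true_and] at hmem
  have hμb : (μ b : ℤ) = (b : ℤ) - x := by unfold gmu at hb; omega
  omega

include hr hanti hfrob in
lemma mu_surjective : ∃ ε : Fin r → Bool, ε ⟨0, hr⟩ = true ∧ mu ε = μ := by
  classical
  set Γ : Finset ℤ := Finset.image (gmu μ) Finset.univ with hΓ
  have hcardΓ : Γ.card = r := by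
    rw [hΓ, Finset.card_image_of_injective _ (gmu_strictMono hanti).injective]
    simp
  have bound : ∀ t : Fin r, (gmu μ t).natAbs ≤ r - 1 := by
    intro t
    have h1 : gmu μ t ≤ (t : ℤ) := by unfold gmu; omega
    have h2 : (t : ℕ) ≤ r - 1 := by have := t.isLt; omega
    have h3 : μ t ≤ μ ⟨0, hr⟩ := hanti (by simp [Fin.le_iff_val_le_val])
    have h4 := mu0_le hr hanti hfrob
    have h5 : -(((r : ℕ) - 1 : ℕ) : ℤ) ≤ gmu μ t := by
      unfold gmu
      omega
    omega
  have exactly_one : ∀ x : ℕ, x < r → ((x : ℤ) ∈ Γ ∨ (-(x : ℤ)) ∈ Γ) := by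
    intro x hx
    have hinj : Set.InjOn Int.natAbs Γ := by
      intro s hs s' hs' habs
      by_contra hne
      rcases Int.natAbs_eq_natAbs_iff.mp habs with he | he
      · exact hne he
      · -- s = -s'
        have hs0 : s.natAbs ≠ 0 := by
          intro h0
          apply hne
          have : s = 0 := Int.natAbs_eq_zero.mp h0
          have : s' = 0 := by omega
          omega
        obtain ⟨a, _, ha⟩ := Finset.mem_image.mp hs
        obtain ⟨b, _, hb⟩ := Finset.mem_image.mp hs'
        have h1 : 1 ≤ s.natAbs := by omega
        rcases le_or_gt 0 s with hpos | hneg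
        · -- s = natAbs s, s' = -natAbs s
          apply no_pair hr hanti hfrob (x := s.natAbs) h1 (a := b) (b := a) <;> omega
        · apply no_pair hr hanti hfrob (x := s.natAbs) h1 (a := a) (b := b) <;> omega
    have hN : Finset.image Int.natAbs Γ = Finset.range r := by
      apply Finset.eq_of_subset_of_card_le
      · intro x hxm
        obtain ⟨s, hs, rfl⟩ := Finset.mem_image.mp hxm
        obtain ⟨t, _, rfl⟩ := Finset.mem_image.mp hs
        have := bound t
        rw [Finset.mem_range]
        omega
      · rw [Finset.card_range, Finset.card_image_of_injOn hinj, hcardΓ]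
    have : x ∈ Finset.image Int.natAbs Γ := by rw [hN, Finset.mem_range]; exact hx
    obtain ⟨s, hs, hsx⟩ := Finset.mem_image.mp this
    rcases Int.natAbs_eq s with he | he
    · left; rw [← hsx, ← he]; exact hs
    · right; rw [← hsx, ← he]; exact hs
  set ε : Fin r → Bool := fun j => decide (((j : ℕ) : ℤ) ∈ Γ) with hε
  have hΓsub : Γ ⊆ Sset ε := by
    intro s hs
    obtain ⟨t, _, hts⟩ := Finset.mem_image.mp hs
    rcases le_or_gt 0 s with hpos | hneg
    · have hlt : s.toNat < r := by
        have h1 : gmu μ t ≤ (t : ℤ) := by unfold gmu; omega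
        have := t.isLt
        omega
      refine mem_Sset.mpr ⟨⟨s.toNat, hlt⟩, ?_⟩
      have hj : (((⟨s.toNat, hlt⟩ : Fin r) : ℕ) : ℤ) = s := by
        simp [Int.toNat_of_nonneg hpos]
      have hεj : ε ⟨s.toNat, hlt⟩ = true := by
        rw [hε]
        simp only [decide_eq_true_eq]
        rw [hj]
        exact hs
      rw [sgn, if_pos hεj, hj]
    · have hnat1 : 1 ≤ s.natAbs := by omega
      have hlt : s.natAbs < r := by have := bound t; rw [hts] at this; omega
      refine mem_Sset.mpr ⟨⟨s.natAbs, hlt⟩, ?_⟩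
      have hj : (((⟨s.natAbs, hlt⟩ : Fin r) : ℕ) : ℤ) = (s.natAbs : ℤ) := rfl
      have hnot : ((s.natAbs : ℕ) : ℤ) ∉ Γ := by
        intro hmem
        obtain ⟨b, _, hbs⟩ := Finset.mem_image.mp hmem
        exact no_pair hr hanti hfrob (x := s.natAbs) hnat1 (a := t) (b := b)
          (by omega) (by omega)
      have hεj : ε ⟨s.natAbs, hlt⟩ = false := by
        rw [hε]
        simp only [decide_eq_false_iff_not]
        rw [hj]
        exact hnot
      rw [sgn, if_neg (by simp [hεj]), hj]
      omega
  have hS : Sset ε = Γ :=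
    (Finset.eq_of_subset_of_card_le hΓsub (by rw [card_Sset, hcardΓ])).symm
  have hfs : ∀ x : Fin r, gmu μ x ∈ Sset ε := by
    intro x
    rw [hS, hΓ]
    exact Finset.mem_image.mpr ⟨x, Finset.mem_univ _, rfl⟩
  have hgmu_eq := Finset.orderEmbOfFin_unique (card_Sset ε) hfs (gmu_strictMono hanti)
  have hgam : ∀ t, gam ε t = gmu μ t := by
    intro t
    rw [gam_eq_emb, hgmu_eq]
  refine ⟨ε, ?_, ?_⟩
  · rw [hε]
    simp only [decide_eq_true_eq]
    have h0 : (((⟨0, hr⟩ : Fin r) : ℕ) : ℤ) = 0 := rfl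
    rw [h0]
    rcases exactly_one 0 hr with hmem | hmem
    · exact_mod_cast hmem
    · simpa using hmem
  · funext t
    have h1 := mu_coe ε t
    rw [hgam t] at h1
    unfold gmu at h1
    omega


end Surj


variable {R : Type*} [CommRing R]

/-- the determinant with column shifts `γ` -/
noncomputable def Delta (h : ℤ → R) (m : Fin r → ℤ) (γ : Fin r → ℤ) : R :=
  Matrix.det (Matrix.of fun i j : Fin r => h (m i + γ j))

lemma det_expand (h : ℤ → R) (m : Fin r → ℤ) :
    Matrix.det (Matrix.of fun i j : Fin r => h (m i + (j : ℤ)) + h (m i - (j : ℤ))) =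
      ∑ ε : Fin r → Bool, Delta h m (sgn ε) := by
  classical
  rw [← Matrix.det_transpose]
  have hdet : ∀ M : Matrix (Fin r) (Fin r) R, M.det = Matrix.detRowAlternating M := fun _ => rfl
  rw [hdet]
  have hcol : (Matrix.of fun i j : Fin r => h (m i + (j : ℤ)) + h (m i - (j : ℤ))).transpose =
      fun j : Fin r => ∑ b : Bool, (fun i => h (m i + (if b then (j : ℤ) else -(j : ℤ)))) := by
    funext j i
    rw [Fintype.sum_bool]
    simp [Matrix.transpose_apply, sub_eq_add_neg]
  rw [hcol]
  have key := (Matrix.detRowAlternating : (Fin r → R) [⋀^Fin r]→ₗ[R] R).toMultilinearMap.map_sum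
    (g := fun (j : Fin r) (b : Bool) => (fun i => h (m i + (if b then (j : ℤ) else -(j : ℤ)))))
  simp only [AlternatingMap.coe_multilinearMap] at key
  rw [key]
  apply Finset.sum_congr rfl
  intro ε _
  refine (hdet (Matrix.of fun i i_1 => h (m i_1 + if ε i = true then ((i : ℕ) : ℤ) else -((i : ℕ) : ℤ)))).symm.trans ?_
  rw [← Matrix.det_transpose]
  congr 1

lemma delta_sort (h : ℤ → R) (m : Fin r → ℤ) (ε : Fin r → Bool) :
    Delta h m (sgn ε) =
      (-1 : R) ^ (∑ j ∈ Finset.filter (fun j => ε j = false) Finset.univ, (j : ℕ)) *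
        Delta h m (gam ε) := by
  have hmat : (Matrix.of fun i j : Fin r => h (m i + sgn ε j)) =
      (Matrix.of fun i t : Fin r => h (m i + gam ε t)).submatrix id (perm' ε) := by
    ext i j
    simp [Matrix.submatrix_apply, gam_perm']
  rw [Delta, hmat, Matrix.det_permute', sign_perm']
  rw [Delta]
  norm_cast

lemma sgn_update_zero (hr : 0 < r) (ε : Fin r → Bool) (b : Bool) :
    sgn (Function.update ε ⟨0, hr⟩ b) = sgn ε := by
  funext j
  by_cases hj : j = ⟨0, hr⟩
  · subst hj
    have hz : ((⟨0, hr⟩ : Fin r) : ℤ) = 0 := rfl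
    simp [sgn, hz]
  · unfold sgn
    rw [Function.update_of_ne hj]

lemma pair_sum (hr : 0 < r) (h : ℤ → R) (m : Fin r → ℤ) :
    ∑ ε : Fin r → Bool, Delta h m (sgn ε) =
      2 * ∑ ε ∈ Finset.filter (fun ε => ε ⟨0, hr⟩ = true) Finset.univ,
        Delta h m (sgn ε) := by
  classical
  rw [← Finset.sum_filter_add_sum_filter_not Finset.univ (fun ε => ε ⟨0, hr⟩ = true)
    (fun ε => Delta h m (sgn ε))]
  have hswap : ∑ ε ∈ Finset.filter (fun ε => ¬ε ⟨0, hr⟩ = true) Finset.univ,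
      Delta h m (sgn ε) =
      ∑ ε ∈ Finset.filter (fun ε => ε ⟨0, hr⟩ = true) Finset.univ, Delta h m (sgn ε) := by
    apply Finset.sum_nbij' (fun ε => Function.update ε ⟨0, hr⟩ true)
      (fun ε => Function.update ε ⟨0, hr⟩ false)
    · intro a ha
      simp [Function.update_self]
    · intro a ha
      simp [Function.update_self]
    · intro a ha
      simp only [Finset.mem_filter, Finset.mem_univ, true_and, Bool.not_eq_true] at ha
      funext j
      by_cases hj : j = ⟨0, hr⟩
      · subst hj; simp [Function.update_self, ha]
      · simp [Function.update_of_ne hj]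
    · intro a ha
      simp only [Finset.mem_filter, Finset.mem_univ, true_and] at ha
      funext j
      by_cases hj : j = ⟨0, hr⟩
      · subst hj; simp [Function.update_self, ha]
      · simp [Function.update_of_ne hj]
    · intro a _
      rw [sgn_update_zero]
  rw [hswap]
  ring

lemma ncard_filter (p : Fin r → Prop) [DecidablePred p] :
    Set.ncard {j : Fin r | p j} = (Finset.filter p Finset.univ).card := by
  rw [← Set.ncard_coe_finset]
  congr 1
  ext j
  simp

end Stmt0

/-- determinantal formula for the Euler characteristic of the
Littlewood complex.  Partitions with at most `r` parts are encoded as antitone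
functions `Fin r → ℕ`.  A partition `μ` lies in `Q₋₁` iff for every Frobenius
index `t` (i.e. every `t` with `μ t ≥ t + 1`) the arm minus the leg equals `-1`,
i.e. `μ t - #{j | μ j ≥ t + 1} = -1`. -/
theorem stmt_0 (R : Type*) [CommRing R] (h : ℤ → R) (r : ℕ) (hr : 1 ≤ r)
    (lam : Fin r → ℕ) (hlam : Antitone lam) :
    Matrix.det (Matrix.of fun i j : Fin r =>
        h ((lam i : ℤ) - ((i : ℕ) : ℤ) + ((j : ℕ) : ℤ)) +
          h ((lam i : ℤ) - ((i : ℕ) : ℤ) - ((j : ℕ) : ℤ))) =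
      2 * ∑ᶠ μ ∈ {μ : Fin r → ℕ | Antitone μ ∧
            ∀ t : Fin r, (t : ℕ) + 1 ≤ μ t →
              (μ t : ℤ) - (Set.ncard {j : Fin r | (t : ℕ) + 1 ≤ μ j} : ℤ) = -1},
          ((-1 : R) ^ ((∑ j, μ j) / 2) *
            Matrix.det (Matrix.of fun i j : Fin r =>
              h ((lam i : ℤ) - (μ j : ℤ) - ((i : ℕ) : ℤ) + ((j : ℕ) : ℤ)))) := by
  classical
  open Stmt0 in
  set m : Fin r → ℤ := fun i => (lam i : ℤ) - ((i : ℕ) : ℤ) with hm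
  have hr0 : 0 < r := hr
  set F : Finset (Fin r → Bool) :=
    Finset.filter (fun ε => ε ⟨0, hr0⟩ = true) Finset.univ with hF
  set g : (Fin r → ℕ) → R := fun μ =>
    (-1 : R) ^ ((∑ j, μ j) / 2) *
      Matrix.det (Matrix.of fun i j : Fin r =>
        h ((lam i : ℤ) - (μ j : ℤ) - ((i : ℕ) : ℤ) + ((j : ℕ) : ℤ))) with hg
  -- the condition set is the image of `mu` over `F`
  have hsetcond : ∀ μ : Fin r → ℕ,
      (Antitone μ ∧ ∀ t : Fin r, (t : ℕ) + 1 ≤ μ t →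
        (μ t : ℤ) - (Set.ncard {j : Fin r | (t : ℕ) + 1 ≤ μ j} : ℤ) = -1) ↔
      (Antitone μ ∧ ∀ t : Fin r, (t : ℕ) + 1 ≤ μ t →
        (Finset.filter (fun y => (t : ℕ) + 1 ≤ μ y) Finset.univ).card = μ t + 1) := by
    intro μ
    apply and_congr_right
    intro _
    apply forall_congr'
    intro t
    apply imp_congr_right
    intro _
    rw [ncard_filter (fun j => (t : ℕ) + 1 ≤ μ j)]
    omega
  have hset : {μ : Fin r → ℕ | Antitone μ ∧
      ∀ t : Fin r, (t : ℕ) + 1 ≤ μ t →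
        (μ t : ℤ) - (Set.ncard {j : Fin r | (t : ℕ) + 1 ≤ μ j} : ℤ) = -1} =
      ↑(Finset.image Stmt0.mu F) := by
    ext μ
    simp only [Set.mem_setOf_eq, Finset.coe_image, Set.mem_image, Finset.mem_coe]
    rw [hsetcond μ]
    constructor
    · rintro ⟨h1, h2⟩
      obtain ⟨ε, hε0, hεmu⟩ := Stmt0.mu_surjective hr0 h1 h2
      exact ⟨ε, by simp [hF, hε0], hεmu⟩
    · rintro ⟨ε, hε, rfl⟩
      exact ⟨Stmt0.mu_antitone ε, fun t ht => Stmt0.frob_card ε t ht⟩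
  rw [hset, finsum_mem_coe_finset]
  rw [Finset.sum_image (by
    intro x hx y hy hxy
    simp only [hF, Finset.mem_coe, Finset.mem_filter, Finset.mem_univ, true_and] at hx hy
    exact Stmt0.mu_injective hr0 hx hy hxy)]
  -- LHS expansion
  have hLHS : (Matrix.of fun i j : Fin r =>
      h ((lam i : ℤ) - ((i : ℕ) : ℤ) + ((j : ℕ) : ℤ)) +
        h ((lam i : ℤ) - ((i : ℕ) : ℤ) - ((j : ℕ) : ℤ))) =
      (Matrix.of fun i j : Fin r => h (m i + (j : ℤ)) + h (m i - (j : ℤ))) := by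
    ext i j
    simp [hm]
  rw [hLHS, Stmt0.det_expand h m, Stmt0.pair_sum hr0 h m]
  congr 1
  apply Finset.sum_congr rfl
  intro ε hε
  rw [Stmt0.delta_sort h m ε]
  have hexp : (∑ j, Stmt0.mu ε j) / 2 =
      ∑ j ∈ Finset.filter (fun j => ε j = false) Finset.univ, (j : ℕ) := by
    have h2 := Stmt0.sum_mu ε
    omega
  have hdet : (Matrix.of fun i j : Fin r =>
      h ((lam i : ℤ) - (Stmt0.mu ε j : ℤ) - ((i : ℕ) : ℤ) + ((j : ℕ) : ℤ))) =
      (Matrix.of fun i j : Fin r => h (m i + Stmt0.gam ε j)) := by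
    ext i j
    simp only [Matrix.of_apply]
    have := Stmt0.mu_coe ε j
    congr 1
    simp only [hm]
    omega
  rw [hexp, hdet]
  rfl
end

section
/- Let R be a commutative ring and let h′ : ℤ → R be a function with h′(d) = 0 for all d < 0. Define g(d) = Σ_{i=0}^{d} h′(i) for d ≥ 0 and g(d) = 0 for d < 0, and define f(d) = h′(d) + h′(d−1) for all d ∈ ℤ. Then for every integer m ≥ 1 and every partition λ with at most m parts, 2 · det( g(λ_i − i + j) − g(λ_i − i − j) )_{i,j=1}^{m} = det( f(λ_i − i + j) + f(λ_i − i − j + 2) )_{i,j=1}^{m}. -/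
/-- the Koike–Terada type determinant for `so(2m+1)` equals (half)
the orthosymplectic Littlewood determinant.  Here `h'` plays the role of the
character of `S^d(ℂ^{2m})`, `g d = Σ_{i=0}^d h' i` that of `S^d(ℂ^{2m+1})`, and
`f d = h' d + h' (d-1)` that of `S^d(ℂ^{2m|1})`.  Partitions with at most `m`
parts are encoded as antitone functions `Fin m → ℕ`; the matrix entries are
written with 0-indexed rows and columns. -/
theorem stmt_1 (R : Type*) [CommRing R] (h' g f : ℤ → R)
    (hh' : ∀ d : ℤ, d < 0 → h' d = 0)
    (hgneg : ∀ d : ℤ, d < 0 → g d = 0)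
    (hg : ∀ d : ℕ, g (d : ℤ) = ∑ i ∈ Finset.range (d + 1), h' (i : ℤ))
    (hf : ∀ d : ℤ, f d = h' d + h' (d - 1))
    (m : ℕ) (hm : 1 ≤ m) (lam : Fin m → ℕ) (hlam : Antitone lam) :
    2 * Matrix.det (Matrix.of fun i j : Fin m =>
        g ((lam i : ℤ) - ((i : ℕ) : ℤ) + ((j : ℕ) : ℤ)) -
          g ((lam i : ℤ) - ((i : ℕ) : ℤ) - ((j : ℕ) : ℤ) - 2)) =
      Matrix.det (Matrix.of fun i j : Fin m =>
        f ((lam i : ℤ) - ((i : ℕ) : ℤ) + ((j : ℕ) : ℤ)) +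
          f ((lam i : ℤ) - ((i : ℕ) : ℤ) - ((j : ℕ) : ℤ))) := by
  haveI : NeZero m := ⟨by omega⟩
  -- step relation for `g`
  have hstep : ∀ d : ℤ, g d = g (d - 1) + h' d := by
    intro d
    rcases lt_or_ge d 0 with h | h
    · rw [hgneg d h, hgneg _ (by linarith), hh' d h]; ring
    · lift d to ℕ using h
      cases d with
      | zero =>
        rw [show (((0 : ℕ) : ℤ)) - 1 = -1 by norm_num, hgneg (-1 : ℤ) (by norm_num), hg 0]
        simp
      | succ n =>
        have h1 := hg (n + 1)
        have h2 := hg n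
        rw [Finset.sum_range_succ] at h1
        push_cast at h1 h2 ⊢
        rw [show ((n : ℤ) + 1 - 1) = (n : ℤ) by ring, h1, h2]
  have gsub2 : ∀ a : ℤ, g a - g (a - 2) = h' a + h' (a - 1) := by
    intro a
    have h2 := hstep (a - 1)
    rw [show a - 1 - 1 = a - 2 by ring] at h2
    linear_combination hstep a + h2
  have key : ∀ x y : ℤ, f x + f y = (g x - g (x - 2)) + (g y - g (y - 2)) := by
    intro x y
    rw [hf x, hf y]
    linear_combination - gsub2 x - gsub2 y
  set A : Matrix (Fin m) (Fin m) R := Matrix.of fun i j : Fin m =>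
      g ((lam i : ℤ) - ((i : ℕ) : ℤ) + ((j : ℕ) : ℤ)) -
        g ((lam i : ℤ) - ((i : ℕ) : ℤ) - ((j : ℕ) : ℤ) - 2) with hA
  set B : Matrix (Fin m) (Fin m) R := Matrix.of fun i j : Fin m =>
      f ((lam i : ℤ) - ((i : ℕ) : ℤ) + ((j : ℕ) : ℤ)) +
        f ((lam i : ℤ) - ((i : ℕ) : ℤ) - ((j : ℕ) : ℤ)) with hB
  set M : Matrix (Fin m) (Fin m) R := Matrix.of fun k j : Fin m =>
      (if k = j then (if (j : ℕ) = 0 then (2 : R) else 1) else 0) +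
        (if (k : ℕ) + 2 = (j : ℕ) then (-1 : R) else 0) with hM
  have hBM : B = A * M := by
    ext i j
    rw [Matrix.mul_apply]
    have hsum : ∑ k : Fin m, A i k * M k j
        = A i j * (if (j : ℕ) = 0 then (2 : R) else 1)
          + ∑ k : Fin m, (if (k : ℕ) + 2 = (j : ℕ) then -(A i k) else 0) := by
      simp only [hM, Matrix.of_apply, mul_add, Finset.sum_add_distrib, mul_ite, mul_zero,
        mul_neg_one, Finset.sum_ite_eq', Finset.mem_univ, if_true]
    rw [hsum]
    obtain ⟨jv, hjv⟩ := j
    match jv, hjv with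
    | 0, hjv =>
      rw [Finset.sum_eq_zero (fun (k : Fin m) _ => by
        rw [if_neg (by simp only [Fin.val_mk]; omega)])]
      simp only [hA, hB, Matrix.of_apply, Fin.val_mk, eq_self_iff_true, if_true,
        Nat.cast_zero, add_zero]
      linear_combination (norm := ring_nf)
        key ((lam i : ℤ) - (i : ℕ)) ((lam i : ℤ) - (i : ℕ))
    | 1, hjv =>
      rw [Finset.sum_eq_zero (fun (k : Fin m) _ => by
        rw [if_neg (by simp only [Fin.val_mk]; omega)])]
      simp only [hA, hB, Matrix.of_apply, Fin.val_mk,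
        if_neg (by norm_num : ¬ (1 : ℕ) = 0), Nat.cast_one, add_zero, mul_one]
      linear_combination (norm := ring_nf)
        key ((lam i : ℤ) - (i : ℕ) + 1) ((lam i : ℤ) - (i : ℕ) - 1)
    | (v + 2), hjv =>
      have hcond : ∀ k : Fin m, ((k : ℕ) + 2 = ((⟨v + 2, hjv⟩ : Fin m) : ℕ)) ↔
          k = ⟨v, by omega⟩ := by
        intro k
        simp only [Fin.ext_iff, Fin.val_mk]
        omega
      rw [Finset.sum_congr rfl (fun k _ => if_congr (hcond k) rfl rfl),
        Finset.sum_ite_eq' Finset.univ (⟨v, by omega⟩ : Fin m) (fun k => -(A i k)),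
        if_pos (Finset.mem_univ _)]
      simp only [hA, hB, Matrix.of_apply, Fin.val_mk,
        if_neg (by omega : ¬ (v + 2 : ℕ) = 0), mul_one]
      push_cast
      linear_combination (norm := ring_nf)
        key ((lam i : ℤ) - (i : ℕ) + ((v : ℤ) + 2)) ((lam i : ℤ) - (i : ℕ) - ((v : ℤ) + 2))
  have hMtri : M.BlockTriangular id := by
    intro k j hkj
    simp only [id] at hkj
    simp only [hM, Matrix.of_apply]
    rw [if_neg (by exact fun h => absurd h (Fin.ne_of_gt hkj)),
      if_neg (by have := Fin.lt_iff_val_lt_val.mp hkj; omega)]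
    ring
  have hdetM : M.det = 2 := by
    rw [Matrix.det_of_upperTriangular hMtri]
    have hdiag : ∀ j : Fin m, M j j = if j = 0 then (2 : R) else 1 := by
      intro j
      have h2 : ¬ ((j : ℕ) + 2 = (j : ℕ)) := by omega
      simp only [hM, Matrix.of_apply, if_pos rfl, if_neg h2, add_zero]
      by_cases h : j = 0
      · simp [h]
      · have hv : ¬ ((j : ℕ) = 0) := fun hh => h (Fin.ext (by simp [hh, Fin.val_zero]))
        simp [h, hv]
    rw [Finset.prod_congr rfl (fun j _ => hdiag j), Finset.prod_ite_eq',
      if_pos (Finset.mem_univ _)]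
  rw [hBM, Matrix.det_mul, hdetM]
  ring
end

section
/- Let m ≥ 0 and n ≥ 1 be integers, and work in ℚ^{m+n} with standard basis ε₁, …, ε_{m+n} and the standard inner product (·,·). Let Φ⁺ = {ε_i : 1 ≤ i ≤ m+n} ∪ {ε_i − ε_j : 1 ≤ i < j ≤ m+n} ∪ {ε_i + ε_j : 1 ≤ i < j ≤ m+n}, and for α ∈ Φ⁺ and λ ∈ ℚ^{m+n} set ⟨α, λ⟩ = 2(α,λ)/(α,α). Let ρ = ½(2m+2n−1, 2m+2n−3, …, 3, 1). Say a sequence (γ₁, …, γ_r) of elements of Φ⁺ links λ to μ if, setting λ(0) = λ and recursively n_i = ⟨λ(i−1)+ρ, γ_i⟩ and λ(i) = λ(i−1) − n_i γ_i, each n_i is a positive integer and λ(r) = μ. Let ζ = (½−m, …, ½−m, 0, …, 0) (n copies of ½−m followed by m zeros) and μ = ζ − 2ε_n. Then the only sequence of elements of Φ⁺ linking ζ to μ is the length-one sequence (ε_n). -/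
/-- The standard inner product on `ℚ^N`. -/
def ipQ {N : ℕ} (x y : Fin N → ℚ) : ℚ := ∑ i, x i * y i

/-- The positive roots of `so(2(m+n)+1)` (type B) inside `ℚ^N`, `N = m+n`:
`ε_i`, `ε_i - ε_j` and `ε_i + ε_j` for `i < j`. -/
def posRootsB (N : ℕ) : Set (Fin N → ℚ) :=
  {α | (∃ i, α = Pi.single i 1) ∨
    (∃ i j, i < j ∧ α = Pi.single i 1 - Pi.single j 1) ∨
    (∃ i j, i < j ∧ α = Pi.single i 1 + Pi.single j 1)}

/-- `⟨α, x⟩ = 2(α,x)/(α,α)`. -/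
def pairB {N : ℕ} (α x : Fin N → ℚ) : ℚ := 2 * ipQ α x / ipQ α α

/-- The sequence `(γ 0, …, γ (r-1))` of elements of `Φ` links `lam` to `mu`:
setting `lamSeq 0 = lam` and `lamSeq (i+1) = lamSeq i - n_i • γ i` where
`n_i = ⟨lamSeq i + ρ, γ i⟩` must be a positive integer, we reach `lamSeq r = mu`. -/
def LinksTo {N : ℕ} (Φ : Set (Fin N → ℚ)) (ρ : Fin N → ℚ) (r : ℕ)
    (γ : ℕ → Fin N → ℚ) (lam mu : Fin N → ℚ) : Prop :=
  ∃ lamSeq : ℕ → Fin N → ℚ, lamSeq 0 = lam ∧ lamSeq r = mu ∧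
    ∀ i < r, γ i ∈ Φ ∧ ∃ k : ℕ, 0 < k ∧
      (k : ℚ) = pairB (γ i) (lamSeq i + ρ) ∧
      lamSeq (i + 1) = lamSeq i - (k : ℚ) • γ i

lemma ipQ_single {N : ℕ} (i : Fin N) (x : Fin N → ℚ) : ipQ (Pi.single i 1) x = x i := by
  unfold ipQ
  rw [Finset.sum_eq_single i]
  · simp
  · intro b _ hb; simp [Pi.single_eq_of_ne hb]
  · simp

lemma ipQ_sub {N : ℕ} (a b x : Fin N → ℚ) : ipQ (a - b) x = ipQ a x - ipQ b x := by
  simp [ipQ, sub_mul, Finset.sum_sub_distrib]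

lemma ipQ_add {N : ℕ} (a b x : Fin N → ℚ) : ipQ (a + b) x = ipQ a x + ipQ b x := by
  simp [ipQ, add_mul, Finset.sum_add_distrib]

lemma pairB_single {N : ℕ} (a : Fin N) (x : Fin N → ℚ) :
    pairB (Pi.single a 1) x = 2 * x a := by
  unfold pairB
  rw [ipQ_single, ipQ_single, Pi.single_eq_same]
  ring

lemma pairB_sub {N : ℕ} {a b : Fin N} (h : a ≠ b) (x : Fin N → ℚ) :
    pairB (Pi.single a 1 - Pi.single b 1) x = x a - x b := by
  unfold pairB
  simp only [ipQ_sub, ipQ_single, Pi.sub_apply, Pi.single_eq_same,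
    Pi.single_eq_of_ne h, Pi.single_eq_of_ne h.symm]
  norm_num

lemma pairB_add {N : ℕ} {a b : Fin N} (h : a ≠ b) (x : Fin N → ℚ) :
    pairB (Pi.single a 1 + Pi.single b 1) x = x a + x b := by
  unfold pairB
  simp only [ipQ_add, ipQ_single, Pi.add_apply, Pi.single_eq_same,
    Pi.single_eq_of_ne h, Pi.single_eq_of_ne h.symm]
  norm_num

open Classical in
noncomputable def Spre {N : ℕ} (P : Fin N → Prop) (w : Fin N → ℚ) : ℚ :=
  ∑ j, if P j then w j else 0

lemma Spre_step {N : ℕ} (P : Fin N → Prop) (w g : Fin N → ℚ) (c : ℚ) :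
    Spre P (w - c • g) = Spre P w - c * Spre P g := by
  classical
  simp only [Spre, Finset.mul_sum, ← Finset.sum_sub_distrib]
  refine Finset.sum_congr rfl fun j _ => ?_
  by_cases h : P j <;> simp [h]

lemma Spre_sub {N : ℕ} (P : Fin N → Prop) (u w : Fin N → ℚ) :
    Spre P (u - w) = Spre P u - Spre P w := by
  classical
  simp only [Spre, ← Finset.sum_sub_distrib]
  refine Finset.sum_congr rfl fun j _ => ?_
  by_cases h : P j <;> simp [h]

lemma Spre_add {N : ℕ} (P : Fin N → Prop) (u w : Fin N → ℚ) :
    Spre P (u + w) = Spre P u + Spre P w := by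
  classical
  simp only [Spre, ← Finset.sum_add_distrib]
  refine Finset.sum_congr rfl fun j _ => ?_
  by_cases h : P j <;> simp [h]

open Classical in
lemma Spre_single {N : ℕ} (P : Fin N → Prop) (a : Fin N) :
    Spre P (Pi.single a (1:ℚ)) = if P a then 1 else 0 := by
  classical
  unfold Spre
  rw [Finset.sum_eq_single a]
  · simp
  · intro b _ hb; simp [Pi.single_eq_of_ne hb]
  · simp

lemma chain_le {r : ℕ} {f : ℕ → ℚ} (hmono : ∀ i < r, f (i+1) ≤ f i) :
    ∀ j, j ≤ r → ∀ i, i ≤ j → f j ≤ f i := by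
  intro j
  induction j with
  | zero => intro _ i hi; interval_cases i; exact le_refl _
  | succ j ih =>
    intro hjr i hi
    rcases Nat.eq_or_lt_of_le hi with h | h
    · exact le_of_eq (by rw [h])
    · exact le_trans (hmono j (by omega)) (ih (by omega) i (by omega))

lemma chain_eq {r : ℕ} {f : ℕ → ℚ} (hmono : ∀ i < r, f (i+1) ≤ f i)
    (hend : f r = f 0) : ∀ i < r, f (i+1) = f i := by
  intro i hi
  have h1 : f r ≤ f (i+1) := chain_le hmono r le_rfl (i+1) (by omega)
  have h2 : f (i+1) ≤ f i := hmono i hi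
  have h3 : f i ≤ f 0 := chain_le hmono i (by omega) 0 (by omega)
  linarith

lemma no_decrease {r : ℕ} {g v : ℕ → ℚ}
    (hstep : ∀ i < r, ∃ c : ℚ, 0 < c ∧ v (i+1) = v i - c * g i)
    (hpos : ∀ i < r, 0 ≤ g i) (hend : v r = v 0) :
    ∀ i < r, g i = 0 := by
  have hmono : ∀ i < r, v (i+1) ≤ v i := by
    intro i hi; obtain ⟨c, hc, he⟩ := hstep i hi
    nlinarith [hpos i hi]
  intro i hi
  obtain ⟨c, hc, he⟩ := hstep i hi
  have h1 := chain_eq hmono hend i hi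
  have h2 : c * g i = 0 := by rw [he] at h1; linarith
  exact (mul_eq_zero.mp h2).resolve_left (ne_of_gt hc)

/-- for `ζ = ((1/2 - m)^n, 0^m)` and `μ = ζ - 2ε_n`, the only
sequence of positive roots of `so(2(m+n)+1)` linking `ζ` to `μ` is the
length-one sequence `(ε_n)`. -/
theorem stmt_2 (m n : ℕ) (hn : 1 ≤ n) (ρ ζ μ : Fin (m + n) → ℚ)
    (hρ : ∀ i : Fin (m + n), ρ i = ((2 * ((m : ℚ) + (n : ℚ)) - 1) - 2 * ((i : ℕ) : ℚ)) / 2)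
    (hζ : ∀ i : Fin (m + n), ζ i = if (i : ℕ) < n then 1 / 2 - (m : ℚ) else 0)
    (hμ : ∀ i : Fin (m + n), μ i = ζ i - if (i : ℕ) = n - 1 then 2 else 0)
    (r : ℕ) (γ : ℕ → Fin (m + n) → ℚ)
    (hlink : LinksTo (posRootsB (m + n)) ρ r γ ζ μ) :
    r = 1 ∧ γ 0 = Pi.single (⟨n - 1, by omega⟩ : Fin (m + n)) 1 := by
  classical
  obtain ⟨L, h0, hrend, hstep⟩ := hlink
  have hmn : n - 1 < m + n := by omega
  set I0 : Fin (m + n) := ⟨n - 1, hmn⟩ with hI0def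
  have hI0v : (I0 : ℕ) = n - 1 := rfl
  -- initial values of L 0 + ρ
  have hv0 : ∀ j : Fin (m + n), L 0 j + ρ j =
      if (j : ℕ) < n then (n : ℚ) - ((j : ℕ) : ℚ) else (m : ℚ) + n - ((j : ℕ) : ℚ) - 1/2 := by
    intro j
    rw [h0, hζ j, hρ j]
    by_cases h : (j : ℕ) < n
    · simp only [if_pos h]; ring
    · simp only [if_neg h]; ring
  -- structured step data
  have hstepS : ∀ i < r, ∃ k : ℕ, 0 < k ∧
      (L (i+1) + ρ = (L i + ρ) - (k : ℚ) • γ i) ∧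
      ((∃ a : Fin (m+n), γ i = Pi.single a 1 ∧ (k:ℚ) = 2 * (L i a + ρ a)) ∨
       (∃ a b : Fin (m+n), a < b ∧ γ i = Pi.single a 1 - Pi.single b 1 ∧
         (k:ℚ) = (L i a + ρ a) - (L i b + ρ b)) ∨
       (∃ a b : Fin (m+n), a < b ∧ γ i = Pi.single a 1 + Pi.single b 1 ∧
         (k:ℚ) = (L i a + ρ a) + (L i b + ρ b))) := by
    intro i hi
    obtain ⟨hmem, k, hk, hkeq, hrec⟩ := hstep i hi
    simp only [posRootsB, Set.mem_setOf_eq] at hmem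
    refine ⟨k, hk, by rw [hrec]; exact sub_add_eq_add_sub _ _ _, ?_⟩
    rcases hmem with ⟨a, ha⟩ | ⟨a, b, hab, ha⟩ | ⟨a, b, hab, ha⟩
    · exact Or.inl ⟨a, ha, by rw [hkeq, ha, pairB_single]; rfl⟩
    · exact Or.inr (Or.inl ⟨a, b, hab, ha, by rw [hkeq, ha, pairB_sub (ne_of_lt hab)]; rfl⟩)
    · exact Or.inr (Or.inr ⟨a, b, hab, ha, by rw [hkeq, ha, pairB_add (ne_of_lt hab)]; rfl⟩)
  -- integrality: L i + ρ differs from L 0 + ρ by integers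
  have hint : ∀ i ≤ r, ∀ j : Fin (m+n), ∃ z : ℤ, L i j + ρ j = (L 0 j + ρ j) + z := by
    intro i
    induction i with
    | zero => exact fun _ j => ⟨0, by simp⟩
    | succ i ih =>
      intro hir j
      obtain ⟨k, hk, hrec, hcase⟩ := hstepS i (by omega)
      obtain ⟨z, hz⟩ := ih (by omega) j
      have hrecj : L (i+1) j + ρ j = (L i j + ρ j) - (k:ℚ) * γ i j := by
        have := congrFun hrec j
        simpa [Pi.add_apply, Pi.sub_apply, Pi.smul_apply, smul_eq_mul] using this
      have hg : ∃ w : ℤ, γ i j = (w : ℚ) := by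
        rcases hcase with ⟨a, ha, -⟩ | ⟨a, b, -, ha, -⟩ | ⟨a, b, -, ha, -⟩ <;> rw [ha]
        · refine ⟨if j = a then 1 else 0, ?_⟩
          simp only [Pi.single_apply]
          split_ifs <;> norm_num
        · refine ⟨(if j = a then 1 else 0) - (if j = b then 1 else 0), ?_⟩
          simp only [Pi.sub_apply, Pi.single_apply]
          split_ifs <;> norm_num
        · refine ⟨(if j = a then 1 else 0) + (if j = b then 1 else 0), ?_⟩
          simp only [Pi.add_apply, Pi.single_apply]
          split_ifs <;> norm_num
      obtain ⟨w, hw⟩ := hg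
      refine ⟨z - k * w, ?_⟩
      rw [hrecj, hz, hw]
      push_cast
      ring
  -- parity classes
  have hclass : ∀ i ≤ r, ∀ j : Fin (m+n), ∃ z : ℤ,
      L i j + ρ j = (z : ℚ) + (if (j:ℕ) < n then 0 else 1/2) := by
    intro i hi j
    obtain ⟨z, hz⟩ := hint i hi j
    rw [hv0 j] at hz
    by_cases h : (j:ℕ) < n
    · refine ⟨(n : ℤ) - (j:ℕ) + z, ?_⟩
      rw [hz]; simp only [if_pos h]; push_cast; ring
    · refine ⟨(m:ℤ) + n - (j:ℕ) - 1 + z, ?_⟩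
      rw [hz]; simp only [if_neg h]; push_cast; ring
  -- endpoints agree for prefix functionals avoiding I0
  have hμρ : μ + ρ = (ζ + ρ) - (2:ℚ) • (Pi.single I0 1 : Fin (m+n) → ℚ) := by
    funext j
    have hiff : ((j:ℕ) = n - 1) ↔ j = I0 := by
      constructor
      · intro h; exact Fin.ext h
      · intro h; rw [h]
    simp only [Pi.add_apply, Pi.sub_apply, Pi.smul_apply, smul_eq_mul, hμ j]
    by_cases h : j = I0
    · rw [if_pos (hiff.mpr h), h, Pi.single_eq_same]; ring
    · rw [if_neg (fun hh => h (hiff.mp hh)), Pi.single_eq_of_ne h]; ring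
  have hend0 : ∀ (P : Fin (m+n) → Prop), ¬ P I0 →
      Spre P (L r + ρ) = Spre P (L 0 + ρ) := by
    intro P hP
    rw [hrend, h0, hμρ, Spre_step, Spre_single, if_neg hP]
    ring
  have hzero : ∀ (P : Fin (m+n) → Prop), ¬ P I0 →
      (∀ i < r, 0 ≤ Spre P (γ i)) → ∀ i < r, Spre P (γ i) = 0 := by
    intro P hP hpos
    refine no_decrease (g := fun i => Spre P (γ i)) (v := fun i => Spre P (L i + ρ)) ?_ hpos (hend0 P hP)
    intro i hi
    obtain ⟨k, hk, hrec, -⟩ := hstepS i hi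
    refine ⟨(k:ℚ), by exact_mod_cast hk, ?_⟩
    show Spre P (L (i+1) + ρ) = Spre P (L i + ρ) - (k:ℚ) * Spre P (γ i)
    rw [hrec, Spre_step]
  -- first prefix argument: min support ≥ n-1
  have hposP : ∀ p : ℕ, ∀ i < r, 0 ≤ Spre (fun j => (j:ℕ) ≤ p) (γ i) := by
    intro p i hi
    obtain ⟨k, -, -, hcase⟩ := hstepS i hi
    rcases hcase with ⟨a, ha, -⟩ | ⟨a, b, hab, ha, -⟩ | ⟨a, b, hab, ha, -⟩
    · rw [ha, Spre_single]; split_ifs <;> norm_num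
    · have habv : (a:ℕ) < (b:ℕ) := hab
      rw [ha, Spre_sub, Spre_single, Spre_single]
      split_ifs <;> (try norm_num) <;> omega
    · rw [ha, Spre_add, Spre_single, Spre_single]; split_ifs <;> norm_num
  have hSzero : ∀ p, p < n - 1 → ∀ i < r, Spre (fun j => (j:ℕ) ≤ p) (γ i) = 0 := by
    intro p hp
    refine hzero _ ?_ (hposP p)
    show ¬ ((I0:ℕ) ≤ p)
    rw [hI0v]; omega
  -- refined structure
  have hA : ∀ i < r, ∃ k : ℕ, 0 < k ∧
      (L (i+1) + ρ = (L i + ρ) - (k : ℚ) • γ i) ∧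
      ((γ i = Pi.single I0 1 ∧ (k:ℚ) = 2 * (L i I0 + ρ I0)) ∨
       (∃ a : Fin (m+n), n ≤ (a:ℕ) ∧ γ i = Pi.single a 1) ∨
       (∃ a b : Fin (m+n), n ≤ (a:ℕ) ∧ a < b ∧
         (γ i = Pi.single a 1 - Pi.single b 1 ∨ γ i = Pi.single a 1 + Pi.single b 1))) := by
    intro i hi
    obtain ⟨k, hk, hrec, hcase⟩ := hstepS i hi
    refine ⟨k, hk, hrec, ?_⟩
    rcases hcase with ⟨a, ha, hke⟩ | ⟨a, b, hab, ha, hke⟩ | ⟨a, b, hab, ha, hke⟩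
    · by_cases h1 : (a:ℕ) < n - 1
      · exfalso
        have h2 := hSzero (a:ℕ) h1 i hi
        rw [ha, Spre_single, if_pos (le_refl ((a:ℕ)))] at h2
        norm_num at h2
      · by_cases h2 : (a:ℕ) < n
        · left
          have haI : a = I0 := Fin.ext (by rw [hI0v]; omega)
          rw [haI] at ha hke
          exact ⟨ha, hke⟩
        · exact Or.inr (Or.inl ⟨a, by omega, ha⟩)
    · have habv : (a:ℕ) < (b:ℕ) := hab
      have hge : n ≤ (a:ℕ) := by
        by_cases h1 : (a:ℕ) < n - 1
        · exfalso
          have h2 := hSzero (a:ℕ) h1 i hi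
          rw [ha, Spre_sub, Spre_single, Spre_single, if_pos (le_refl ((a:ℕ))),
            if_neg (by omega : ¬ ((b:ℕ) ≤ (a:ℕ)))] at h2
          norm_num at h2
        · by_cases h2 : (a:ℕ) < n
          · exfalso
            obtain ⟨za, hza⟩ := hclass i (le_of_lt hi) a
            obtain ⟨zb, hzb⟩ := hclass i (le_of_lt hi) b
            rw [if_pos h2] at hza
            rw [if_neg (by omega : ¬ ((b:ℕ) < n))] at hzb
            have hx : (k:ℚ) = (za:ℚ) - zb - 1/2 := by rw [hke, hza, hzb]; ring
            have h3 : ((2*k : ℕ):ℚ) = ((2*za - 2*zb - 1 : ℤ):ℚ) := by push_cast; linarith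
            have h4 : (2*k : ℤ) = 2*za - 2*zb - 1 := by exact_mod_cast h3
            omega
          · omega
      exact Or.inr (Or.inr ⟨a, b, hge, hab, Or.inl ha⟩)
    · have habv : (a:ℕ) < (b:ℕ) := hab
      have hge : n ≤ (a:ℕ) := by
        by_cases h1 : (a:ℕ) < n - 1
        · exfalso
          have h2 := hSzero (a:ℕ) h1 i hi
          rw [ha, Spre_add, Spre_single, Spre_single, if_pos (le_refl ((a:ℕ)))] at h2
          split_ifs at h2 <;> norm_num at h2
        · by_cases h2 : (a:ℕ) < n
          · exfalso
            obtain ⟨za, hza⟩ := hclass i (le_of_lt hi) a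
            obtain ⟨zb, hzb⟩ := hclass i (le_of_lt hi) b
            rw [if_pos h2] at hza
            rw [if_neg (by omega : ¬ ((b:ℕ) < n))] at hzb
            have hx : (k:ℚ) = (za:ℚ) + zb + 1/2 := by rw [hke, hza, hzb]; ring
            have h3 : ((2*k : ℕ):ℚ) = ((2*za + 2*zb + 1 : ℤ):ℚ) := by push_cast; linarith
            have h4 : (2*k : ℤ) = 2*za + 2*zb + 1 := by exact_mod_cast h3
            omega
          · omega
      exact Or.inr (Or.inr ⟨a, b, hge, hab, Or.inr ha⟩)
  -- second prefix argument: nothing happens in the half block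
  have hposH : ∀ p : ℕ, ∀ i < r, 0 ≤ Spre (fun j => n ≤ (j:ℕ) ∧ (j:ℕ) ≤ p) (γ i) := by
    intro p i hi
    obtain ⟨k, -, -, hcase⟩ := hA i hi
    rcases hcase with ⟨ha, -⟩ | ⟨a, han, ha⟩ | ⟨a, b, han, hab, ha⟩
    · rw [ha, Spre_single]; split_ifs <;> norm_num
    · rw [ha, Spre_single]; split_ifs <;> norm_num
    · have habv : (a:ℕ) < (b:ℕ) := hab
      rcases ha with ha | ha
      · rw [ha, Spre_sub, Spre_single, Spre_single]
        split_ifs <;> (try norm_num) <;> omega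
      · rw [ha, Spre_add, Spre_single, Spre_single]
        split_ifs <;> norm_num
  have hHzero : ∀ p : ℕ, ∀ i < r, Spre (fun j => n ≤ (j:ℕ) ∧ (j:ℕ) ≤ p) (γ i) = 0 := by
    intro p
    refine hzero _ ?_ (hposH p)
    intro hcontr
    have := hcontr.1
    rw [hI0v] at this
    omega
  -- every step is ε_{n-1}
  have hfinal : ∀ i < r, γ i = Pi.single I0 1 ∧ ∃ k : ℕ, 0 < k ∧ (k:ℚ) = 2 * (L i I0 + ρ I0) ∧
      L (i+1) + ρ = (L i + ρ) - (k:ℚ) • γ i := by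
    intro i hi
    obtain ⟨k, hk, hrec, hcase⟩ := hA i hi
    rcases hcase with ⟨ha, hke⟩ | ⟨a, han, ha⟩ | ⟨a, b, han, hab, ha⟩
    · exact ⟨ha, k, hk, hke, hrec⟩
    · exfalso
      have h2 := hHzero (a:ℕ) i hi
      rw [ha, Spre_single, if_pos ⟨han, le_refl _⟩] at h2
      norm_num at h2
    · exfalso
      have habv : (a:ℕ) < (b:ℕ) := hab
      have h2 := hHzero (a:ℕ) i hi
      rcases ha with ha | ha
      · rw [ha, Spre_sub, Spre_single, Spre_single, if_pos ⟨han, le_refl _⟩,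
          if_neg (by omega : ¬ (n ≤ (b:ℕ) ∧ (b:ℕ) ≤ (a:ℕ)))] at h2
        norm_num at h2
      · rw [ha, Spre_add, Spre_single, Spre_single, if_pos ⟨han, le_refl _⟩,
          if_neg (by omega : ¬ (n ≤ (b:ℕ) ∧ (b:ℕ) ≤ (a:ℕ)))] at h2
        norm_num at h2
  -- finale
  have hI0n : (I0:ℕ) < n := by rw [hI0v]; omega
  have hval0 : L 0 I0 + ρ I0 = 1 := by
    rw [hv0 I0, if_pos hI0n, hI0v, Nat.cast_sub hn]
    push_cast
    ring
  have hrne : r ≠ 0 := by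
    intro h
    have h1 : L r I0 = μ I0 := by rw [hrend]
    rw [h, h0, hμ I0, if_pos hI0v] at h1
    linarith
  obtain ⟨hg0, k0, hk0, hke0, hrec0⟩ := hfinal 0 (by omega)
  have hk0v : (k0:ℚ) = 2 := by rw [hke0, hval0]; ring
  have hval1 : L 1 I0 + ρ I0 = -1 := by
    have h1 := congrFun hrec0 I0
    simp only [Pi.add_apply, Pi.sub_apply, Pi.smul_apply, smul_eq_mul] at h1
    rw [hg0, Pi.single_eq_same, hval0, hk0v] at h1
    rw [h1]; ring
  have hr1 : r = 1 := by
    by_contra h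
    obtain ⟨-, k1, hk1, hke1, -⟩ := hfinal 1 (by omega)
    rw [hval1] at hke1
    have hp : (0:ℚ) < (k1:ℚ) := by exact_mod_cast hk1
    rw [hke1] at hp
    norm_num at hp
  exact ⟨hr1, hg0⟩
end

section
/- Let m ≥ 0 and n ≥ 1 be integers, let ζ′ = (½−m, …, ½−m) ∈ ℚ^n and ρ = (n−1, n−2, …, 1, 0). Let λ be a nonzero partition with at most n parts, padded with zeros to length n, and set λᵒᵖ = (λ_n, λ_{n−1}, …, λ₁). Suppose there is a signed permutation w of the n coordinates with an even number of sign changes (i.e. w(x)_i = ε_i x_{σ(i)} for some permutation σ of {1,…,n} and signs ε_i ∈ {±1} with ∏_i ε_i = 1) such that w(ζ′ + ρ) = −λᵒᵖ + ζ′ + ρ. Then ℓ(λ) = λ₁ + 2m, where ℓ(λ) is the number of nonzero parts of λ. -/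
/-- let `ζ' = (1/2 - m, …, 1/2 - m) ∈ ℚ^n`, `ρ = (n-1, …, 1, 0)`,
and let `λ` be a nonzero partition with at most `n` parts (an antitone function
`Fin n → ℕ`, 0-indexed).  If a signed permutation `w` with an even number of
sign changes (given by a permutation `σ` and signs `ε` with `∏ ε = 1`,
`w(x)_i = ε_i x_{σ i}`) satisfies `w(ζ' + ρ) = -λᵒᵖ + ζ' + ρ`, where
`λᵒᵖ_i = λ_{n+1-i}` (0-indexed: `lam (Fin.rev i)`), then the number of nonzero
parts of `λ` equals `λ₁ + 2m`. -/
theorem stmt_3 (m n : ℕ) (hn : 1 ≤ n)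
    (lam : Fin n → ℕ) (hanti : Antitone lam) (hne : ∃ i, lam i ≠ 0)
    (σ : Equiv.Perm (Fin n)) (ε : Fin n → ℚ)
    (hsign : ∀ i, ε i = 1 ∨ ε i = -1) (hdet : ∏ i, ε i = 1)
    (hw : ∀ i : Fin n,
      ε i * ((1 / 2 - (m : ℚ)) + ((n : ℚ) - 1 - ((σ i : ℕ) : ℚ))) =
        -(lam (Fin.rev i) : ℚ) + (1 / 2 - (m : ℚ)) + ((n : ℚ) - 1 - ((i : ℕ) : ℚ))) :
    Set.ncard {i : Fin n | lam i ≠ 0} = lam ⟨0, hn⟩ + 2 * m := by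
  classical
  set μ : Fin n → ℕ := fun i => lam i.rev with hμdef
  set α : Fin n → ℚ := fun i => 2 * n - 2 * m - 2 * ((i : ℕ) : ℚ) - 1 with hαdef
  set β : Fin n → ℚ := fun i => α i - 2 * (μ i : ℚ) with hβdef
  set ℓ : ℕ := (Finset.univ.filter fun i : Fin n => lam i ≠ 0).card with hℓdef
  -- restate the goal
  have hgoal : Set.ncard {i : Fin n | lam i ≠ 0} = ℓ := by
    rw [hℓdef,
      show {i : Fin n | lam i ≠ 0} = ↑(Finset.univ.filter fun i : Fin n => lam i ≠ 0) from by
        ext i; simp, Set.ncard_coe_finset]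
  rw [hgoal]
  -- basic bounds on ℓ
  have hl1 : 1 ≤ ℓ := by
    obtain ⟨i, hi⟩ := hne
    have : i ∈ Finset.univ.filter fun i : Fin n => lam i ≠ 0 := by simp [hi]
    exact Finset.card_pos.mpr ⟨i, this⟩
  have hln : ℓ ≤ n := by
    rw [hℓdef]
    simpa using (Finset.card_filter_le Finset.univ fun i : Fin n => lam i ≠ 0)
  -- key equation : β i = ε i * α (σ i)
  have key : ∀ i, β i = ε i * α (σ i) := by
    intro i
    have h := hw i
    have e1 : α (σ i) = 2 * ((1 / 2 - (m : ℚ)) + ((n : ℚ) - 1 - ((σ i : ℕ) : ℚ))) := by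
      simp only [hαdef]; ring
    have e2 : β i = 2 * (-(lam (Fin.rev i) : ℚ) + (1 / 2 - (m : ℚ)) + ((n : ℚ) - 1 - ((i : ℕ) : ℚ))) := by
      simp only [hβdef, hαdef, hμdef]; ring
    rw [e1, e2, ← h]; ring
  have habs : ∀ i, |β i| = |α (σ i)| := by
    intro i
    rcases hsign i with h | h <;> rw [key i, h]
    · rw [one_mul]
    · rw [neg_one_mul, abs_neg]
  -- counting lemma
  have hcount : ∀ v : ℚ,
      (Finset.univ.filter fun i : Fin n => |β i| = v).card =
      (Finset.univ.filter fun i : Fin n => |α i| = v).card := by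
    intro v
    refine Finset.card_equiv σ fun i => ?_
    simp [habs i]
  -- μ is monotone
  have hμmono : Monotone μ := by
    intro i j hij
    exact hanti (Fin.rev_le_rev.mpr hij)
  -- card of nonzero set of μ
  have hμcard : (Finset.univ.filter fun i : Fin n => μ i ≠ 0).card = ℓ := by
    rw [hℓdef]
    refine (Finset.card_equiv Fin.revPerm fun i => ?_).symm
    simp [hμdef, Fin.rev_rev]
  -- characterization of nonzero μ
  have hS : ∀ i : Fin n, μ i ≠ 0 ↔ n - ℓ ≤ (i : ℕ) := by
    intro i
    constructor
    · intro h
      have hsub : Finset.Ici i ⊆ Finset.univ.filter fun j : Fin n => μ j ≠ 0 := by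
        intro j hj
        simp only [Finset.mem_Ici] at hj
        simp only [Finset.mem_filter, Finset.mem_univ, true_and]
        have := hμmono hj
        omega
      have := Finset.card_le_card hsub
      rw [Fin.card_Ici, hμcard] at this
      omega
    · intro h
      by_contra h0
      have hsub : (Finset.univ.filter fun j : Fin n => μ j ≠ 0) ⊆ Finset.Ioi i := by
        intro j hj
        simp only [Finset.mem_filter, Finset.mem_univ, true_and] at hj
        simp only [Finset.mem_Ioi]
        by_contra hji
        push_neg at hji
        have := hμmono hji
        omega
      have := Finset.card_le_card hsub
      rw [Fin.card_Ioi, hμcard] at this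
      have := i.isLt
      omega
  -- the threshold value
  set t : ℚ := 2 * ℓ - 2 * m - 1 with htdef
  -- top block
  have htop : ∀ i : Fin n, (i : ℕ) < n - ℓ → β i = α i ∧ t + 2 ≤ α i := by
    intro i hi
    have hμ0 : μ i = 0 := by
      by_contra h
      have := (hS i).mp h
      omega
    constructor
    · show β i = α i
      have hb : β i = α i - 2 * (μ i : ℚ) := by rw [hβdef]
      rw [hb, hμ0]
      norm_num
    · have h1 : (i : ℕ) + 1 + ℓ ≤ n := by omega
      have h2 : ((i : ℕ) : ℚ) + 1 + (ℓ : ℚ) ≤ (n : ℚ) := by exact_mod_cast h1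
      simp only [hαdef, htdef]
      linarith
  -- bottom block
  have hbot : ∀ i : Fin n, n - ℓ ≤ (i : ℕ) → β i ≤ t - 2 := by
    intro i hi
    have hμ1 : 1 ≤ μ i := by
      have := (hS i).mpr hi
      omega
    have h1 : n ≤ (i : ℕ) + ℓ := by omega
    have h2 : (n : ℚ) ≤ ((i : ℕ) : ℚ) + (ℓ : ℚ) := by exact_mod_cast h1
    have h3 : (1 : ℚ) ≤ (μ i : ℚ) := by exact_mod_cast hμ1
    simp only [hβdef, hαdef, htdef]
    linarith
  have hβne : ∀ i : Fin n, β i ≠ t := by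
    intro i
    rcases lt_or_ge ((i : ℕ)) (n - ℓ) with h | h
    · have := (htop i h); linarith [this.1, this.2]
    · have := hbot i h; linarith
  -- α is injective
  have hαinj : Function.Injective α := by
    intro a b hab
    simp only [hαdef] at hab
    have : ((a : ℕ) : ℚ) = ((b : ℕ) : ℚ) := by linarith
    have : (a : ℕ) = (b : ℕ) := by exact_mod_cast this
    exact Fin.ext this
  -- β is strictly antitone hence injective
  have hβanti : StrictAnti β := by
    intro a b hab
    have h1 : (a : ℕ) + 1 ≤ (b : ℕ) := hab
    have h2 : ((a : ℕ) : ℚ) + 1 ≤ ((b : ℕ) : ℚ) := by exact_mod_cast h1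
    have h3 : μ a ≤ μ b := hμmono (le_of_lt hab)
    have h4 : (μ a : ℚ) ≤ (μ b : ℚ) := by exact_mod_cast h3
    simp only [hβdef, hαdef]
    linarith
  have hβinj : Function.Injective β := hβanti.injective
  -- α bounds : α i ≥ 1 - 2m
  have hαlb : ∀ i : Fin n, 1 - 2 * (m : ℚ) ≤ α i := by
    intro i
    have h1 : (i : ℕ) + 1 ≤ n := i.isLt
    have h2 : ((i : ℕ) : ℚ) + 1 ≤ (n : ℚ) := by exact_mod_cast h1
    simp only [hαdef]
    linarith
  -- the index with α = t
  have hj0 : ∃ j : Fin n, α j = t := by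
    refine ⟨⟨n - ℓ, by omega⟩, ?_⟩
    simp only [hαdef, htdef]
    have : ((n - ℓ : ℕ) : ℚ) = (n : ℚ) - (ℓ : ℚ) := by
      push_cast [Nat.cast_sub hln]; ring
    simp only [this]
    ring
  -- Step A : m < ℓ
  have hml : m < ℓ := by
    by_contra h
    push_neg at h
    set w : ℚ := 2 * m + 1 - 2 * ℓ with hwdef
    have hw1 : 1 ≤ w := by
      have : (ℓ : ℚ) ≤ (m : ℚ) := by exact_mod_cast h
      simp only [hwdef]; linarith
    have hwt : -w = t := by simp only [hwdef, htdef]; ring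
    -- subset : {|β| = w} ⊆ {α = w}
    have hsub1 : (Finset.univ.filter fun i : Fin n => |β i| = w) ⊆
        Finset.univ.filter fun i : Fin n => α i = w := by
      intro i hi
      simp only [Finset.mem_filter, Finset.mem_univ, true_and] at hi ⊢
      rcases (abs_eq (by linarith)).mp hi with h1 | h1
      · rcases lt_or_ge ((i : ℕ)) (n - ℓ) with hc | hc
        · rw [← (htop i hc).1, h1]
        · have := hbot i hc; rw [h1] at this
          simp only [hwdef, htdef] at this hw1 ⊢
          linarith
      · exact absurd (h1.trans hwt) (hβne i)
    -- strict subset : {α = w} ⊂ {|α| = w}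
    obtain ⟨j0, hj0e⟩ := hj0
    have hssub : (Finset.univ.filter fun i : Fin n => α i = w) ⊂
        Finset.univ.filter fun i : Fin n => |α i| = w := by
      refine Finset.ssubset_iff_of_subset ?_ |>.mpr ⟨j0, ?_, ?_⟩
      · intro i hi
        simp only [Finset.mem_filter, Finset.mem_univ, true_and] at hi ⊢
        rw [hi, abs_of_pos (by linarith)]
      · simp only [Finset.mem_filter, Finset.mem_univ, true_and]
        rw [hj0e, ← hwt, abs_neg, abs_of_pos (by linarith)]
      · simp only [Finset.mem_filter, Finset.mem_univ, true_and]
        rw [hj0e, ← hwt]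
        intro hcon
        linarith
    have h1 := Finset.card_le_card hsub1
    have h2 := Finset.card_lt_card hssub
    have h3 := hcount w
    omega
  -- Step B : 2m < ℓ
  have h2ml : 2 * m + 1 ≤ ℓ := by
    rcases Nat.eq_zero_or_pos m with hm0 | hm1
    · omega
    by_contra h
    push_neg at h
    have hl2m : ℓ ≤ 2 * m := by omega
    have ht1 : 1 ≤ t := by
      have : (m : ℚ) + 1 ≤ (ℓ : ℚ) := by exact_mod_cast hml
      simp only [htdef]; linarith
    obtain ⟨j0, hj0e⟩ := hj0
    -- second index with α = -t
    have hj1 : ∃ j : Fin n, α j = -t := by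
      refine ⟨⟨n + ℓ - 2 * m - 1, by omega⟩, ?_⟩
      simp only [hαdef, htdef]
      have : ((n + ℓ - 2 * m - 1 : ℕ) : ℚ) = (n : ℚ) + (ℓ : ℚ) - 2 * (m : ℚ) - 1 := by
        have hx : n + ℓ - 2 * m - 1 + (2 * m + 1) = n + ℓ := by omega
        have hx2 := congrArg (fun k : ℕ => (k : ℚ)) hx
        push_cast at hx2
        linarith
      simp only [this]
      ring
    obtain ⟨j1, hj1e⟩ := hj1
    have hj01 : j0 ≠ j1 := by
      intro hcon
      rw [hcon, hj1e] at hj0e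
      linarith
    have hcard2 : 1 < (Finset.univ.filter fun i : Fin n => |α i| = t).card := by
      refine Finset.one_lt_card.mpr ⟨j0, ?_, j1, ?_, hj01⟩
      · simp only [Finset.mem_filter, Finset.mem_univ, true_and]
        rw [hj0e, abs_of_pos (by linarith)]
      · simp only [Finset.mem_filter, Finset.mem_univ, true_and]
        rw [hj1e, abs_neg, abs_of_pos (by linarith)]
    have hcard1 : (Finset.univ.filter fun i : Fin n => |β i| = t).card ≤ 1 := by
      refine Finset.card_le_one.mpr fun a ha b hb => ?_
      simp only [Finset.mem_filter, Finset.mem_univ, true_and] at ha hb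
      have ha' : β a = -t := by
        rcases (abs_eq (by linarith)).mp ha with h1 | h1
        · exact absurd h1 (hβne a)
        · exact h1
      have hb' : β b = -t := by
        rcases (abs_eq (by linarith)).mp hb with h1 | h1
        · exact absurd h1 (hβne b)
        · exact h1
      exact hβinj (ha'.trans hb'.symm)
    have h3 := hcount t
    omega
  have ht2m : 2 * (m : ℚ) + 1 ≤ t := by
    have : 2 * (m : ℚ) + 1 ≤ (ℓ : ℚ) := by exact_mod_cast h2ml
    simp only [htdef]; linarith
  -- Step C : all β i ≥ -t
  have hlow : ∀ i : Fin n, -t ≤ β i := by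
    intro i
    by_contra hcon
    push_neg at hcon
    set v : ℚ := -β i with hvdef
    have hvt : t < v := by simp only [hvdef]; linarith
    have hv1 : 0 < v := by linarith
    have habsi : |β i| = v := by
      rw [abs_of_neg (by linarith)]
    -- α (σ i) = v or -v ; -v impossible
    have hασ : α (σ i) = v := by
      have := habs i
      rw [habsi] at this
      rcases (abs_eq (by linarith)).mp this.symm with h1 | h1
      · exact h1
      · have := hαlb (σ i)
        rw [h1] at this
        linarith
    -- σ i is in top block
    have hσtop : ((σ i : Fin n) : ℕ) < n - ℓ := by
      have h1 : (ℓ : ℚ) < (n : ℚ) - ((σ i : ℕ) : ℚ) := by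
        simp only [hαdef] at hασ
        simp only [htdef] at hvt
        linarith
      have h2 : (ℓ : ℕ) + ((σ i : ℕ)) < n := by exact_mod_cast (by linarith : (ℓ : ℚ) + ((σ i : ℕ) : ℚ) < (n : ℚ))
      omega
    have hβσ : β (σ i) = v := by rw [(htop (σ i) hσtop).1, hασ]
    have hine : i ≠ σ i := by
      intro hcon2
      rw [← hcon2] at hβσ
      simp only [hvdef] at hβσ
      linarith
    have hcard2 : 1 < (Finset.univ.filter fun j : Fin n => |β j| = v).card := by
      refine Finset.one_lt_card.mpr ⟨i, ?_, σ i, ?_, hine⟩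
      · simp only [Finset.mem_filter, Finset.mem_univ, true_and]; exact habsi
      · simp only [Finset.mem_filter, Finset.mem_univ, true_and]
        rw [hβσ, abs_of_pos hv1]
    have hcard1 : (Finset.univ.filter fun j : Fin n => |α j| = v).card ≤ 1 := by
      refine Finset.card_le_one.mpr fun a ha b hb => ?_
      simp only [Finset.mem_filter, Finset.mem_univ, true_and] at ha hb
      have ha' : α a = v := by
        rcases (abs_eq (by linarith)).mp ha with h1 | h1
        · exact h1
        · have := hαlb a; rw [h1] at this; linarith
      have hb' : α b = v := by
        rcases (abs_eq (by linarith)).mp hb with h1 | h1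
        · exact h1
        · have := hαlb b; rw [h1] at this; linarith
      exact hαinj (ha'.trans hb'.symm)
    have h3 := hcount v
    omega
  -- Step D : some β i = -t
  have hex : ∃ i : Fin n, β i = -t := by
    obtain ⟨j0, hj0e⟩ := hj0
    have hj0mem : j0 ∈ Finset.univ.filter fun i : Fin n => |α i| = t := by
      simp only [Finset.mem_filter, Finset.mem_univ, true_and]
      rw [hj0e, abs_of_pos (by linarith)]
    have h1 : 0 < (Finset.univ.filter fun i : Fin n => |β i| = t).card := by
      rw [hcount t]
      exact Finset.card_pos.mpr ⟨j0, hj0mem⟩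
    obtain ⟨i, hi⟩ := Finset.card_pos.mp h1
    simp only [Finset.mem_filter, Finset.mem_univ, true_and] at hi
    rcases (abs_eq (by linarith)).mp hi with h2 | h2
    · exact absurd h2 (hβne i)
    · exact ⟨i, h2⟩
  -- Step E : conclude
  obtain ⟨i, hi⟩ := hex
  have hlast : β ⟨n - 1, by omega⟩ = -t := by
    have h1 : i ≤ (⟨n - 1, by omega⟩ : Fin n) := by
      rw [Fin.le_def]
      simp only [Fin.val_mk]
      exact Nat.le_pred_of_lt i.isLt
    have h2 : β ⟨n - 1, by omega⟩ ≤ β i := hβanti.antitone h1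
    have h3 := hlow ⟨n - 1, by omega⟩
    rw [hi] at h2
    linarith
  have hrev : (⟨n - 1, by omega⟩ : Fin n).rev = ⟨0, hn⟩ := by
    ext
    simp [Fin.val_rev]
    omega
  have hμlast : μ ⟨n - 1, by omega⟩ = lam ⟨0, hn⟩ := by
    simp only [hμdef, hrev]
  rw [hβdef] at hlast
  simp only [hαdef, htdef, hμlast] at hlast
  have hcast : (((⟨n - 1, by omega⟩ : Fin n) : ℕ) : ℚ) = (n : ℚ) - 1 := by
    simp only []
    push_cast [Nat.cast_sub hn]
    ring
  rw [hcast] at hlast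
  have hfin : (ℓ : ℚ) = (lam ⟨0, hn⟩ : ℚ) + 2 * (m : ℚ) := by linarith
  exact_mod_cast hfin
end

section
/- Let m ≥ 1 and n ≥ 1 be integers. Let ζ = (½−m, …, ½−m, 0, …, 0) ∈ ℚ^{m+n} (n copies of ½−m followed by m zeros) and ρ ∈ ℚ^{m+n} with ρ_i = m+n−i+½. Let w be a signed permutation of the m+n coordinates (w(x)_i = ε_i x_{σ(i)} for a permutation σ of {1,…,m+n} and signs ε_i ∈ {±1}), and set ν = w(ζ+ρ) − ρ. Suppose ν satisfies: ν_i − ν_{i+1} is a nonnegative integer for 1 ≤ i ≤ n−1; ν_{n+1} ≥ ν_{n+2} ≥ ⋯ ≥ ν_{m+n}; and ν_{n+i} is a nonnegative integer for 1 ≤ i ≤ m. Then ν_{n+i} = 0 for all i = 1, …, m. -/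
/-- let `ζ = ((1/2 - m)^n, 0^m) ∈ ℚ^{m+n}` and
`ρ_i = m + n - i + 1/2` (1-indexed; 0-indexed: `ρ i = m + n - i - 1/2`).
Let `w` be a signed permutation (`w(x)_i = ε_i x_{σ i}`) and
`ν = w(ζ + ρ) - ρ`.  If `ν_i - ν_{i+1}` is a nonnegative integer for
`1 ≤ i ≤ n-1`, the entries `ν_{n+1} ≥ ⋯ ≥ ν_{m+n}` are weakly decreasing, and
each `ν_{n+i}` (`1 ≤ i ≤ m`) is a nonnegative integer, then `ν_{n+i} = 0`
for all `i = 1, …, m`. -/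
theorem stmt_4 (m n : ℕ) (hm : 1 ≤ m) (hn : 1 ≤ n)
    (ζ ρ ν : Fin (m + n) → ℚ)
    (hζ : ∀ i : Fin (m + n), ζ i = if (i : ℕ) < n then 1 / 2 - (m : ℚ) else 0)
    (hρ : ∀ i : Fin (m + n), ρ i = (m : ℚ) + (n : ℚ) - ((i : ℕ) : ℚ) - 1 / 2)
    (σ : Equiv.Perm (Fin (m + n))) (ε : Fin (m + n) → ℚ)
    (hsign : ∀ i, ε i = 1 ∨ ε i = -1)
    (hν : ∀ i, ν i = ε i * (ζ (σ i) + ρ (σ i)) - ρ i)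
    (h1 : ∀ i j : Fin (m + n), (j : ℕ) = (i : ℕ) + 1 → (j : ℕ) < n →
      ∃ k : ℕ, ν i - ν j = (k : ℚ))
    (h2 : ∀ i j : Fin (m + n), n ≤ (i : ℕ) → (j : ℕ) = (i : ℕ) + 1 → ν j ≤ ν i)
    (h3 : ∀ i : Fin (m + n), n ≤ (i : ℕ) → ∃ k : ℕ, ν i = (k : ℚ)) :
    ∀ i : Fin (m + n), n ≤ (i : ℕ) → ν i = 0 := by
  classical
  set S : Finset (Fin (m + n)) := Finset.univ.filter (fun i => n ≤ (i : ℕ)) with hS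
  have memS : ∀ i : Fin (m + n), i ∈ S ↔ n ≤ (i : ℕ) := by
    intro i; simp [hS]
  -- σ preserves S (parity argument)
  have hσS : ∀ i ∈ S, σ i ∈ S := by
    intro i hi
    rw [memS] at hi ⊢
    by_contra hlt
    push_neg at hlt
    obtain ⟨k, hk⟩ := h3 i hi
    have hζσ : ζ (σ i) = 1 / 2 - (m : ℚ) := by rw [hζ]; simp [hlt]
    have hv := hν i
    rw [hζσ, hρ (σ i), hρ i, hk] at hv
    rcases hsign i with he | he <;> rw [he] at hv
    · have h2' : ((2 * (i : ℕ) + 1 : ℤ) : ℚ)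
          = ((2 * (k : ℤ) + 2 * ((σ i : Fin (m+n)) : ℕ) + 2 * m : ℤ) : ℚ) := by
        push_cast; linarith
      have h2'' := Int.cast_injective (α := ℚ) h2'
      omega
    · have h2' : ((2 * ((σ i : Fin (m+n)) : ℕ) + 2 * (i : ℕ) + 1 : ℤ) : ℚ)
          = ((2 * (k : ℤ) + 4 * n + 2 * m : ℤ) : ℚ) := by
        push_cast; linarith
      have h2'' := Int.cast_injective (α := ℚ) h2'
      omega
  have himg : S.image σ = S := by
    apply Finset.eq_of_subset_of_card_le
    · intro j hj
      obtain ⟨i, hi, rfl⟩ := Finset.mem_image.mp hj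
      exact hσS i hi
    · rw [Finset.card_image_of_injective _ σ.injective]
  -- positivity of ζ + ρ on S
  have hpos : ∀ j ∈ S, 0 ≤ ζ j + ρ j := by
    intro j hj
    rw [memS] at hj
    have hjlt : (j : ℕ) < m + n := j.isLt
    rw [hζ, hρ, if_neg (Nat.not_lt.mpr hj)]
    have : ((j : ℕ) : ℚ) + 1 ≤ (m : ℚ) + n := by
      have h' : (j : ℕ) + 1 ≤ m + n := hjlt
      exact_mod_cast h'
    linarith
  have hζ0 : ∀ j ∈ S, ζ j = 0 := by
    intro j hj
    rw [memS] at hj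
    rw [hζ]; simp [Nat.not_lt.mpr hj]
  -- sum over S of (ζ+ρ)∘σ equals sum of ρ
  have hsum1 : ∑ i ∈ S, (ζ (σ i) + ρ (σ i)) = ∑ j ∈ S, ρ j := by
    calc ∑ i ∈ S, (ζ (σ i) + ρ (σ i))
        = ∑ j ∈ S.image σ, (ζ j + ρ j) := by
          rw [Finset.sum_image (fun a _ b _ h => σ.injective h)]
      _ = ∑ j ∈ S, (ζ j + ρ j) := by rw [himg]
      _ = ∑ j ∈ S, ρ j := Finset.sum_congr rfl fun j hj => by rw [hζ0 j hj, zero_add]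
  -- sum of ν over S is ≤ 0
  have hsumle : ∑ i ∈ S, ν i ≤ 0 := by
    have hterm : ∀ i ∈ S, ν i ≤ (ζ (σ i) + ρ (σ i)) - ρ i := by
      intro i hi
      rw [hν i]
      have hp := hpos (σ i) (hσS i hi)
      rcases hsign i with he | he <;> rw [he] <;> nlinarith
    calc ∑ i ∈ S, ν i ≤ ∑ i ∈ S, ((ζ (σ i) + ρ (σ i)) - ρ i) :=
          Finset.sum_le_sum hterm
      _ = (∑ i ∈ S, (ζ (σ i) + ρ (σ i))) - ∑ i ∈ S, ρ i := Finset.sum_sub_distrib _ _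
      _ = 0 := by rw [hsum1]; ring
  have hnonneg : ∀ i ∈ S, 0 ≤ ν i := by
    intro i hi
    obtain ⟨k, hk⟩ := h3 i ((memS i).mp hi)
    rw [hk]; positivity
  have hsum0 : ∑ i ∈ S, ν i = 0 :=
    le_antisymm hsumle (Finset.sum_nonneg hnonneg)
  intro i hi
  exact (Finset.sum_eq_zero_iff_of_nonneg hnonneg).mp hsum0 i ((memS i).mpr hi)
end

section
/- Let n ≥ k ≥ 1 be integers, and let λ be a partition with at most k parts, of rank d, with Frobenius coordinates (a₁, …, a_d | b₁, …, b_d). Let ρ = (n−1, n−2, …, 1, 0) and let α ∈ ℤ^n be the concatenation of n−k zeros followed by (λ₁, …, λ_k). Then: (i) the entries of α + ρ are pairwise distinct if and only if a_d ≥ n−k; (ii) if a_d ≥ n−k, the decreasing rearrangement of α + ρ is (a₁+k, a₂+k, …, a_d+k, n−1, n−2, …, k, λ_{d+1}+k−d−1, λ_{d+2}+k−d−2, …, λ_k); (iii) if a_d ≥ n−k, the number of inversions of α + ρ, i.e. the number of pairs i < j with (α+ρ)_i < (α+ρ)_j, equals d(n−k); and (iv) if a_d ≥ n−k, then subtracting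 ρ from the decreasing rearrangement of α + ρ yields the partition with Frobenius coordinates (a₁−(n−k), …, a_d−(n−k) | b₁+(n−k), …, b_d+(n−k)). -/
lemma aux_card_interval (n a b : ℕ) (h : a + b ≤ n) :
    (Finset.univ.filter (fun i : Fin n => a ≤ (i : ℕ) ∧ (i : ℕ) < a + b)).card = b := by
  have := Finset.card_bij'
    (s := Finset.univ.filter (fun i : Fin n => a ≤ (i : ℕ) ∧ (i : ℕ) < a + b))
    (t := Finset.Ico a (a + b))
    (i := fun x _ => (x : ℕ))
    (j := fun y hy => ⟨y, lt_of_lt_of_le (Finset.mem_Ico.mp hy).2 h⟩)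
    (fun x hx => by simp only [Finset.mem_filter] at hx; exact Finset.mem_Ico.mpr hx.2)
    (fun y hy => by
      simp only [Finset.mem_filter, Finset.mem_univ, true_and]
      exact (Finset.mem_Ico.mp hy).imp id id)
    (fun x hx => by ext; rfl)
    (fun y hy => rfl)
  rw [this, Nat.card_Ico]
  omega

/-- Borel–Weil–Bott bookkeeping in Frobenius coordinates.
Let `n ≥ k ≥ 1`, let `λ` be a partition with at most `k` parts (an antitone
`lam : ℕ → ℕ` vanishing from index `k` on, 0-indexed), of rank
`d = #{i | lam i ≥ i + 1}`, with Frobenius coordinates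
`a t = lam t - (t+1)`, `b t = #{j | lam j ≥ t+1} - (t+1)` for `t < d`.
Let `ρ = (n-1, …, 1, 0)`, let `α` be `n-k` zeros followed by `λ`, and let `β`
be the explicit claimed decreasing rearrangement.  Then:
(i) the entries of `α + ρ` are pairwise distinct iff `a_d ≥ n - k`
    (equivalently, since `a` is strictly decreasing: `a t ≥ n - k` for all `t < d`);
and if `a_d ≥ n - k`:
(ii) the decreasing rearrangement of `α + ρ` is `β`;
(iii) the number of inversions of `α + ρ` is `d(n-k)`;
(iv) `β - ρ` is a partition of rank `d` with Frobenius coordinates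
     `(a - (n-k)^d | b + (n-k)^d)`. -/
theorem stmt_6 (n k : ℕ) (hk : 1 ≤ k) (hkn : k ≤ n)
    (lam : ℕ → ℕ) (hanti : Antitone lam) (hlen : ∀ i, k ≤ i → lam i = 0)
    (d : ℕ) (hd : d = Set.ncard {i : ℕ | i + 1 ≤ lam i})
    (α ρ β : Fin n → ℤ)
    (hα : ∀ i : Fin n, α i =
      if (i : ℕ) < n - k then 0 else (lam ((i : ℕ) - (n - k)) : ℤ))
    (hρ : ∀ i : Fin n, ρ i = (n : ℤ) - 1 - ((i : ℕ) : ℤ))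
    (hβ : ∀ i : Fin n, β i =
      if (i : ℕ) < d then (lam (i : ℕ) : ℤ) - ((i : ℕ) : ℤ) - 1 + (k : ℤ)
      else if (i : ℕ) < d + (n - k) then (n : ℤ) - 1 - (((i : ℕ) - d : ℕ) : ℤ)
      else (lam ((i : ℕ) - (n - k)) : ℤ) + (n : ℤ) - 1 - ((i : ℕ) : ℤ)) :
    (Function.Injective (fun i => α i + ρ i) ↔
      ∀ t, t < d → (n : ℤ) - (k : ℤ) ≤ (lam t : ℤ) - (t : ℤ) - 1) ∧
    ((∀ t, t < d → (n : ℤ) - (k : ℤ) ≤ (lam t : ℤ) - (t : ℤ) - 1) →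
      ((StrictAnti β ∧ ∃ σ : Equiv.Perm (Fin n), ∀ i, β i = α (σ i) + ρ (σ i)) ∧
        (Finset.filter (fun p : Fin n × Fin n =>
          p.1 < p.2 ∧ α p.1 + ρ p.1 < α p.2 + ρ p.2) Finset.univ).card = d * (n - k) ∧
        ((∀ i, 0 ≤ β i - ρ i) ∧
          (∀ i j : Fin n, i ≤ j → β j - ρ j ≤ β i - ρ i) ∧
          Set.ncard {i : Fin n | ((i : ℕ) : ℤ) + 1 ≤ β i - ρ i} = d ∧
          ∀ t : Fin n, (t : ℕ) < d →
            (β t - ρ t) - (((t : ℕ) : ℤ) + 1) =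
              ((lam (t : ℕ) : ℤ) - (((t : ℕ) : ℤ) + 1)) - ((n : ℤ) - (k : ℤ)) ∧
            Set.ncard {j : Fin n | ((t : ℕ) : ℤ) + 1 ≤ β j - ρ j} =
              Set.ncard {j : ℕ | (t : ℕ) + 1 ≤ lam j} + (n - k)))) := by
  set m := n - k with hm
  have hmk : m + k = n := Nat.sub_add_cancel hkn
  have hSsub : {i : ℕ | i + 1 ≤ lam i} ⊆ Set.Iio k := by
    intro i hi
    simp only [Set.mem_setOf_eq] at hi
    by_contra h
    have := hlen i (le_of_not_gt (by simpa using h))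
    omega
  have hSfin : Set.Finite {i : ℕ | i + 1 ≤ lam i} := (Set.finite_Iio k).subset hSsub
  have hrank : ∀ t, t + 1 ≤ lam t ↔ t < d := by
    intro t
    constructor
    · intro ht
      have hsub : Set.Iic t ⊆ {i : ℕ | i + 1 ≤ lam i} := by
        intro j hj
        have hjt := Set.mem_Iic.mp hj
        have := hanti hjt
        simp only [Set.mem_setOf_eq]
        omega
      have hle := Set.ncard_le_ncard hsub hSfin
      rw [← Finset.coe_Iic, Set.ncard_coe_finset, Nat.card_Iic] at hle
      omega
    · intro ht
      by_contra hc
      have hsub : {i : ℕ | i + 1 ≤ lam i} ⊆ Set.Iio t := by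
        intro j hj
        simp only [Set.mem_setOf_eq] at hj
        rw [Set.mem_Iio]
        by_contra h
        have := hanti (le_of_not_gt h)
        omega
      have hle := Set.ncard_le_ncard hsub (Set.finite_Iio t)
      rw [← Finset.coe_Iio, Set.ncard_coe_finset, Nat.card_Iio] at hle
      omega
  have hdk : d ≤ k := by
    have hle := Set.ncard_le_ncard hSsub (Set.finite_Iio k)
    rw [← Finset.coe_Iio, Set.ncard_coe_finset, Nat.card_Iio] at hle
    omega
  have hlamle : ∀ j, d ≤ j → lam j ≤ j := by
    intro j hj
    have := (hrank j).not.mpr (by omega)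
    omega
  -- formula for α + ρ
  have hF : ∀ i : Fin n, α i + ρ i =
      if (i : ℕ) < m then (n : ℤ) - 1 - ((i : ℕ) : ℤ)
      else (lam ((i : ℕ) - m) : ℤ) + ((n : ℤ) - 1 - ((i : ℕ) : ℤ)) := by
    intro i
    rw [hα i, hρ i]
    split <;> ring
  -- basic comparison facts
  have hfAA : ∀ i j : Fin n, (j : ℕ) < m → (i : ℕ) < (j : ℕ) → α j + ρ j < α i + ρ i := by
    intro i j hj hij
    rw [hF i, hF j, if_pos hj, if_pos (by omega)]
    omega
  have hfCC : ∀ i j : Fin n, m ≤ (i : ℕ) → (i : ℕ) < (j : ℕ) → α j + ρ j < α i + ρ i := by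
    intro i j hi hij
    rw [hF i, hF j, if_neg (by omega), if_neg (by omega)]
    have := hanti (show (i : ℕ) - m ≤ (j : ℕ) - m by omega)
    omega
  have hfA : ∀ i : Fin n, (i : ℕ) < m → (k : ℤ) ≤ α i + ρ i ∧ α i + ρ i ≤ (n : ℤ) - 1 := by
    intro i h
    rw [hF i, if_pos h]
    omega
  have hfHigh : (∀ t, t < d → (n : ℤ) - (k : ℤ) ≤ (lam t : ℤ) - (t : ℤ) - 1) →
      ∀ j : Fin n, m ≤ (j : ℕ) → (j : ℕ) - m < d → (n : ℤ) ≤ α j + ρ j := by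
    intro H j hmj hjd
    rw [hF j, if_neg (by omega)]
    have := H ((j : ℕ) - m) hjd
    have hjn := j.isLt
    omega
  have hfLow : ∀ j : Fin n, m ≤ (j : ℕ) → d ≤ (j : ℕ) - m → α j + ρ j ≤ (k : ℤ) - 1 := by
    intro j hmj hjd
    rw [hF j, if_neg (by omega)]
    have := hlamle _ hjd
    omega
  have hauxne : (∀ t, t < d → (n : ℤ) - (k : ℤ) ≤ (lam t : ℤ) - (t : ℤ) - 1) →
      ∀ x y : Fin n, (x : ℕ) < (y : ℕ) → α x + ρ x ≠ α y + ρ y := by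
    intro H x y hlt heq
    by_cases hy : (y : ℕ) < m
    · have := hfAA x y hy hlt
      omega
    · by_cases hx : (x : ℕ) < m
      · by_cases hyd : (y : ℕ) - m < d
        · have h1 := hfHigh H y (by omega) hyd
          have h2 := (hfA x hx).2
          omega
        · have h1 := hfLow y (by omega) (by omega)
          have h2 := (hfA x hx).1
          omega
      · have := hfCC x y (by omega) hlt
        omega
  constructor
  · -- part (i)
    constructor
    · -- injective → condition
      intro hinj t htd
      by_contra hc
      push_neg at hc
      have ht1 : t + 1 ≤ lam t := (hrank t).mpr htd
      have htk : t < k := by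
        have := hrank t
        by_contra h
        have := hlen t (by omega)
        omega
      -- the colliding index
      have hw1 : k ≤ lam t + k - 1 - t := by omega
      have hw2 : lam t + k - 1 - t ≤ n - 1 := by omega
      set i : ℕ := n - 1 - (lam t + k - 1 - t) with hi
      have hiltn : i < n := by omega
      have htmn : t + m < n := by omega
      have heq : α ⟨i, hiltn⟩ + ρ ⟨i, hiltn⟩ = α ⟨t + m, htmn⟩ + ρ ⟨t + m, htmn⟩ := by
        rw [hF, hF]
        simp only
        rw [if_pos (show i < m by omega), if_neg (show ¬ (t + m < m) by omega)]
        have ht' : t + m - m = t := by omega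
        rw [ht']
        omega
      have := hinj heq
      have : i = t + m := congrArg Fin.val this
      omega
    · -- condition → injective
      intro H x y hxy
      have hxy' : α x + ρ x = α y + ρ y := hxy
      by_contra hne
      have hvne : (x : ℕ) ≠ (y : ℕ) := fun h => hne (Fin.ext h)
      rcases Nat.lt_or_ge (x : ℕ) (y : ℕ) with h | h
      · exact hauxne H x y h hxy'
      · exact hauxne H y x (by omega) hxy'.symm
  · intro H
    have hβanti : StrictAnti β := by
      intro i j hij
      have hij' : (i : ℕ) < (j : ℕ) := hij
      rw [hβ i, hβ j]
      rcases Nat.lt_or_ge (i : ℕ) d with hi1 | hi1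
      · rw [if_pos hi1]
        have hHi := H _ hi1
        rcases Nat.lt_or_ge (j : ℕ) d with hj1 | hj1
        · rw [if_pos hj1]
          have := hanti (le_of_lt hij')
          omega
        · rw [if_neg (show ¬ ((j : ℕ) < d) by omega)]
          rcases Nat.lt_or_ge (j : ℕ) (d + m) with hj2 | hj2
          · rw [if_pos hj2]
            omega
          · rw [if_neg (show ¬ ((j : ℕ) < d + m) by omega)]
            have := hlamle ((j : ℕ) - m) (by omega)
            omega
      · rw [if_neg (show ¬ ((i : ℕ) < d) by omega),
          if_neg (show ¬ ((j : ℕ) < d) by omega)]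
        rcases Nat.lt_or_ge (i : ℕ) (d + m) with hi2 | hi2
        · rw [if_pos hi2]
          rcases Nat.lt_or_ge (j : ℕ) (d + m) with hj2 | hj2
          · rw [if_pos hj2]
            omega
          · rw [if_neg (show ¬ ((j : ℕ) < d + m) by omega)]
            have := hlamle ((j : ℕ) - m) (by omega)
            omega
        · rw [if_neg (show ¬ ((i : ℕ) < d + m) by omega),
            if_neg (show ¬ ((j : ℕ) < d + m) by omega)]
          have := hanti (show (i : ℕ) - m ≤ (j : ℕ) - m by omega)
          omega
    have hμ : ∀ i : Fin n, β i - ρ i =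
        if (i : ℕ) < d then (lam (i : ℕ) : ℤ) - (m : ℤ)
        else if (i : ℕ) < d + m then (d : ℤ)
        else (lam ((i : ℕ) - m) : ℤ) := by
      intro i
      rw [hβ i, hρ i]
      rcases Nat.lt_or_ge (i : ℕ) d with h1 | h1
      · rw [if_pos h1, if_pos h1]
        omega
      · rw [if_neg (show ¬ ((i : ℕ) < d) by omega), if_neg (show ¬ ((i : ℕ) < d) by omega)]
        rcases Nat.lt_or_ge (i : ℕ) (d + m) with h2 | h2
        · rw [if_pos h2, if_pos h2]
          omega
        · rw [if_neg (show ¬ ((i : ℕ) < d + m) by omega),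
            if_neg (show ¬ ((i : ℕ) < d + m) by omega)]
          ring
    refine ⟨⟨hβanti, ?_⟩, ?_, ?_, ?_, ?_, ?_⟩
    · -- the permutation
      have hσb : ∀ i : Fin n,
          (if (i : ℕ) < d then (i : ℕ) + m else if (i : ℕ) < d + m then (i : ℕ) - d else (i : ℕ)) < n := by
        intro i
        have := i.isLt
        split_ifs <;> omega
      have hσinj : Function.Injective (fun i : Fin n => (⟨_, hσb i⟩ : Fin n)) := by
        intro x y hxy
        have hval : (if (x : ℕ) < d then (x : ℕ) + m else if (x : ℕ) < d + m then (x : ℕ) - d else (x : ℕ))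
            = (if (y : ℕ) < d then (y : ℕ) + m else if (y : ℕ) < d + m then (y : ℕ) - d else (y : ℕ)) :=
          congrArg Fin.val hxy
        apply Fin.ext
        split_ifs at hval <;> omega
      refine ⟨Equiv.ofBijective _ (Finite.injective_iff_bijective.mp hσinj), ?_⟩
      intro i
      rw [hF, hβ i]
      have hv : (((Equiv.ofBijective _ (Finite.injective_iff_bijective.mp hσinj)) i : Fin n) : ℕ)
          = (if (i : ℕ) < d then (i : ℕ) + m else if (i : ℕ) < d + m then (i : ℕ) - d else (i : ℕ)) := rfl
      rw [hv]
      rcases Nat.lt_or_ge (i : ℕ) d with hi1 | hi1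
      · simp only [if_pos hi1]
        rw [if_neg (show ¬ ((i : ℕ) + m < m) by omega),
          show (i : ℕ) + m - m = (i : ℕ) by omega]
        omega
      · simp only [if_neg (show ¬ ((i : ℕ) < d) by omega)]
        rcases Nat.lt_or_ge (i : ℕ) (d + m) with hi2 | hi2
        · simp only [if_pos hi2]
          rw [if_pos (show (i : ℕ) - d < m by omega)]
        · simp only [if_neg (show ¬ ((i : ℕ) < d + m) by omega)]
          rw [if_neg (show ¬ ((i : ℕ) < m) by omega)]
          ring
    · -- part (iii): inversion count
      have hset : Finset.filter (fun p : Fin n × Fin n =>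
            p.1 < p.2 ∧ α p.1 + ρ p.1 < α p.2 + ρ p.2) Finset.univ
          = (Finset.univ.filter (fun i : Fin n => 0 ≤ (i : ℕ) ∧ (i : ℕ) < 0 + m)) ×ˢ
            (Finset.univ.filter (fun j : Fin n => m ≤ (j : ℕ) ∧ (j : ℕ) < m + d)) := by
        ext p
        simp only [Finset.mem_filter, Finset.mem_univ, true_and, Finset.mem_product]
        constructor
        · rintro ⟨hlt, hflt⟩
          have hlt' : (p.1 : ℕ) < (p.2 : ℕ) := hlt
          have h1 : (p.1 : ℕ) < m := by
            by_contra h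
            have := hfCC p.1 p.2 (by omega) hlt'
            omega
          have h2 : m ≤ (p.2 : ℕ) := by
            by_contra h
            have := hfAA p.1 p.2 (by omega) hlt'
            omega
          have h3 : (p.2 : ℕ) < m + d := by
            by_contra h
            have h4 := hfLow p.2 h2 (by omega)
            have h5 := (hfA p.1 h1).1
            omega
          exact ⟨⟨Nat.zero_le _, by omega⟩, h2, h3⟩
        · rintro ⟨⟨-, h1⟩, h2, h3⟩
          have h1' : (p.1 : ℕ) < m := by omega
          refine ⟨Fin.lt_def.mpr (by omega), ?_⟩
          have h4 := (hfA p.1 h1').2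
          have h5 := hfHigh H p.2 h2 (by omega)
          omega
      rw [hset, Finset.card_product,
        aux_card_interval n 0 m (by omega), aux_card_interval n m d (by omega)]
      ring
    · -- part (iv): nonnegativity
      intro i
      rw [hμ i]
      rcases Nat.lt_or_ge (i : ℕ) d with h1 | h1
      · rw [if_pos h1]
        have := H _ h1
        omega
      · rw [if_neg (show ¬ ((i : ℕ) < d) by omega)]
        rcases Nat.lt_or_ge (i : ℕ) (d + m) with h2 | h2
        · rw [if_pos h2]
          omega
        · rw [if_neg (show ¬ ((i : ℕ) < d + m) by omega)]
          omega
    · -- part (iv): antitone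
      intro i j hij
      have hij' : (i : ℕ) ≤ (j : ℕ) := hij
      rw [hμ i, hμ j]
      rcases Nat.lt_or_ge (i : ℕ) d with hi1 | hi1
      · rw [if_pos hi1]
        have h5 := H (d - 1) (by omega)
        have h6 := hanti (show (i : ℕ) ≤ d - 1 by omega)
        rcases Nat.lt_or_ge (j : ℕ) d with hj1 | hj1
        · rw [if_pos hj1]
          have := hanti hij'
          omega
        · rw [if_neg (show ¬ ((j : ℕ) < d) by omega)]
          rcases Nat.lt_or_ge (j : ℕ) (d + m) with hj2 | hj2
          · rw [if_pos hj2]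
            omega
          · rw [if_neg (show ¬ ((j : ℕ) < d + m) by omega)]
            have h7 := hanti (show d ≤ (j : ℕ) - m by omega)
            have h8 := hlamle d le_rfl
            omega
      · rw [if_neg (show ¬ ((i : ℕ) < d) by omega), if_neg (show ¬ ((j : ℕ) < d) by omega)]
        rcases Nat.lt_or_ge (i : ℕ) (d + m) with hi2 | hi2
        · rw [if_pos hi2]
          rcases Nat.lt_or_ge (j : ℕ) (d + m) with hj2 | hj2
          · rw [if_pos hj2]
          · rw [if_neg (show ¬ ((j : ℕ) < d + m) by omega)]
            have h7 := hanti (show d ≤ (j : ℕ) - m by omega)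
            have h8 := hlamle d le_rfl
            omega
        · rw [if_neg (show ¬ ((i : ℕ) < d + m) by omega),
            if_neg (show ¬ ((j : ℕ) < d + m) by omega)]
          have := hanti (show (i : ℕ) - m ≤ (j : ℕ) - m by omega)
          omega
    · -- part (iv): rank
      have hsetc : {i : Fin n | ((i : ℕ) : ℤ) + 1 ≤ β i - ρ i}
          = ↑(Finset.univ.filter (fun i : Fin n => 0 ≤ (i : ℕ) ∧ (i : ℕ) < 0 + d)) := by
        ext i
        simp only [Set.mem_setOf_eq, Finset.coe_filter, Finset.mem_univ, true_and,
          Set.mem_setOf_eq]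
        rw [hμ i]
        rcases Nat.lt_or_ge (i : ℕ) d with h1 | h1
        · rw [if_pos h1]
          have := H _ h1
          omega
        · rw [if_neg (show ¬ ((i : ℕ) < d) by omega)]
          rcases Nat.lt_or_ge (i : ℕ) (d + m) with h2 | h2
          · rw [if_pos h2]
            omega
          · rw [if_neg (show ¬ ((i : ℕ) < d + m) by omega)]
            have h7 := hanti (show d ≤ (i : ℕ) - m by omega)
            have h8 := hlamle d le_rfl
            omega
      rw [hsetc, Set.ncard_coe_finset, aux_card_interval n 0 d (by omega)]
    · -- part (iv): Frobenius coordinates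
      intro t ht
      refine ⟨?_, ?_⟩
      · rw [hμ t, if_pos ht]
        omega
      · have hdisj : Disjoint
            (Finset.univ.filter (fun j : Fin n => 0 ≤ (j : ℕ) ∧ (j : ℕ) < 0 + (d + m)))
            (Finset.univ.filter (fun j : Fin n =>
              d + m ≤ (j : ℕ) ∧ (t : ℕ) + 1 ≤ lam ((j : ℕ) - m))) := by
          rw [Finset.disjoint_left]
          intro x hx hx2
          simp only [Finset.mem_filter] at hx hx2
          omega
        have hL : {j : Fin n | ((t : ℕ) : ℤ) + 1 ≤ β j - ρ j}
            = ↑((Finset.univ.filter (fun j : Fin n => 0 ≤ (j : ℕ) ∧ (j : ℕ) < 0 + (d + m))) ∪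
                (Finset.univ.filter (fun j : Fin n =>
                  d + m ≤ (j : ℕ) ∧ (t : ℕ) + 1 ≤ lam ((j : ℕ) - m)))) := by
          ext j
          simp only [Set.mem_setOf_eq, Finset.coe_union, Set.mem_union, Finset.coe_filter,
            Finset.mem_univ, true_and, Set.mem_setOf_eq]
          rw [hμ j]
          rcases Nat.lt_or_ge (j : ℕ) d with h1 | h1
          · rw [if_pos h1]
            have h5 := H (d - 1) (by omega)
            have h6 := hanti (show (j : ℕ) ≤ d - 1 by omega)
            omega
          · rw [if_neg (show ¬ ((j : ℕ) < d) by omega)]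
            rcases Nat.lt_or_ge (j : ℕ) (d + m) with h2 | h2
            · rw [if_pos h2]
              omega
            · rw [if_neg (show ¬ ((j : ℕ) < d + m) by omega)]
              omega
        have hRs : {j : ℕ | (t : ℕ) + 1 ≤ lam j}
            = ↑((Finset.range k).filter (fun j => (t : ℕ) + 1 ≤ lam j)) := by
          ext j
          simp only [Set.mem_setOf_eq, Finset.coe_filter, Finset.mem_range, Set.mem_setOf_eq]
          constructor
          · intro hj
            refine ⟨?_, hj⟩
            by_contra hjk
            have := hlen j (by omega)
            omega
          · exact fun h => h.2
        have hc2 : (Finset.univ.filter (fun j : Fin n =>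
              d + m ≤ (j : ℕ) ∧ (t : ℕ) + 1 ≤ lam ((j : ℕ) - m))).card
            = ((Finset.Ico d k).filter (fun j' => (t : ℕ) + 1 ≤ lam j')).card := by
          exact Finset.card_bij'
            (s := Finset.univ.filter (fun j : Fin n =>
              d + m ≤ (j : ℕ) ∧ (t : ℕ) + 1 ≤ lam ((j : ℕ) - m)))
            (t := (Finset.Ico d k).filter (fun j' => (t : ℕ) + 1 ≤ lam j'))
            (i := fun x _ => (x : ℕ) - m)
            (j := fun y hy => (⟨y + m, by
              have hy' := (Finset.mem_filter.mp hy).1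
              rw [Finset.mem_Ico] at hy'
              omega⟩ : Fin n))
            (fun x hx => by
              have hx' := (Finset.mem_filter.mp hx).2
              have hxn := x.isLt
              simp only [Finset.mem_filter, Finset.mem_Ico]
              exact ⟨⟨by omega, by omega⟩, hx'.2⟩)
            (fun y hy => by
              have hy1 := (Finset.mem_filter.mp hy).1
              have hy2 := (Finset.mem_filter.mp hy).2
              rw [Finset.mem_Ico] at hy1
              simp only [Finset.mem_filter, Finset.mem_univ, true_and]
              refine ⟨by omega, ?_⟩
              show (t : ℕ) + 1 ≤ lam (y + m - m)
              rw [show y + m - m = y by omega]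
              exact hy2)
            (fun x hx => by
              have hx' := (Finset.mem_filter.mp hx).2
              apply Fin.ext
              show (x : ℕ) - m + m = (x : ℕ)
              omega)
            (fun y hy => by
              show y + m - m = y
              omega)
        have hsplit : Finset.range k = Finset.range d ∪ Finset.Ico d k := by
          ext x
          simp only [Finset.mem_range, Finset.mem_union, Finset.mem_Ico]
          omega
        have hdisj2 : Disjoint ((Finset.range d).filter (fun j => (t : ℕ) + 1 ≤ lam j))
            ((Finset.Ico d k).filter (fun j => (t : ℕ) + 1 ≤ lam j)) := by
          apply Finset.disjoint_filter_filter
          rw [Finset.range_eq_Ico]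
          exact Finset.Ico_disjoint_Ico_consecutive 0 d k
        have hfull : (Finset.range d).filter (fun j => (t : ℕ) + 1 ≤ lam j)
            = Finset.range d := by
          apply Finset.filter_true_of_mem
          intro j hj
          rw [Finset.mem_range] at hj
          have h5 := H (d - 1) (by omega)
          have h6 := hanti (show j ≤ d - 1 by omega)
          omega
        rw [hL, Set.ncard_coe_finset, Finset.card_union_of_disjoint hdisj,
          aux_card_interval n 0 (d + m) (by omega), hc2, hRs, Set.ncard_coe_finset,
          hsplit, Finset.filter_union, Finset.card_union_of_disjoint hdisj2, hfull,
          Finset.card_range]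
        omega
end

section
/- Fix an integer r ≥ 1 and a subset I = {j₁ < j₂ < ⋯ < j_k} of {2, …, r}. Define J ∈ ℤ^r by J_i = 2i−2 if i ∈ I and J_i = 0 otherwise, and let ρ = (r−1, r−2, …, 1, 0). Then: (i) the tuple (j_k−2, j_{k−1}−2, …, j₁−2 | j_k−1, j_{k−1}−1, …, j₁−1) gives the Frobenius coordinates of a well-defined partition μ lying in Q₋₁; (ii) the entries of J + ρ are pairwise distinct; (iii) the decreasing rearrangement of J + ρ equals μ + ρ, where μ is padded with zeros to length r; (iv) the number of inversions of J + ρ, i.e. the number of pairs i < j with (J+ρ)_i < (J+ρ)_j, equals |μ|/2 = Σ_{t=1}^{k}(j_t − 1); and (v) the assignment I ↦ μ is a bijection from the set of subsets of {2, …, r} onto the set of partitions in Q₋₁ with at most r nonzero parts. -/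
/-- A partition: an antitone, eventually zero function `ℕ → ℕ` (0-indexed:
`μ 0` is the first part). -/
def IsPartition (μ : ℕ → ℕ) : Prop := Antitone μ ∧ ∃ N, ∀ i, N ≤ i → μ i = 0

/-- The transpose of `μ`, 0-indexed: `conjP μ t = μᵀ_{t+1} = #{j | μ_j ≥ t+1}`. -/
noncomputable def conjP (μ : ℕ → ℕ) (t : ℕ) : ℕ := Set.ncard {j | t + 1 ≤ μ j}

/-- The rank of `μ`: the number of diagonal boxes. -/
noncomputable def rankP (μ : ℕ → ℕ) : ℕ := Set.ncard {i | i + 1 ≤ μ i}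

/-- `μ ∈ Q_c`: all Frobenius coordinates satisfy `a_t - b_t = c`, i.e.
`μ t - conjP μ t = c` for every `t < rankP μ`. -/
noncomputable def memQ (c : ℤ) (μ : ℕ → ℕ) : Prop :=
  ∀ t, t < rankP μ → (μ t : ℤ) - (conjP μ t : ℤ) = c

/-- `μ` is the partition whose Frobenius coordinates are
`(j_k - 2, …, j_1 - 2 | j_k - 1, …, j_1 - 1)` where `I = {j_1 < ⋯ < j_k}`:
it lies in `Q₋₁`, has rank `|I|`, and its arms (plus 2) enumerate `I`. -/
noncomputable def frobOf (I : Finset ℕ) (μ : ℕ → ℕ) : Prop :=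
  IsPartition μ ∧ memQ (-1) μ ∧ rankP μ = I.card ∧
    ∀ t, t < rankP μ → μ t + 1 - t ∈ I

open Finset

/-- A downward closed finite set of naturals is an initial segment. -/
lemma dcl_eq_Iio (S : Set ℕ) (hS : S.Finite)
    (hdc : ∀ a b : ℕ, a ≤ b → b ∈ S → a ∈ S) : S = Set.Iio S.ncard := by
  ext x
  constructor
  · intro hx
    have h1 : Set.Iic x ⊆ S := fun y hy => hdc y x hy hx
    have h2 : (Set.Iic x).ncard ≤ S.ncard := Set.ncard_le_ncard h1 hS
    have h3 : (Set.Iic x).ncard = x + 1 := by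
      rw [← Finset.coe_Iic, Set.ncard_coe_finset, Nat.card_Iic]
    simpa [Set.mem_Iio] using lt_of_lt_of_le (by omega : x < x + 1) (h3 ▸ h2)
  · intro hx
    by_contra hxS
    have h1 : S ⊆ Set.Iio x := by
      intro y hy
      simp only [Set.mem_Iio]
      by_contra hy2
      exact hxS (hdc x y (by omega) hy)
    have h2 : S.ncard ≤ (Set.Iio x).ncard :=
      Set.ncard_le_ncard h1 (Set.finite_Iio x)
    have h3 : (Set.Iio x).ncard = x := by
      rw [← Finset.coe_range, Set.ncard_coe_finset, Finset.card_range]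
    simp only [Set.mem_Iio] at hx
    omega

lemma ncard_eq_card_filter (P : ℕ → Prop) [DecidablePred P] (N : ℕ)
    (h : ∀ j, P j → j < N) :
    Set.ncard {j | P j} = ((Finset.range N).filter P).card := by
  rw [← Set.ncard_coe_finset]
  congr 1
  ext j
  simp only [Finset.coe_filter, Finset.mem_range, Set.mem_setOf_eq]
  exact ⟨fun hj => ⟨h j hj, hj⟩, fun hj => hj.2⟩

/-- Galois property of the conjugate. -/
lemma lt_conjP_iff (μ : ℕ → ℕ) (hμ : IsPartition μ) (c j : ℕ) :
    j < conjP μ c ↔ c + 1 ≤ μ j := by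
  obtain ⟨hmono, N, hN⟩ := hμ
  have hfin : {j | c + 1 ≤ μ j}.Finite := by
    apply Set.Finite.subset (Set.finite_Iio N)
    intro x hx
    simp only [Set.mem_setOf_eq] at hx
    simp only [Set.mem_Iio]
    by_contra h
    have := hN x (by omega)
    omega
  have hdc : ∀ a b : ℕ, a ≤ b → b ∈ {j | c + 1 ≤ μ j} → a ∈ {j | c + 1 ≤ μ j} :=
    fun a b hab hb => le_trans hb (hmono hab)
  have h := Set.ext_iff.mp (dcl_eq_Iio _ hfin hdc) j
  simp only [Set.mem_setOf_eq, Set.mem_Iio] at h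
  rw [conjP]
  omega

/-- Double conjugate. -/
lemma conjP_conjP (μ : ℕ → ℕ) (hμ : IsPartition μ) (s : ℕ) :
    conjP (conjP μ) s = μ s := by
  have : {c | s + 1 ≤ conjP μ c} = Set.Iio (μ s) := by
    ext c
    simp only [Set.mem_setOf_eq, Set.mem_Iio]
    rw [show s + 1 ≤ conjP μ c ↔ s < conjP μ c from Iff.rfl,
      lt_conjP_iff μ hμ c s]
    omega
  rw [conjP, this, ← Finset.coe_range, Set.ncard_coe_finset, Finset.card_range]

/-- Rank characterization: `t < rankP μ ↔ μ t ≥ t + 1`. -/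
lemma lt_rankP_iff (μ : ℕ → ℕ) (hμ : IsPartition μ) (t : ℕ) :
    t < rankP μ ↔ t + 1 ≤ μ t := by
  obtain ⟨hmono, N, hN⟩ := hμ
  have hfin : {i | i + 1 ≤ μ i}.Finite := by
    apply Set.Finite.subset (Set.finite_Iio N)
    intro x hx
    simp only [Set.mem_setOf_eq] at hx
    simp only [Set.mem_Iio]
    by_contra h
    have := hN x (by omega)
    omega
  have hdc : ∀ a b : ℕ, a ≤ b → b ∈ {i | i + 1 ≤ μ i} → a ∈ {i | i + 1 ≤ μ i} := by
    intro a b hab hb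
    simp only [Set.mem_setOf_eq] at *
    have := hmono hab
    omega
  have h := dcl_eq_Iio _ hfin hdc
  have := Set.ext_iff.mp h t
  simp only [Set.mem_setOf_eq, Set.mem_Iio] at this
  rw [rankP]
  omega

section Enum

variable (s : Finset ℕ)

/-- `t`-th largest element of `s` (0-indexed), or `0` out of range. -/
noncomputable def nthD (t : ℕ) : ℕ :=
  if h : t < s.card then s.orderEmbOfFin rfl ⟨s.card - 1 - t, by omega⟩ else 0

/-- `t`-th smallest element of `s` (0-indexed), or `0` out of range. -/
noncomputable def nthA (t : ℕ) : ℕ :=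
  if h : t < s.card then s.orderEmbOfFin rfl ⟨t, h⟩ else 0

lemma univ_image_orderEmbOfFin :
    Finset.univ.image (s.orderEmbOfFin rfl) = s := by
  ext x
  simp only [Finset.mem_image, Finset.mem_univ, true_and]
  constructor
  · rintro ⟨i, rfl⟩; exact s.orderEmbOfFin_mem rfl i
  · intro hx
    have : x ∈ Set.range (s.orderEmbOfFin rfl) := by
      rw [Finset.range_orderEmbOfFin]; exact hx
    exact this

lemma card_filter_eq_card_filter_fin (p : ℕ → Prop) [DecidablePred p] :
    (s.filter p).card
      = (Finset.univ.filter (fun i : Fin s.card => p (s.orderEmbOfFin rfl i))).card := by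
  conv_lhs => rw [← univ_image_orderEmbOfFin s]
  rw [Finset.filter_image, Finset.card_image_of_injective _
    (s.orderEmbOfFin rfl).injective]

lemma card_filter_fin_nat (k : ℕ) (p : ℕ → Prop) [DecidablePred p] :
    (Finset.univ.filter (fun i : Fin k => p (i : ℕ))).card
      = ((Finset.range k).filter p).card := by
  rw [← Finset.card_image_of_injective _ Fin.val_injective]
  congr 1
  ext x
  simp only [Finset.mem_image, Finset.mem_filter, Finset.mem_univ, true_and,
    Finset.mem_range]
  constructor
  · rintro ⟨i, hi, rfl⟩; exact ⟨i.isLt, hi⟩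
  · rintro ⟨hx, hp⟩; exact ⟨⟨x, hx⟩, hp, rfl⟩
end Enum

lemma card_range_filter_le (k a : ℕ) :
    ((Finset.range k).filter (fun x => a ≤ x)).card = k - a := by
  have h : (Finset.range k).filter (fun x => a ≤ x) = Finset.Ico a k := by
    ext x; simp only [Finset.mem_filter, Finset.mem_range, Finset.mem_Ico]; omega
  rw [h, Nat.card_Ico]

lemma card_range_filter_lt (k a : ℕ) :
    ((Finset.range k).filter (fun x => a < x)).card = k - (a + 1) := by
  have h : (Finset.range k).filter (fun x => a < x) = Finset.Ico (a+1) k := by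
    ext x; simp only [Finset.mem_filter, Finset.mem_range, Finset.mem_Ico]; omega
  rw [h, Nat.card_Ico]

lemma card_range_filter_le' (k a : ℕ) (h : a < k) :
    ((Finset.range k).filter (fun x => x ≤ a)).card = a + 1 := by
  have h2 : (Finset.range k).filter (fun x => x ≤ a) = Finset.Icc 0 a := by
    ext x; simp only [Finset.mem_filter, Finset.mem_range, Finset.mem_Icc]; omega
  rw [h2, Nat.card_Icc]; omega

lemma card_range_filter_lt' (k a : ℕ) (h : a ≤ k) :
    ((Finset.range k).filter (fun x => x < a)).card = a := by
  have h2 : (Finset.range k).filter (fun x => x < a) = Finset.range a := by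
    ext x; simp only [Finset.mem_filter, Finset.mem_range]; omega
  rw [h2, Finset.card_range]

lemma nthD_mem (s : Finset ℕ) {t : ℕ} (ht : t < s.card) : nthD s t ∈ s := by
  rw [nthD, dif_pos ht]; exact s.orderEmbOfFin_mem rfl _

lemma nthA_mem (s : Finset ℕ) {t : ℕ} (ht : t < s.card) : nthA s t ∈ s := by
  rw [nthA, dif_pos ht]; exact s.orderEmbOfFin_mem rfl _

lemma nthD_strictAnti (s : Finset ℕ) {t u : ℕ} (htu : t < u) (hu : u < s.card) :
    nthD s u < nthD s t := by
  rw [nthD, dif_pos hu, nthD, dif_pos (lt_trans htu hu)]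
  apply (s.orderEmbOfFin rfl).strictMono
  simp only [Fin.mk_lt_mk]
  omega

lemma nthA_strictMono (s : Finset ℕ) {t u : ℕ} (htu : t < u) (hu : u < s.card) :
    nthA s t < nthA s u := by
  rw [nthA, dif_pos (lt_trans htu hu), nthA, dif_pos hu]
  apply (s.orderEmbOfFin rfl).strictMono
  simp only [Fin.mk_lt_mk]
  omega

lemma nthD_threshold (s : Finset ℕ) {t : ℕ} (ht : t < s.card) (x : ℕ) :
    x < nthD s t ↔ t + 1 ≤ (s.filter (fun y => x < y)).card := by
  rw [nthD, dif_pos ht, card_filter_eq_card_filter_fin]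
  constructor
  · intro hx
    have hsub : Finset.univ.filter (fun i : Fin s.card => s.card - 1 - t ≤ (i : ℕ)) ⊆
        Finset.univ.filter (fun i : Fin s.card => x < s.orderEmbOfFin rfl i) := by
      intro i hi
      simp only [Finset.mem_filter, Finset.mem_univ, true_and] at hi ⊢
      refine lt_of_lt_of_le hx ((s.orderEmbOfFin rfl).monotone ?_)
      rw [Fin.le_def]
      simpa using hi
    have h2 := Finset.card_le_card hsub
    rw [card_filter_fin_nat, card_range_filter_le] at h2
    exact le_trans (by omega) h2
  · intro h
    by_contra hx
    push_neg at hx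
    have hsub : Finset.univ.filter (fun i : Fin s.card => x < s.orderEmbOfFin rfl i) ⊆
        Finset.univ.filter (fun i : Fin s.card => s.card - 1 - t < (i : ℕ)) := by
      intro i hi
      simp only [Finset.mem_filter, Finset.mem_univ, true_and] at hi ⊢
      by_contra hle
      push_neg at hle
      have h3 : s.orderEmbOfFin rfl i ≤ s.orderEmbOfFin rfl ⟨s.card - 1 - t, by omega⟩ :=
        (s.orderEmbOfFin rfl).monotone (by rw [Fin.le_def]; simpa using hle)
      omega
    have h2 := Finset.card_le_card hsub
    rw [card_filter_fin_nat, card_range_filter_lt] at h2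
    omega

lemma nthA_threshold (s : Finset ℕ) {t : ℕ} (ht : t < s.card) (x : ℕ) :
    nthA s t ≤ x ↔ t + 1 ≤ (s.filter (fun y => y ≤ x)).card := by
  rw [nthA, dif_pos ht, card_filter_eq_card_filter_fin]
  constructor
  · intro hx
    have hsub : Finset.univ.filter (fun i : Fin s.card => (i : ℕ) ≤ t) ⊆
        Finset.univ.filter (fun i : Fin s.card => s.orderEmbOfFin rfl i ≤ x) := by
      intro i hi
      simp only [Finset.mem_filter, Finset.mem_univ, true_and] at hi ⊢
      refine le_trans ((s.orderEmbOfFin rfl).monotone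
        (show i ≤ ⟨t, ht⟩ by rw [Fin.le_def]; simpa using hi)) hx
    have h2 := Finset.card_le_card hsub
    have h4 := card_filter_fin_nat s.card (fun y => y ≤ t)
    rw [h4, card_range_filter_le' _ _ ht] at h2
    omega
  · intro h
    by_contra hx
    push_neg at hx
    have hsub : Finset.univ.filter (fun i : Fin s.card => s.orderEmbOfFin rfl i ≤ x) ⊆
        Finset.univ.filter (fun i : Fin s.card => (i : ℕ) < t) := by
      intro i hi
      simp only [Finset.mem_filter, Finset.mem_univ, true_and] at hi ⊢
      by_contra hle
      push_neg at hle
      have h3 : s.orderEmbOfFin rfl ⟨t, ht⟩ ≤ s.orderEmbOfFin rfl i :=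
        (s.orderEmbOfFin rfl).monotone (by rw [Fin.le_def]; simpa using hle)
      omega
    have h2 := Finset.card_le_card hsub
    have h4 := card_filter_fin_nat s.card (fun y => y < t)
    rw [h4, card_range_filter_lt' _ _ (le_of_lt ht)] at h2
    omega

lemma image_nthD (s : Finset ℕ) : (Finset.range s.card).image (nthD s) = s := by
  have hinj : Set.InjOn (nthD s) ↑(Finset.range s.card) := by
    intro a ha b hb hab
    simp only [Finset.coe_range, Set.mem_Iio] at ha hb
    by_contra hne
    rcases Nat.lt_or_ge a b with h | h
    · have := nthD_strictAnti s h hb; omega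
    · have := nthD_strictAnti s (by omega : b < a) ha; omega
  apply Finset.eq_of_subset_of_card_le
  · intro x hx
    simp only [Finset.mem_image, Finset.mem_range] at hx
    obtain ⟨t, ht, rfl⟩ := hx
    exact nthD_mem s ht
  · rw [Finset.card_image_of_injOn hinj, Finset.card_range]

lemma image_nthA (s : Finset ℕ) : (Finset.range s.card).image (nthA s) = s := by
  have hinj : Set.InjOn (nthA s) ↑(Finset.range s.card) := by
    intro a ha b hb hab
    simp only [Finset.coe_range, Set.mem_Iio] at ha hb
    by_contra hne
    rcases Nat.lt_or_ge a b with h | h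
    · have := nthA_strictMono s h hb; omega
    · have := nthA_strictMono s (by omega : b < a) ha; omega
  apply Finset.eq_of_subset_of_card_le
  · intro x hx
    simp only [Finset.mem_image, Finset.mem_range] at hx
    obtain ⟨t, ht, rfl⟩ := hx
    exact nthA_mem s ht
  · rw [Finset.card_image_of_injOn hinj, Finset.card_range]

section Main

/-- complement of `I` in `[1, r]`. -/
def CC (r : ℕ) (I : Finset ℕ) : Finset ℕ := (Finset.Icc 1 r) \ I

/-- the candidate partition. -/
noncomputable def muI (r : ℕ) (I : Finset ℕ) (s : ℕ) : ℕ :=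
  if s < I.card then nthD I s + s - 1
  else if s < r then s + 1 - nthA (CC r I) (s - I.card)
  else 0

variable {r : ℕ} {I : Finset ℕ}

lemma k_lt_r (hr : 1 ≤ r) (hI : I ⊆ Finset.Icc 2 r) : I.card < r := by
  have := Finset.card_le_card hI
  rw [Nat.card_Icc] at this
  omega

lemma I_subset_Icc1 (hI : I ⊆ Finset.Icc 2 r) : I ⊆ Finset.Icc 1 r := by
  intro x hx
  have := hI hx
  simp only [Finset.mem_Icc] at *
  omega

lemma cardCC (hI : I ⊆ Finset.Icc 2 r) : (CC r I).card = r - I.card := by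
  rw [CC, Finset.card_sdiff_of_subset (I_subset_Icc1 hI), Nat.card_Icc]
  omega

lemma dd_two_le (hI : I ⊆ Finset.Icc 2 r) {t : ℕ} (ht : t < I.card) :
    2 ≤ nthD I t ∧ nthD I t ≤ r := by
  have := hI (nthD_mem I ht)
  simp only [Finset.mem_Icc] at this
  exact this

lemma dd_le_sub (hI : I ⊆ Finset.Icc 2 r) {t : ℕ} (ht : t < I.card) :
    nthD I t + t ≤ r := by
  by_contra h
  push_neg at h
  have h0 := dd_two_le hI ht
  have h2 := (nthD_threshold I ht (r - t)).mp (by omega)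
  have h3 : I.filter (fun y => r - t < y) ⊆ Finset.Icc (r - t + 1) r := by
    intro y hy
    simp only [Finset.mem_filter, Finset.mem_Icc] at hy ⊢
    have := hI hy.1
    simp only [Finset.mem_Icc] at this
    omega
  have h4 := Finset.card_le_card h3
  rw [Nat.card_Icc] at h4
  have htr : t < r := lt_of_lt_of_le ht (by have := Finset.card_le_card hI; rw [Nat.card_Icc] at this; omega)
  omega

lemma dd_add_mono (hI : I ⊆ Finset.Icc 2 r) :
    ∀ u t, t ≤ u → u < I.card → nthD I u + u ≤ nthD I t + t := by
  intro u
  induction u with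
  | zero => intro t ht _; interval_cases t; omega
  | succ n ih =>
    intro t ht hn
    rcases Nat.lt_or_ge t (n + 1) with h | h
    · have h1 := nthD_strictAnti I (by omega : n < n + 1) hn
      have h2 := ih t (by omega) (by omega)
      omega
    · have : t = n + 1 := by omega
      subst this
      omega

lemma dd_ge (hI : I ⊆ Finset.Icc 2 r) {t : ℕ} (ht : t < I.card) :
    I.card + 1 ≤ nthD I t + t := by
  have h1 := dd_add_mono hI (I.card - 1) t (by omega) (by omega)
  have h2 := (dd_two_le hI (show I.card - 1 < I.card by omega)).1
  omega

lemma ee_mem_CC (hI : I ⊆ Finset.Icc 2 r) {t : ℕ} (ht : t < r - I.card) :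
    1 ≤ nthA (CC r I) t ∧ nthA (CC r I) t ≤ r ∧ nthA (CC r I) t ∉ I := by
  have ht' : t < (CC r I).card := by rw [cardCC hI]; omega
  have := nthA_mem (CC r I) ht'
  rw [CC, Finset.mem_sdiff, Finset.mem_Icc] at this
  exact ⟨this.1.1, this.1.2, this.2⟩

lemma cardCC_filter_add (hI : I ⊆ Finset.Icc 2 r) (p : ℕ → Prop) [DecidablePred p] :
    ((CC r I).filter p).card + (I.filter p).card = ((Finset.Icc 1 r).filter p).card := by
  have h1 : (CC r I).filter p = ((Finset.Icc 1 r).filter p) \ (I.filter p) := by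
    ext y
    simp only [CC, Finset.mem_filter, Finset.mem_sdiff]
    tauto
  have h2 : I.filter p ⊆ (Finset.Icc 1 r).filter p :=
    Finset.filter_subset_filter p (I_subset_Icc1 hI)
  rw [h1, Finset.card_sdiff_of_subset h2]
  have := Finset.card_le_card h2
  omega

lemma cardIcc_filter_le (r x : ℕ) :
    ((Finset.Icc 1 r).filter (fun y => y ≤ x)).card = min x r := by
  have h : (Finset.Icc 1 r).filter (fun y => y ≤ x) = Finset.Icc 1 (min x r) := by
    ext y
    simp only [Finset.mem_filter, Finset.mem_Icc]
    omega
  rw [h, Nat.card_Icc]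
  omega

lemma cardI_filter_split (I : Finset ℕ) (x : ℕ) :
    (I.filter (fun y => y ≤ x)).card + (I.filter (fun y => x < y)).card = I.card := by
  have h1 := Finset.card_filter_add_card_filter_not (s := I) (p := fun y => y ≤ x)
  have h2 : I.filter (fun a => ¬ a ≤ x) = I.filter (fun y => x < y) := by
    apply Finset.filter_congr
    intro y _
    simp only [not_le, eq_iff_iff]
  rw [h2] at h1
  exact h1

end Main

section Main2

variable {r : ℕ} {I : Finset ℕ}

lemma ee_threshold' (hI : I ⊆ Finset.Icc 2 r) {t : ℕ} (ht : t < r - I.card) (x : ℕ) :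
    nthA (CC r I) t ≤ x ↔ t + 1 ≤ ((CC r I).filter (fun y => y ≤ x)).card :=
  nthA_threshold (CC r I) (by rw [cardCC hI]; omega) x

lemma ee_le (hI : I ⊆ Finset.Icc 2 r) {t : ℕ} (ht : t < r - I.card) :
    nthA (CC r I) t ≤ t + I.card + 1 := by
  rw [ee_threshold' hI ht]
  have h1 := cardCC_filter_add hI (fun y => y ≤ t + I.card + 1)
  have h2 := cardIcc_filter_le r (t + I.card + 1)
  have h3 := cardI_filter_split I (t + I.card + 1)
  have h4 : (I.filter (fun y => y ≤ t + I.card + 1)).card ≤ I.card :=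
    Finset.card_le_card (Finset.filter_subset _ _)
  omega

lemma muI_low {s : ℕ} (hs : s < I.card) : muI r I s = nthD I s + s - 1 := by
  rw [muI, if_pos hs]

lemma muI_mid {s : ℕ} (hk : I.card ≤ s) (hs : s < r) :
    muI r I s = s + 1 - nthA (CC r I) (s - I.card) := by
  rw [muI, if_neg (by omega), if_pos hs]

lemma muI_high {s : ℕ} (hs : r ≤ s) (hkr : I.card < r) : muI r I s = 0 := by
  rw [muI, if_neg (by omega), if_neg (by omega)]

lemma card_Ico_filter_shift (a b : ℕ) (p : ℕ → Prop) [DecidablePred p] :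
    ((Finset.Ico a b).filter p).card
      = ((Finset.range (b - a)).filter (fun m => p (m + a))).card := by
  have h : Finset.Ico a b = (Finset.range (b - a)).image (fun m => m + a) := by
    ext y
    simp only [Finset.mem_Ico, Finset.mem_image, Finset.mem_range]
    constructor
    · intro hy; exact ⟨y - a, by omega, by omega⟩
    · rintro ⟨m, hm, rfl⟩; omega
  rw [h, Finset.filter_image, Finset.card_image_of_injective _ (add_left_injective a)]

lemma range_filter_card_split (k r : ℕ) (hkr : k ≤ r) (p : ℕ → Prop) [DecidablePred p] :
    ((Finset.range r).filter p).card
      = ((Finset.range k).filter p).card + ((Finset.Ico k r).filter p).card := by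
  have h : Finset.range r = Finset.range k ∪ Finset.Ico k r := by
    ext y
    simp only [Finset.mem_union, Finset.mem_range, Finset.mem_Ico]
    omega
  rw [h, Finset.filter_union, Finset.card_union_of_disjoint]
  apply Finset.disjoint_filter_filter
  rw [Finset.disjoint_left]
  intro y hy hy2
  simp only [Finset.mem_range, Finset.mem_Ico] at *
  omega

lemma conjP_muI (hr : 1 ≤ r) (hI : I ⊆ Finset.Icc 2 r) {t : ℕ} (ht : t < I.card) :
    conjP (muI r I) t = nthD I t + t := by
  have hkr := k_lt_r hr hI
  rw [conjP, ncard_eq_card_filter _ r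
    (fun j hj => by by_contra h; push_neg at h; rw [muI_high h hkr] at hj; omega)]
  rw [range_filter_card_split I.card r (by omega)]
  have hlow : (Finset.range I.card).filter (fun j => t + 1 ≤ muI r I j)
      = Finset.range I.card := by
    apply Finset.filter_true_of_mem
    intro j hj
    simp only [Finset.mem_range] at hj
    rw [muI_low hj]
    have := dd_ge hI hj
    omega
  rw [hlow, Finset.card_range, card_Ico_filter_shift]
  have hmid : ∀ m ∈ Finset.range (r - I.card),
      (t + 1 ≤ muI r I (m + I.card)) ↔ (m + I.card < nthD I t + t) := by
    intro m hm
    simp only [Finset.mem_range] at hm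
    rw [muI_mid (by omega) (by omega)]
    have h0 : m + I.card - I.card = m := by omega
    rw [h0]
    have h1 := ee_le hI hm
    have h2 := (ee_mem_CC hI hm).1
    have heq : (nthA (CC r I) m ≤ m + I.card - t) ↔ (m + I.card - t < nthD I t) := by
      rw [ee_threshold' hI hm, nthD_threshold I ht]
      have h3 := cardCC_filter_add hI (fun y => y ≤ m + I.card - t)
      have h4 := cardIcc_filter_le r (m + I.card - t)
      have h5 := cardI_filter_split I (m + I.card - t)
      have h6 : (I.filter (fun y => y ≤ m + I.card - t)).card ≤ I.card :=
        Finset.card_le_card (Finset.filter_subset _ _)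
      omega
    have h7 := dd_ge hI ht
    omega
  rw [Finset.filter_congr hmid]
  have h8 : ((Finset.range (r - I.card)).filter
      (fun m => m + I.card < nthD I t + t)).card = nthD I t + t - I.card := by
    have h9 : (Finset.range (r - I.card)).filter (fun m => m + I.card < nthD I t + t)
        = (Finset.range (r - I.card)).filter (fun m => m < nthD I t + t - I.card) := by
      apply Finset.filter_congr
      intro m _
      have := dd_ge hI ht
      omega
    rw [h9, card_range_filter_lt']
    have := dd_le_sub hI ht
    omega
  rw [h8]
  have := dd_ge hI ht
  omega

end Main2

section Main3

variable {r : ℕ} {I : Finset ℕ}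

lemma muI_antitone (hr : 1 ≤ r) (hI : I ⊆ Finset.Icc 2 r) : Antitone (muI r I) := by
  have hkr := k_lt_r hr hI
  apply antitone_nat_of_succ_le
  intro s
  rcases Nat.lt_or_ge (s + 1) I.card with h1 | h1
  · rw [muI_low h1, muI_low (by omega)]
    have := nthD_strictAnti I (by omega : s < s + 1) h1
    omega
  rcases Nat.lt_or_ge s I.card with h2 | h2
  · -- s = I.card - 1, s + 1 = I.card
    have hs1 : s + 1 = I.card := by omega
    rw [muI_low h2, muI_mid (by omega) (by omega)]
    have h3 := dd_ge hI h2
    have h4 := (ee_mem_CC hI (show s + 1 - I.card < r - I.card by omega)).1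
    omega
  rcases Nat.lt_or_ge (s + 1) r with h3 | h3
  · rw [muI_mid h2 (by omega), muI_mid (by omega) h3]
    have h4 := nthA_strictMono (CC r I) (show s - I.card < s + 1 - I.card by omega)
      (by rw [cardCC hI]; omega)
    have h5 := ee_le hI (show s - I.card < r - I.card by omega)
    have h6 := (ee_mem_CC hI (show s - I.card < r - I.card by omega)).1
    omega
  · rw [muI_high (by omega) hkr]
    omega

lemma muI_partition (hr : 1 ≤ r) (hI : I ⊆ Finset.Icc 2 r) : IsPartition (muI r I) :=
  ⟨muI_antitone hr hI, r, fun i hi => muI_high hi (k_lt_r hr hI)⟩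

lemma rankP_muI (hr : 1 ≤ r) (hI : I ⊆ Finset.Icc 2 r) : rankP (muI r I) = I.card := by
  have hkr := k_lt_r hr hI
  have h : ∀ t, t < rankP (muI r I) ↔ t + 1 ≤ muI r I t :=
    fun t => lt_rankP_iff _ (muI_partition hr hI) t
  have h2 : ∀ t, t + 1 ≤ muI r I t ↔ t < I.card := by
    intro t
    rcases Nat.lt_or_ge t I.card with h3 | h3
    · rw [muI_low h3]
      have := dd_ge hI h3
      have := dd_two_le hI h3
      simp only [iff_true, h3]
      omega
    rcases Nat.lt_or_ge t r with h4 | h4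
    · rw [muI_mid h3 h4]
      have := (ee_mem_CC hI (show t - I.card < r - I.card by omega)).1
      omega
    · rw [muI_high h4 hkr]
      omega
  by_contra hne
  rcases Nat.lt_or_ge (rankP (muI r I)) I.card with hlt | hgt
  · have := (h2 (rankP (muI r I))).mpr hlt
    have := (h (rankP (muI r I))).mpr this
    omega
  · have hlt2 : I.card < rankP (muI r I) := by omega
    have := (h I.card).mp hlt2
    have := (h2 I.card).mp this
    omega

lemma frobOf_muI (hr : 1 ≤ r) (hI : I ⊆ Finset.Icc 2 r) : frobOf I (muI r I) := by
  refine ⟨muI_partition hr hI, ?_, rankP_muI hr hI, ?_⟩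
  · intro t ht
    rw [rankP_muI hr hI] at ht
    rw [conjP_muI hr hI ht, muI_low ht]
    have := dd_two_le hI ht
    omega
  · intro t ht
    rw [rankP_muI hr hI] at ht
    rw [muI_low ht]
    have h2 := (dd_two_le hI ht).1
    have h3 : nthD I t + t - 1 + 1 - t = nthD I t := by omega
    rw [h3]
    exact nthD_mem I ht

end Main3

section Uniq

variable {r : ℕ} {I : Finset ℕ}

lemma frob_rows_ge (hν : frobOf I ν) {t : ℕ} (ht : t < I.card) : t + 1 ≤ ν t := by
  obtain ⟨hp, hq, hrank, harm⟩ := hν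
  exact (lt_rankP_iff ν hp t).mp (by omega)

lemma frob_rows {ν : ℕ → ℕ} (hν : frobOf I ν) :
    ∀ t, t < I.card → ν t = nthD I t + t - 1 := by
  obtain ⟨hp, hq, hrank, harm⟩ := hν
  rcases Nat.eq_zero_or_pos I.card with h0 | h0
  · intro t ht; omega
  set k := I.card with hk
  have hrow_ge : ∀ t, t < k → t + 1 ≤ ν t := fun t ht =>
    (lt_rankP_iff ν hp t).mp (by omega)
  have hg : ∀ i : Fin k, (fun i : Fin k => ν (k - 1 - (i : ℕ)) + 1 - (k - 1 - (i : ℕ))) i ∈ I := by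
    intro i
    exact harm (k - 1 - (i : ℕ)) (by omega)
  have hmono : StrictMono (fun i : Fin k => ν (k - 1 - (i : ℕ)) + 1 - (k - 1 - (i : ℕ))) := by
    intro i j hij
    simp only
    have hij' : (i : ℕ) < (j : ℕ) := hij
    have h1 : k - 1 - (j : ℕ) < k - 1 - (i : ℕ) := by
      have := j.isLt
      omega
    have h2 : ν (k - 1 - (i : ℕ)) ≤ ν (k - 1 - (j : ℕ)) := hp.1 (le_of_lt h1)
    have h3 := hrow_ge (k - 1 - (i : ℕ)) (by omega)
    have h4 := hrow_ge (k - 1 - (j : ℕ)) (by omega)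
    omega
  have huniq := Finset.orderEmbOfFin_unique (f := fun i : Fin k =>
    ν (k - 1 - (i : ℕ)) + 1 - (k - 1 - (i : ℕ))) (s := I) hk.symm hg hmono
  intro t ht
  have h5 := congrFun huniq ⟨k - 1 - t, by omega⟩
  simp only at h5
  have h6 : k - 1 - (k - 1 - t) = t := by omega
  rw [h6] at h5
  have h7 : nthD I t = I.orderEmbOfFin rfl ⟨I.card - 1 - t, by omega⟩ := by
    rw [nthD, dif_pos ht]
  have h8 : (I.orderEmbOfFin hk.symm) ⟨k - 1 - t, by omega⟩
      = (I.orderEmbOfFin rfl) ⟨I.card - 1 - t, by omega⟩ := by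
    rw [Finset.orderEmbOfFin_eq_orderEmbOfFin_iff]
  have h9 := hrow_ge t ht
  omega

/-- The conjugate of any `frobOf I` partition is determined by `I`. -/
lemma frob_conj {ν : ℕ → ℕ} (hr : 1 ≤ r) (hI : I ⊆ Finset.Icc 2 r) (hν : frobOf I ν) :
    ∀ c, conjP ν c = if c < I.card then nthD I c + c
      else ((Finset.range I.card).filter (fun j => c + 2 ≤ nthD I j + j)).card := by
  intro c
  obtain ⟨hp, hq, hrank, harm⟩ := hν
  rcases Nat.lt_or_ge c I.card with hc | hc
  · rw [if_pos hc]
    have h1 := hq c (by omega)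
    have h2 := frob_rows ⟨hp, hq, hrank, harm⟩ c hc
    have h3 := (dd_two_le hI hc).1
    have h4 := dd_ge hI hc
    omega
  · rw [if_neg (by omega)]
    have hνk : ν I.card ≤ I.card := by
      by_contra h
      push_neg at h
      have := (lt_rankP_iff ν hp I.card).mpr h
      omega
    rw [conjP, ncard_eq_card_filter _ I.card ?bound]
    case bound =>
      intro j hj
      by_contra h
      push_neg at h
      have := hp.1 (show I.card ≤ j by omega)
      omega
    apply Finset.card_bij (fun a _ => a)
    · intro a ha
      simp only [Finset.mem_filter, Finset.mem_range] at ha ⊢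
      obtain ⟨ha1, ha2⟩ := ha
      have h2 := frob_rows ⟨hp, hq, hrank, harm⟩ a ha1
      have h3 := (dd_two_le hI ha1).1
      exact ⟨ha1, by omega⟩
    · intro a _ b _ hab; exact hab
    · intro b hb
      simp only [Finset.mem_filter, Finset.mem_range] at hb ⊢
      obtain ⟨hb1, hb2⟩ := hb
      have h2 := frob_rows ⟨hp, hq, hrank, harm⟩ b hb1
      have h3 := (dd_two_le hI hb1).1
      exact ⟨b, ⟨hb1, by omega⟩, rfl⟩

lemma frob_unique {ν₁ ν₂ : ℕ → ℕ} (hr : 1 ≤ r) (hI : I ⊆ Finset.Icc 2 r)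
    (h1 : frobOf I ν₁) (h2 : frobOf I ν₂) : ν₁ = ν₂ := by
  have hc : conjP ν₁ = conjP ν₂ := by
    funext c
    rw [frob_conj hr hI h1 c, frob_conj hr hI h2 c]
  funext s
  rw [← conjP_conjP ν₁ h1.1 s, ← conjP_conjP ν₂ h2.1 s, hc]

end Uniq

section Parts

variable {r : ℕ} {I : Finset ℕ}

lemma mem_I_pos (hI : I ⊆ Finset.Icc 2 r) {i : ℕ} (h : i + 1 ∈ I) : 1 ≤ i ∧ i + 1 ≤ r := by
  have := hI h
  simp only [Finset.mem_Icc] at this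
  omega

lemma vJ_injective (hr : 1 ≤ r) (hI : I ⊆ Finset.Icc 2 r) :
    Function.Injective (fun i : Fin r =>
      (if (i : ℕ) + 1 ∈ I then 2 * ((i : ℕ) : ℤ) else 0) + ((r : ℤ) - 1 - ((i : ℕ) : ℤ))) := by
  intro i j h
  simp only at h
  apply Fin.val_injective
  by_cases hi : (i : ℕ) + 1 ∈ I <;> by_cases hj : (j : ℕ) + 1 ∈ I
  · rw [if_pos hi, if_pos hj] at h; omega
  · rw [if_pos hi, if_neg hj] at h
    have h1 := mem_I_pos hI hi
    have h2 := j.isLt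
    omega
  · rw [if_neg hi, if_pos hj] at h
    have h1 := mem_I_pos hI hj
    have h2 := i.isLt
    omega
  · rw [if_neg hi, if_neg hj] at h; omega

lemma muI_val_low (hI : I ⊆ Finset.Icc 2 r) {t : ℕ} (ht : t < I.card) :
    (muI r I t : ℤ) = (nthD I t : ℤ) + t - 1 := by
  rw [muI_low ht]
  have := (dd_two_le hI ht).1
  omega

lemma muI_val_mid (hr : 1 ≤ r) (hI : I ⊆ Finset.Icc 2 r) {t : ℕ} (h1 : I.card ≤ t)
    (h2 : t < r) : (muI r I t : ℤ) = (t : ℤ) + 1 - (nthA (CC r I) (t - I.card) : ℤ) := by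
  rw [muI_mid h1 h2]
  have h3 := ee_le hI (show t - I.card < r - I.card by omega)
  have h4 := (ee_mem_CC hI (show t - I.card < r - I.card by omega)).1
  omega

lemma muI_strictAnti (hr : 1 ≤ r) (hI : I ⊆ Finset.Icc 2 r) :
    StrictAnti (fun i : Fin r => (muI r I (i : ℕ) : ℤ) + ((r : ℤ) - 1 - ((i : ℕ) : ℤ))) := by
  intro i j hij
  simp only
  have hij' : (i : ℕ) < (j : ℕ) := hij
  have hjr := j.isLt
  rcases Nat.lt_or_ge (j : ℕ) I.card with h1 | h1
  · rw [muI_val_low hI h1, muI_val_low hI (by omega)]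
    have := nthD_strictAnti I hij' h1
    omega
  rcases Nat.lt_or_ge (i : ℕ) I.card with h2 | h2
  · rw [muI_val_low hI h2, muI_val_mid hr hI h1 hjr]
    have h3 := dd_ge hI h2
    have h4 := (ee_mem_CC hI (show (j:ℕ) - I.card < r - I.card by omega)).1
    have h5 := dd_add_mono hI (I.card - 1) (i : ℕ) (by omega) (by omega)
    have h6 := (dd_two_le hI (show I.card - 1 < I.card by omega)).1
    omega
  · rw [muI_val_mid hr hI h2 (by omega), muI_val_mid hr hI h1 hjr]
    have h3 := nthA_strictMono (CC r I)
      (show (i:ℕ) - I.card < (j:ℕ) - I.card by omega)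
      (by rw [cardCC hI]; omega)
    omega

lemma muI_perm (hr : 1 ≤ r) (hI : I ⊆ Finset.Icc 2 r) :
    ∃ σ : Equiv.Perm (Fin r), ∀ i : Fin r,
      (muI r I (i : ℕ) : ℤ) + ((r : ℤ) - 1 - ((i : ℕ) : ℤ))
        = (if ((σ i : Fin r) : ℕ) + 1 ∈ I then 2 * (((σ i : Fin r) : ℕ) : ℤ) else 0)
          + ((r : ℤ) - 1 - (((σ i : Fin r) : ℕ) : ℤ)) := by
  have hkr := k_lt_r hr hI
  have hd : ∀ t, t < I.card → nthD I t - 1 < r := by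
    intro t ht
    have := dd_two_le hI ht
    omega
  have he : ∀ i : Fin r, I.card ≤ (i : ℕ) → nthA (CC r I) ((i : ℕ) - I.card) - 1 < r := by
    intro i hi
    have := (ee_mem_CC hI (show (i:ℕ) - I.card < r - I.card by have := i.isLt; omega)).2.1
    omega
  set f : Fin r → Fin r := fun i =>
    if h : (i : ℕ) < I.card then ⟨nthD I (i : ℕ) - 1, hd _ h⟩
    else ⟨nthA (CC r I) ((i : ℕ) - I.card) - 1, he i (by omega)⟩ with hf
  have hinj : Function.Injective f := by
    intro i j hij
    have hval : (f i : ℕ) = (f j : ℕ) := by rw [hij]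
    have hir := i.isLt
    have hjr := j.isLt
    apply Fin.val_injective
    by_cases hi : (i : ℕ) < I.card <;> by_cases hj : (j : ℕ) < I.card
    · rw [hf] at hval
      simp only [dif_pos hi, dif_pos hj] at hval
      have d1 := (dd_two_le hI hi).1
      have d2 := (dd_two_le hI hj).1
      by_contra hne
      rcases Nat.lt_or_ge (i : ℕ) (j : ℕ) with h | h
      · have := nthD_strictAnti I h hj; omega
      · have := nthD_strictAnti I (show (j:ℕ) < (i:ℕ) by omega) hi; omega
    · rw [hf] at hval
      simp only [dif_pos hi, dif_neg hj] at hval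
      have d1 := (dd_two_le hI hi).1
      have e1 := ee_mem_CC hI (show (j:ℕ) - I.card < r - I.card by omega)
      have : nthD I (i : ℕ) ∈ I := nthD_mem I hi
      have heq : nthD I (i : ℕ) = nthA (CC r I) ((j : ℕ) - I.card) := by omega
      rw [heq] at this
      exact absurd this e1.2.2
    · rw [hf] at hval
      simp only [dif_neg hi, dif_pos hj] at hval
      have d1 := (dd_two_le hI hj).1
      have e1 := ee_mem_CC hI (show (i:ℕ) - I.card < r - I.card by omega)
      have : nthD I (j : ℕ) ∈ I := nthD_mem I hj
      have heq : nthD I (j : ℕ) = nthA (CC r I) ((i : ℕ) - I.card) := by omega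
      rw [heq] at this
      exact absurd this e1.2.2
    · rw [hf] at hval
      simp only [dif_neg hi, dif_neg hj] at hval
      have e1 := (ee_mem_CC hI (show (i:ℕ) - I.card < r - I.card by omega)).1
      have e2 := (ee_mem_CC hI (show (j:ℕ) - I.card < r - I.card by omega)).1
      by_contra hne
      rcases Nat.lt_or_ge (i : ℕ) (j : ℕ) with h | h
      · have := nthA_strictMono (CC r I) (show (i:ℕ) - I.card < (j:ℕ) - I.card by omega)
          (by rw [cardCC hI]; omega)
        omega
      · have := nthA_strictMono (CC r I) (show (j:ℕ) - I.card < (i:ℕ) - I.card by omega)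
          (by rw [cardCC hI]; omega)
        omega
  refine ⟨Equiv.ofBijective f ((Finite.injective_iff_bijective).mp hinj), ?_⟩
  intro i
  have hcoe : (Equiv.ofBijective f ((Finite.injective_iff_bijective).mp hinj)) i = f i := rfl
  rw [hcoe]
  have hir := i.isLt
  by_cases hi : (i : ℕ) < I.card
  · have hfi : (f i : ℕ) = nthD I (i : ℕ) - 1 := by rw [hf]; simp only [dif_pos hi]
    have d1 := (dd_two_le hI hi).1
    have hmem : (f i : ℕ) + 1 ∈ I := by
      rw [hfi, show nthD I (i:ℕ) - 1 + 1 = nthD I (i:ℕ) by omega]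
      exact nthD_mem I hi
    rw [if_pos hmem, muI_val_low hI hi, hfi]
    omega
  · have hfi : (f i : ℕ) = nthA (CC r I) ((i : ℕ) - I.card) - 1 := by
      rw [hf]; simp only [dif_neg hi]
    have e1 := ee_mem_CC hI (show (i:ℕ) - I.card < r - I.card by omega)
    have hmem : (f i : ℕ) + 1 ∉ I := by
      rw [hfi, show nthA (CC r I) ((i:ℕ) - I.card) - 1 + 1
        = nthA (CC r I) ((i:ℕ) - I.card) by omega]
      exact e1.2.2
    rw [if_neg hmem, muI_val_mid hr hI (by omega) hir, hfi]
    omega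

end Parts

section Part4

variable {r : ℕ} {I : Finset ℕ}

lemma inversions_count (hr : 1 ≤ r) (hI : I ⊆ Finset.Icc 2 r) :
    (Finset.filter (fun p : Fin r × Fin r =>
        p.1 < p.2 ∧ (if (p.1 : ℕ) + 1 ∈ I then 2 * ((p.1 : ℕ) : ℤ) else 0)
            + ((r : ℤ) - 1 - ((p.1 : ℕ) : ℤ))
          < (if (p.2 : ℕ) + 1 ∈ I then 2 * ((p.2 : ℕ) : ℤ) else 0)
            + ((r : ℤ) - 1 - ((p.2 : ℕ) : ℤ))) Finset.univ).card
      = ∑ j ∈ I, (j - 1) := by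
  have hcong : ∀ p ∈ (Finset.univ : Finset (Fin r × Fin r)),
      (p.1 < p.2 ∧ (if (p.1 : ℕ) + 1 ∈ I then 2 * ((p.1 : ℕ) : ℤ) else 0)
          + ((r : ℤ) - 1 - ((p.1 : ℕ) : ℤ))
        < (if (p.2 : ℕ) + 1 ∈ I then 2 * ((p.2 : ℕ) : ℤ) else 0)
          + ((r : ℤ) - 1 - ((p.2 : ℕ) : ℤ)))
      ↔ (p.1 < p.2 ∧ (p.2 : ℕ) + 1 ∈ I) := by
    intro p _
    have hlt : p.1 < p.2 ↔ (p.1 : ℕ) < (p.2 : ℕ) := Iff.rfl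
    constructor
    · rintro ⟨h1, h2⟩
      refine ⟨h1, ?_⟩
      by_contra hmem
      rw [if_neg hmem] at h2
      by_cases hm1 : (p.1 : ℕ) + 1 ∈ I
      · rw [if_pos hm1] at h2
        omega
      · rw [if_neg hm1] at h2
        have := hlt.mp h1
        omega
    · rintro ⟨h1, h2⟩
      refine ⟨h1, ?_⟩
      rw [if_pos h2]
      have hp2 := mem_I_pos hI h2
      have := hlt.mp h1
      by_cases hm1 : (p.1 : ℕ) + 1 ∈ I
      · rw [if_pos hm1]; omega
      · rw [if_neg hm1]; omega
  rw [Finset.filter_congr hcong]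
  rw [Finset.card_eq_sum_card_fiberwise (f := Prod.snd)
    (t := Finset.univ.filter (fun b : Fin r => (b : ℕ) + 1 ∈ I))
    (fun p hp => by
      simp only [Finset.mem_coe, Finset.mem_filter, Finset.mem_univ, true_and] at hp ⊢
      exact hp.2)]
  have hfiber : ∀ b ∈ Finset.univ.filter (fun b : Fin r => (b : ℕ) + 1 ∈ I),
      ((Finset.univ.filter (fun p : Fin r × Fin r => (p.1 < p.2 ∧ (p.2 : ℕ) + 1 ∈ I))).filter
        (fun p => p.snd = b)).card = (b : ℕ) := by
    intro b hb
    simp only [Finset.mem_filter, Finset.mem_univ, true_and] at hb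
    have hcard : ((Finset.range r).filter (fun y => y < (b : ℕ))).card = (b : ℕ) :=
      card_range_filter_lt' r (b : ℕ) (le_of_lt b.isLt)
    rw [← hcard]
    apply Finset.card_bij (fun p _ => (p.1 : ℕ))
    · intro p hp
      simp only [Finset.mem_filter, Finset.mem_univ, true_and] at hp ⊢
      obtain ⟨⟨h1, _⟩, h3⟩ := hp
      simp only [Finset.mem_range]
      exact ⟨p.1.isLt, by rw [← h3]; exact h1⟩
    · intro p hp q hq hpq
      simp only [Finset.mem_filter, Finset.mem_univ, true_and] at hp hq
      have : p.1 = q.1 := Fin.val_injective hpq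
      have h2 : p.2 = q.2 := by rw [hp.2, hq.2]
      exact Prod.ext this h2
    · intro a ha
      simp only [Finset.mem_filter, Finset.mem_range] at ha
      refine ⟨(⟨a, ha.1⟩, b), ?_, rfl⟩
      simp only [Finset.mem_filter, Finset.mem_univ, true_and]
      exact ⟨⟨ha.2, hb⟩, by trivial⟩
  rw [Finset.sum_congr rfl hfiber]
  refine Finset.sum_bij (fun b _ => (b : ℕ) + 1) ?_ ?_ ?_ ?_
  · intro b hb
    simp only [Finset.mem_filter, Finset.mem_univ, true_and] at hb
    exact hb
  · intro a ha b hb hab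
    simp only [Finset.mem_filter, Finset.mem_univ, true_and] at ha hb
    exact Fin.val_injective (by omega)
  · intro j hj
    have := hI hj
    simp only [Finset.mem_Icc] at this
    refine ⟨⟨j - 1, by omega⟩, ?_, by simp only [Fin.val_mk]; omega⟩
    simp only [Finset.mem_filter, Finset.mem_univ, true_and]
    rw [show j - 1 + 1 = j by omega]
    exact hj
  · intro b hb
    omega

end Part4

section Part4b

variable {r : ℕ} {I : Finset ℕ}

lemma muI_sum (hr : 1 ≤ r) (hI : I ⊆ Finset.Icc 2 r) :
    2 * ∑ j ∈ I, (j - 1) = ∑ t ∈ Finset.range r, muI r I t := by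
  have hkr := k_lt_r hr hI
  have hsplit : ∑ t ∈ Finset.range r, muI r I t
      = ∑ t ∈ Finset.range I.card, muI r I t + ∑ t ∈ Finset.Ico I.card r, muI r I t := by
    rw [Finset.range_eq_Ico, ← Finset.sum_Ico_consecutive _ (Nat.zero_le I.card)
      (le_of_lt hkr), ← Finset.range_eq_Ico]
  have hA : ∑ t ∈ Finset.range I.card, nthD I t = ∑ j ∈ I, j := by
    conv_rhs => rw [← image_nthD I]
    rw [Finset.sum_image]
    intro a ha b hb hab
    simp only [Finset.mem_coe, Finset.mem_range] at ha hb
    by_contra hne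
    rcases Nat.lt_or_ge a b with h | h
    · have := nthD_strictAnti I h hb; omega
    · have := nthD_strictAnti I (by omega : b < a) ha; omega
  have hL : ∑ t ∈ Finset.range I.card, muI r I t + I.card
      = ∑ j ∈ I, j + ∑ t ∈ Finset.range I.card, t := by
    have h1 : ∑ t ∈ Finset.range I.card, (muI r I t + 1)
        = ∑ t ∈ Finset.range I.card, (nthD I t + t) := by
      apply Finset.sum_congr rfl
      intro t ht
      simp only [Finset.mem_range] at ht
      rw [muI_low ht]
      have := (dd_two_le hI ht).1
      omega
    rw [Finset.sum_add_distrib, Finset.sum_add_distrib] at h1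
    simp only [Finset.sum_const, Finset.card_range, smul_eq_mul, mul_one] at h1
    rw [h1, hA]
  have hM : ∑ t ∈ Finset.Ico I.card r, muI r I t
      = ∑ m ∈ Finset.range (r - I.card), (I.card + m + 1 - nthA (CC r I) m) := by
    rw [Finset.sum_Ico_eq_sum_range]
    apply Finset.sum_congr rfl
    intro m hm
    simp only [Finset.mem_range] at hm
    rw [muI_mid (by omega) (by omega), show I.card + m - I.card = m by omega]
  have hB : ∑ m ∈ Finset.range (r - I.card), nthA (CC r I) m = ∑ c ∈ CC r I, c := by
    conv_rhs => rw [← image_nthA (CC r I)]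
    rw [cardCC hI, Finset.sum_image]
    intro a ha b hb hab
    simp only [Finset.mem_coe, Finset.mem_range] at ha hb
    rw [← cardCC hI] at ha hb
    by_contra hne
    rcases Nat.lt_or_ge a b with h | h
    · have := nthA_strictMono (CC r I) h hb; omega
    · have := nthA_strictMono (CC r I) (by omega : b < a) ha; omega
  have hM2 : ∑ m ∈ Finset.range (r - I.card), (I.card + m + 1 - nthA (CC r I) m)
        + ∑ m ∈ Finset.range (r - I.card), nthA (CC r I) m
      = ∑ m ∈ Finset.range (r - I.card), (I.card + m + 1) := by
    rw [← Finset.sum_add_distrib]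
    apply Finset.sum_congr rfl
    intro m hm
    simp only [Finset.mem_range] at hm
    have := ee_le hI hm
    omega
  have hup : ∑ m ∈ Finset.range (r - I.card), (I.card + m + 1)
      = ∑ i ∈ Finset.Ico (I.card + 1) (r + 1), i := by
    rw [Finset.sum_Ico_eq_sum_range]
    rw [show r + 1 - (I.card + 1) = r - I.card by omega]
    apply Finset.sum_congr rfl
    intro m _
    omega
  have hIcc : ∑ i ∈ Finset.Ico 1 (r + 1), i
      = ∑ i ∈ Finset.Ico 1 (I.card + 1), i + ∑ i ∈ Finset.Ico (I.card + 1) (r + 1), i :=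
    (Finset.sum_Ico_consecutive _ (by omega) (by omega)).symm
  have hlowId : ∑ i ∈ Finset.Ico 1 (I.card + 1), i
      = ∑ t ∈ Finset.range I.card, t + I.card := by
    rw [Finset.sum_Ico_eq_sum_range]
    rw [show I.card + 1 - 1 = I.card by omega]
    rw [show (∑ t ∈ Finset.range I.card, t + I.card)
      = ∑ t ∈ Finset.range I.card, (t + 1) by
        rw [Finset.sum_add_distrib]; simp [Finset.card_range]]
    apply Finset.sum_congr rfl
    intro m _
    omega
  have hIC : ∑ c ∈ CC r I, c + ∑ j ∈ I, j = ∑ i ∈ Finset.Icc 1 r, i := by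
    rw [CC]
    exact Finset.sum_sdiff (I_subset_Icc1 hI)
  have hIccIco : ∑ i ∈ Finset.Icc 1 r, i = ∑ i ∈ Finset.Ico 1 (r + 1), i := by
    rw [Finset.Ico_add_one_right_eq_Icc]
  have hsub : ∑ j ∈ I, (j - 1) + I.card = ∑ j ∈ I, j := by
    rw [show (∑ j ∈ I, (j - 1) + I.card) = ∑ j ∈ I, ((j - 1) + 1) by
      rw [Finset.sum_add_distrib]; simp]
    apply Finset.sum_congr rfl
    intro j hj
    have := hI hj
    simp only [Finset.mem_Icc] at this
    omega
  omega

end Part4b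

section Part5

lemma conjP_le (ν : ℕ → ℕ) (r : ℕ) (hsupp : ∀ i, r ≤ i → ν i = 0) (t : ℕ) :
    conjP ν t ≤ r := by
  rw [conjP]
  have h1 : {j | t + 1 ≤ ν j} ⊆ Set.Iio r := by
    intro j hj
    simp only [Set.mem_setOf_eq] at hj
    simp only [Set.mem_Iio]
    by_contra h
    have := hsupp j (by omega)
    omega
  have h2 := Set.ncard_le_ncard h1 (Set.finite_Iio r)
  rw [← Finset.coe_range, Set.ncard_coe_finset, Finset.card_range] at h2
  exact h2

lemma part5 (r : ℕ) (hr : 1 ≤ r) (ν : ℕ → ℕ) (hp : IsPartition ν) (hq : memQ (-1) ν)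
    (hsupp : ∀ i, r ≤ i → ν i = 0) :
    ∃! I' : Finset ℕ, I' ⊆ Finset.Icc 2 r ∧ frobOf I' ν := by
  have hrow : ∀ t, t < rankP ν → t + 1 ≤ ν t := fun t ht => (lt_rankP_iff ν hp t).mp ht
  have hdec : ∀ t u, t < u → u < rankP ν → ν u + 1 - u < ν t + 1 - t := by
    intro t u htu hu
    have h1 := hrow u hu
    have h2 := hrow t (by omega)
    have h3 := hp.1 (le_of_lt htu)
    omega
  have hinj : Set.InjOn (fun t => ν t + 1 - t) ↑(Finset.range (rankP ν)) := by
    intro a ha b hb hab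
    simp only [Finset.coe_range, Set.mem_Iio] at ha hb
    by_contra hne
    rcases Nat.lt_or_ge a b with h | h
    · have := hdec a b h hb; simp only at hab; omega
    · have := hdec b a (by omega) ha; simp only at hab; omega
  have hcard : ((Finset.range (rankP ν)).image (fun t => ν t + 1 - t)).card = rankP ν := by
    rw [Finset.card_image_of_injOn hinj, Finset.card_range]
  have hmemIcc : ∀ t, t < rankP ν → ν t + 1 - t ∈ Finset.Icc 2 r := by
    intro t ht
    have h1 := hrow t ht
    have h2 := hq t ht
    have h3 := conjP_le ν r hsupp t
    simp only [Finset.mem_Icc]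
    omega
  refine ⟨(Finset.range (rankP ν)).image (fun t => ν t + 1 - t), ⟨?_, hp, hq, hcard.symm, ?_⟩, ?_⟩
  · intro x hx
    simp only [Finset.mem_image, Finset.mem_range] at hx
    obtain ⟨t, ht, rfl⟩ := hx
    exact hmemIcc t ht
  · intro t ht
    simp only [Finset.mem_image, Finset.mem_range]
    exact ⟨t, ht, rfl⟩
  · rintro I'' ⟨hsub'', hp'', hq'', hcard'', harm''⟩
    symm
    apply Finset.eq_of_subset_of_card_le
    · intro x hx
      simp only [Finset.mem_image, Finset.mem_range] at hx
      obtain ⟨t, ht, rfl⟩ := hx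
      exact harm'' t ht
    · rw [hcard, hcard'']

end Part5

/-- for `I ⊆ {2, …, r}`, `J_i = 2i - 2` for `i ∈ I` and `0`
otherwise (1-indexed), and `ρ = (r-1, …, 1, 0)`:
(i) there is a unique partition `μ` with Frobenius coordinates
    `(j_k-2, …, j_1-2 | j_k-1, …, j_1-1)`, and it lies in `Q₋₁`;
(ii) the entries of `J + ρ` are pairwise distinct;
(iii) the decreasing rearrangement of `J + ρ` is `μ + ρ`;
(iv) the number of inversions of `J + ρ` equals `|μ|/2 = Σ_{j ∈ I} (j - 1)`;
(v) `I ↦ μ` is a bijection onto the partitions in `Q₋₁` with at most `r`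
    nonzero parts. -/
theorem stmt_7 (r : ℕ) (hr : 1 ≤ r) (I : Finset ℕ) (hI : I ⊆ Finset.Icc 2 r)
    (J ρ : Fin r → ℤ)
    (hJ : ∀ i : Fin r, J i = if (i : ℕ) + 1 ∈ I then 2 * ((i : ℕ) : ℤ) else 0)
    (hρ : ∀ i : Fin r, ρ i = (r : ℤ) - 1 - ((i : ℕ) : ℤ)) :
    (∃! μ : ℕ → ℕ, frobOf I μ) ∧
    Function.Injective (fun i => J i + ρ i) ∧
    (∀ μ : ℕ → ℕ, frobOf I μ →
      StrictAnti (fun i : Fin r => (μ (i : ℕ) : ℤ) + ρ i) ∧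
        ∃ σ : Equiv.Perm (Fin r), ∀ i : Fin r, (μ (i : ℕ) : ℤ) + ρ i = J (σ i) + ρ (σ i)) ∧
    (∀ μ : ℕ → ℕ, frobOf I μ →
      (Finset.filter (fun p : Fin r × Fin r =>
          p.1 < p.2 ∧ J p.1 + ρ p.1 < J p.2 + ρ p.2) Finset.univ).card =
        ∑ j ∈ I, (j - 1) ∧
      2 * ∑ j ∈ I, (j - 1) = ∑ t ∈ Finset.range r, μ t) ∧
    (∀ ν : ℕ → ℕ, IsPartition ν → memQ (-1) ν → (∀ i, r ≤ i → ν i = 0) →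
      ∃! I' : Finset ℕ, I' ⊆ Finset.Icc 2 r ∧ frobOf I' ν) := by
  have hJ' : J = fun i : Fin r => if (i : ℕ) + 1 ∈ I then 2 * ((i : ℕ) : ℤ) else 0 :=
    funext hJ
  have hρ' : ρ = fun i : Fin r => (r : ℤ) - 1 - ((i : ℕ) : ℤ) := funext hρ
  subst hJ'
  subst hρ'
  refine ⟨⟨muI r I, frobOf_muI hr hI,
      fun ν hν => frob_unique hr hI hν (frobOf_muI hr hI)⟩, ?_, ?_, ?_,
      fun ν h1 h2 h3 => part5 r hr ν h1 h2 h3⟩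
  · exact vJ_injective hr hI
  · intro μ hμ
    have hμeq : μ = muI r I := frob_unique hr hI hμ (frobOf_muI hr hI)
    subst hμeq
    exact ⟨muI_strictAnti hr hI, muI_perm hr hI⟩
  · intro μ hμ
    have hμeq : μ = muI r I := frob_unique hr hI hμ (frobOf_muI hr hI)
    subst hμeq
    exact ⟨inversions_count hr hI, muI_sum hr hI⟩
end

section
/- Let K = ℚ (or any field of characteristic 0), let N ≥ 1, let E = K^N with standard basis e₁, …, e_N, and let Λ = ⋀(E) be the exterior algebra of E. Let P = K[x_{ij} : 1 ≤ i < j ≤ N] be a polynomial ring, graded with each x_{ij} in degree 1, and let Φ : P → Λ be the K-algebra homomorphism determined by Φ(x_{ij}) = e_i ∧ e_j. Then: (1) the image of Φ is the even part of Λ, i.e. the span of all products of an even number of the basis vectors e_i (the degree-2 Veronese subalgebra of Λ); and (2) the kernel of Φ is generated as an ideal by its homogeneous elements of degree 2, i.e. ker Φ equals the ideal generated by the subspace {f ∈ P : f homogeneous of degree 2 and Φ(f) = 0}. -/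
set_option maxHeartbeats 1000000
namespace Stmt11
open MvPolynomial ExteriorAlgebra

variable {K : Type*} [Field K] {N : ℕ}

abbrev σf (N : ℕ) := {p : Fin N × Fin N // p.1 < p.2}

variable (K) in
noncomputable def e (i : Fin N) : ExteriorAlgebra K (Fin N → K) := ι K (Pi.single i 1)

def flat : List (σf N) → List (Fin N)
  | [] => []
  | p :: t => p.1.1 :: p.1.2 :: flat t

lemma flat_perm {l₁ l₂ : List (σf N)} (h : l₁.Perm l₂) : (flat l₁).Perm (flat l₂) := by
  induction h with
  | nil => exact .refl _
  | cons x _ ih => exact (ih.cons _).cons _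
  | swap x y l =>
      show (([y.1.1, y.1.2] ++ [x.1.1, x.1.2]) ++ flat l).Perm
        (([x.1.1, x.1.2] ++ [y.1.1, y.1.2]) ++ flat l)
      exact List.perm_append_comm.append_right _
  | trans _ _ ih₁ ih₂ => exact ih₁.trans ih₂

lemma mem_flat_iff {x : Fin N} {l : List (σf N)} :
    x ∈ flat l ↔ ∃ q ∈ l, x = q.1.1 ∨ x = q.1.2 := by
  induction l with
  | nil => simp [flat]
  | cons p t ih => simp [flat, ih, or_assoc]

lemma e_swap (i j : Fin N) : e K i * e K j = - (e K j * e K i) :=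
  eq_neg_of_add_eq_zero_left (ι_add_mul_swap _ _)

lemma perm_sign {l₁ l₂ : List (Fin N)} (h : l₁.Perm l₂) :
    ∃ ε : K, (ε = 1 ∨ ε = -1) ∧
      (l₁.map (e K)).prod = ε • (l₂.map (e K)).prod := by
  induction h with
  | nil => exact ⟨1, .inl rfl, by simp⟩
  | cons x _ ih =>
      obtain ⟨ε, hε, h⟩ := ih
      exact ⟨ε, hε, by simp [h, mul_smul_comm]⟩
  | swap x y l =>
      refine ⟨-1, .inr rfl, ?_⟩
      simp only [List.map_cons, List.prod_cons, ← mul_assoc, e_swap y x]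
      simp
  | trans _ _ ih₁ ih₂ =>
      obtain ⟨ε₁, hε₁, h₁⟩ := ih₁
      obtain ⟨ε₂, hε₂, h₂⟩ := ih₂
      exact ⟨ε₁ * ε₂, by rcases hε₁ with h|h <;> rcases hε₂ with h'|h' <;> simp [h, h'],
        by rw [h₁, h₂, smul_smul]⟩

lemma prod_eq_zero_of_dup {l : List (Fin N)} (h : ¬ l.Nodup) :
    (l.map (e K)).prod = 0 := by
  rw [← List.exists_duplicate_iff_not_nodup] at h
  obtain ⟨x, hx⟩ := h
  have hcount : 2 ≤ l.count x := List.duplicate_iff_two_le_count.mp hx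
  have hx1 : x ∈ l := List.Duplicate.mem hx
  have hx2 : x ∈ l.erase x := by
    rw [← List.count_pos_iff, List.count_erase_self]; omega
  have hperm : l.Perm (x :: x :: ((l.erase x).erase x)) :=
    (List.perm_cons_erase hx1).trans (((List.perm_cons_erase hx2)).cons x)
  obtain ⟨ε, _, hε⟩ := perm_sign (K := K) hperm
  rw [hε]
  simp only [List.map_cons, List.prod_cons, ← mul_assoc]
  rw [show e K x * e K x = 0 from ι_sq_zero _]
  simp

section Phi
variable (Φ : MvPolynomial (σf N) K →ₐ[K] ExteriorAlgebra K (Fin N → K))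
variable (hΦ : ∀ p : σf N, Φ (X p) = e K p.1.1 * e K p.1.2)

include hΦ in
lemma Phi_list (l : List (σf N)) :
    Φ ((l.map X).prod) = ((flat l).map (e K)).prod := by
  induction l with
  | nil => simp [flat]
  | cons p t ih =>
      simp only [List.map_cons, List.prod_cons, map_mul, hΦ, ih, flat]
      rw [mul_assoc]

/-- the generating set of the degree-2 part of the kernel -/
def genSet : Set (MvPolynomial (σf N) K) := {f | f.IsHomogeneous 2 ∧ Φ f = 0}

/-- the ideal generated by degree-2 kernel elements -/
noncomputable def Igen : Ideal (MvPolynomial (σf N) K) := Ideal.span (genSet Φ)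

lemma Igen_le_ker : Igen Φ ≤ RingHom.ker Φ.toRingHom := by
  rw [Igen, Ideal.span_le]
  rintro f ⟨-, hf⟩
  exact hf

lemma quad_mem (p q r s : σf N) (ε : K)
    (hε : Φ (X p * X q) = ε • Φ (X r * X s)) :
    X p * X q - ε • (X r * X s) ∈ Igen Φ := by
  refine Ideal.subset_span ⟨?_, ?_⟩
  · have h1 : (X p * X q : MvPolynomial (σf N) K).IsHomogeneous 2 :=
      (isHomogeneous_X K p).mul (isHomogeneous_X K q)
    have h2 : (X r * X s : MvPolynomial (σf N) K).IsHomogeneous 2 :=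
      (isHomogeneous_X K r).mul (isHomogeneous_X K s)
    refine h1.sub ?_
    have := (homogeneousSubmodule (σf N) K 2).smul_mem ε
      ((mem_homogeneousSubmodule _ _).mpr h2)
    exact (mem_homogeneousSubmodule _ _).mp this
  · rw [map_sub, map_smul, hε, sub_self]

include hΦ in
lemma overlap_mem (p q : σf N) (h : ¬ (flat [p, q]).Nodup) :
    X p * X q ∈ Igen Φ := by
  refine Ideal.subset_span ⟨(isHomogeneous_X K p).mul (isHomogeneous_X K q), ?_⟩
  have : Φ (([p, q].map X).prod) = ((flat [p, q]).map (e K)).prod := Phi_list Φ hΦ _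
  simpa [prod_eq_zero_of_dup h] using this

include hΦ in
lemma prodX_mem_of_dup (l : List (σf N)) (h : ¬ (flat l).Nodup) :
    (l.map X).prod ∈ Igen Φ := by
  induction l with
  | nil => simp [flat] at h
  | cons p t ih =>
      rw [List.map_cons, List.prod_cons]
      by_cases hd : (flat t).Nodup
      · -- duplication involves p
        have hp : p.1.1 ∈ flat t ∨ p.1.2 ∈ flat t := by
          by_contra hcon
          push_neg at hcon
          apply h
          refine List.Nodup.cons ?_ (List.Nodup.cons hcon.2 hd)
          simp only [List.mem_cons]
          rintro (h12 | h1t)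
          · exact absurd h12 (ne_of_lt p.2)
          · exact hcon.1 h1t
        have key : ∀ x ∈ flat t, (x = p.1.1 ∨ x = p.1.2) → X p * (t.map X).prod ∈ Igen Φ := by
          intro x hx hxp
          rw [mem_flat_iff] at hx
          obtain ⟨q, hq, hxq⟩ := hx
          have hXpq : X p * X q ∈ Igen Φ := by
            refine overlap_mem Φ hΦ p q ?_
            have hcc : p.1.1 = q.1.1 ∨ p.1.1 = q.1.2 ∨ p.1.2 = q.1.1 ∨ p.1.2 = q.1.2 := by
              rcases hxp with h1 | h1 <;> rcases hxq with h2 | h2 <;>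
                rw [← h1, ← h2] <;> tauto
            show ¬ (p.1.1 :: p.1.2 :: q.1.1 :: q.1.2 :: ([] : List (Fin N))).Nodup
            simp only [List.nodup_cons, List.mem_cons]
            tauto
          have : (t.map X).prod = X q * ((@List.erase _ instBEqOfDecidableEq t q).map X).prod :=
            (List.prod_map_erase (X : σf N → MvPolynomial (σf N) K) hq).symm
          rw [this, ← mul_assoc]
          exact Ideal.mul_mem_right _ _ hXpq
        rcases hp with hp | hp
        · exact key _ hp (.inl rfl)
        · exact key _ hp (.inr rfl)
      · exact Ideal.mul_mem_left _ _ (ih hd)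

include hΦ in
lemma straighten : ∀ (n : ℕ) (l : List (σf N)), l.length = n → (flat l).Nodup →
    ∃ (c : K) (l' : List (σf N)),
      ((flat l').Pairwise (· < ·)) ∧ (flat l').toFinset = (flat l).toFinset ∧
      (l.map X).prod - c • (l'.map X).prod ∈ Igen Φ ∧
      Φ ((l.map X).prod) = c • Φ ((l'.map X).prod) := by
  intro n
  induction n using Nat.strong_induction_on with
  | _ n IH =>
    intro l hlen hnd
    cases l with
    | nil => exact ⟨1, [], by simp [flat]⟩
    | cons p₀ t₀ =>
      -- basic setup: minimum μ and second minimum ν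
      set L : List (σf N) := p₀ :: t₀ with hL
      have hTne : (flat L).toFinset.Nonempty := ⟨p₀.1.1, by simp [hL, flat]⟩
      set T : Finset (Fin N) := (flat L).toFinset with hT
      set μ : Fin N := T.min' hTne with hμ
      have hμT : μ ∈ T := T.min'_mem hTne
      have hμ_min : ∀ a ∈ T, μ ≤ a := fun a ha => T.min'_le a ha
      -- find the pair p containing μ; necessarily μ is its first coordinate
      obtain ⟨p, hp, hpμ⟩ : ∃ p ∈ L, p.1.1 = μ := by
        have h1 : μ ∈ flat L := List.mem_toFinset.mp hμT
        rw [mem_flat_iff] at h1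
        obtain ⟨p, hpmem, hc⟩ := h1
        rcases hc with hc | hc
        · exact ⟨p, hpmem, hc.symm⟩
        · exfalso
          have h2 : p.1.1 ∈ T := by
            rw [hT, List.mem_toFinset, mem_flat_iff]; exact ⟨p, hpmem, .inl rfl⟩
          have := hμ_min _ h2
          rw [hc] at this
          exact absurd this (not_le.mpr p.2)
      set t : List (σf N) := L.erase p with ht
      have hpt : L.Perm (p :: t) := List.perm_cons_erase hp
      have hflat1 : (flat L).Perm (p.1.1 :: p.1.2 :: flat t) := flat_perm hpt
      have hnd1 : (p.1.1 :: p.1.2 :: flat t).Nodup := hflat1.nodup_iff.mp hnd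
      have hμb : μ < p.1.2 := hpμ ▸ p.2
      have hbT' : p.1.2 ∈ T.erase μ := by
        refine Finset.mem_erase.mpr ⟨ne_of_gt hμb, ?_⟩
        rw [hT, List.mem_toFinset]
        exact hflat1.mem_iff.mpr (by simp)
      set ν : Fin N := (T.erase μ).min' ⟨_, hbT'⟩ with hν
      have hνT' : ν ∈ T.erase μ := Finset.min'_mem _ _
      have hν_min : ∀ a ∈ T.erase μ, ν ≤ a := fun a ha => Finset.min'_le _ a ha
      have hμν : μ < ν :=
        lt_of_le_of_ne (hμ_min ν (Finset.mem_of_mem_erase hνT'))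
          (Ne.symm (Finset.ne_of_mem_erase hνT'))
      have hgen : ∀ a ∈ T, a ≠ μ → a ≠ ν → ν < a := fun a ha h1 h2 =>
        lt_of_le_of_ne (hν_min a (Finset.mem_erase.mpr ⟨h1, ha⟩)) (Ne.symm h2)
      have hlenL : L.length = n := hlen
      have hlt : t.length + 1 = n := by
        rw [ht, List.length_erase_add_one hp, hlenL]
      set r : σf N := ⟨(μ, ν), hμν⟩ with hr
      by_cases hbν : p.1.2 = ν
      · -- aligned case: p = (μ, ν)
        have hpr : p = r := Subtype.ext (Prod.ext hpμ hbν)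
        have hndt : (flat t).Nodup := (hnd1.of_cons).of_cons
        obtain ⟨c, l₂, hsort₂, hfin₂, hmem₂, hphi₂⟩ :=
          IH t.length (by omega) t rfl hndt
        have hxkey : ∀ x ∈ flat l₂, μ < x ∧ ν < x := by
          intro x hx
          have hx' : x ∈ flat t := by
            have h1 : x ∈ (flat l₂).toFinset := List.mem_toFinset.mpr hx
            rw [hfin₂] at h1
            exact List.mem_toFinset.mp h1
          have hxT : x ∈ T := by
            rw [hT, List.mem_toFinset]
            exact hflat1.mem_iff.mpr (by simp [hx'])
          have hxμ : x ≠ μ := by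
            rintro rfl
            rw [← hpμ] at hx'
            exact (List.nodup_cons.mp hnd1).1 (by simp [hx'])
          have hxν : x ≠ ν := by
            rintro rfl
            rw [← hbν] at hx'
            exact (List.nodup_cons.mp (List.nodup_cons.mp hnd1).2).1 hx'
          exact ⟨lt_of_le_of_ne (hμ_min x hxT) (Ne.symm hxμ), hgen x hxT hxμ hxν⟩
        have hprodL : (L.map X).prod = (X p : MvPolynomial (σf N) K) * ((t.map X).prod) := by
          rw [(hpt.map X).prod_eq, List.map_cons, List.prod_cons]
        refine ⟨c, r :: l₂, ?_, ?_, ?_, ?_⟩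
        · show (μ :: ν :: flat l₂).Pairwise (· < ·)
          rw [List.pairwise_cons, List.pairwise_cons]
          refine ⟨?_, fun x hx => (hxkey x hx).2, hsort₂⟩
          intro x hx
          rcases List.mem_cons.mp hx with rfl | hx
          · exact hμν
          · exact (hxkey x hx).1
        · show (μ :: ν :: flat l₂).toFinset = T
          have hTeq : T = insert μ (insert ν (flat t).toFinset) := by
            rw [hT, List.toFinset_eq_of_perm _ _ hflat1, hpμ, hbν]
            simp [List.toFinset_cons]
          simp only [List.toFinset_cons, hfin₂, hTeq]
        · rw [hprodL, hpr, List.map_cons, List.prod_cons, ← mul_smul_comm, ← mul_sub]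
          exact Ideal.mul_mem_left _ _ hmem₂
        · rw [hprodL, hpr, List.map_cons, List.prod_cons, map_mul, map_mul, hphi₂,
            mul_smul_comm]
      · -- swap case: the partner of μ is not ν; use a quadratic relation
        have hνt : ν ∈ flat t := by
          have h1 : ν ∈ flat L := List.mem_toFinset.mp (Finset.mem_of_mem_erase hνT')
          have h2 := hflat1.mem_iff.mp h1
          rcases List.mem_cons.mp h2 with h3 | h3
          · exact absurd (hpμ ▸ h3) (ne_of_gt hμν)
          · rcases List.mem_cons.mp h3 with h4 | h4
            · exact absurd h4.symm hbν
            · exact h4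
        obtain ⟨q, hq, hqν⟩ := mem_flat_iff.mp hνt
        set t₂ : List (σf N) := t.erase q with ht₂
        have hqt : t.Perm (q :: t₂) := List.perm_cons_erase hq
        have hLperm : L.Perm (p :: q :: t₂) := hpt.trans (hqt.cons p)
        have hflat2 : (flat L).Perm (p.1.1 :: p.1.2 :: q.1.1 :: q.1.2 :: flat t₂) :=
          flat_perm hLperm
        have hnd2 : (p.1.1 :: p.1.2 :: q.1.1 :: q.1.2 :: flat t₂).Nodup :=
          hflat2.nodup_iff.mp hnd
        have hbq : p.1.2 ∉ (q.1.1 :: q.1.2 :: flat t₂) := (List.nodup_cons.mp hnd2.of_cons).1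
        have hb_ne_q1 : p.1.2 ≠ q.1.1 := fun h => hbq (by rw [h]; exact List.mem_cons_self)
        have hb_ne_q2 : p.1.2 ≠ q.1.2 := fun h => hbq (by rw [h]; simp)
        obtain ⟨s, hperm4⟩ : ∃ s : σf N,
            ([p.1.1, p.1.2, q.1.1, q.1.2] : List (Fin N)).Perm [μ, ν, s.1.1, s.1.2] := by
          rcases hqν with hq1 | hq2
          · rcases lt_or_gt_of_ne hb_ne_q2 with h | h
            · refine ⟨⟨(p.1.2, q.1.2), h⟩, ?_⟩
              show ([p.1.1, p.1.2, q.1.1, q.1.2] : List (Fin N)).Perm [μ, ν, p.1.2, q.1.2]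
              rw [hpμ, ← hq1]
              exact (List.Perm.swap ν p.1.2 [q.1.2]).cons μ
            · refine ⟨⟨(q.1.2, p.1.2), h⟩, ?_⟩
              show ([p.1.1, p.1.2, q.1.1, q.1.2] : List (Fin N)).Perm [μ, ν, q.1.2, p.1.2]
              rw [hpμ, ← hq1]
              exact ((List.Perm.swap ν p.1.2 [q.1.2]).trans
                ((List.Perm.swap q.1.2 p.1.2 []).cons ν)).cons μ
          · rcases lt_or_gt_of_ne hb_ne_q1 with h | h
            · refine ⟨⟨(p.1.2, q.1.1), h⟩, ?_⟩
              show ([p.1.1, p.1.2, q.1.1, q.1.2] : List (Fin N)).Perm [μ, ν, p.1.2, q.1.1]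
              rw [hpμ, ← hq2]
              exact (((List.Perm.swap ν q.1.1 []).cons p.1.2).trans
                (List.Perm.swap ν p.1.2 [q.1.1])).cons μ
            · refine ⟨⟨(q.1.1, p.1.2), h⟩, ?_⟩
              show ([p.1.1, p.1.2, q.1.1, q.1.2] : List (Fin N)).Perm [μ, ν, q.1.1, p.1.2]
              rw [hpμ, ← hq2]
              exact ((List.Perm.swap q.1.1 p.1.2 [ν]).trans
                (((List.Perm.swap ν p.1.2 []).cons q.1.1).trans
                  (List.Perm.swap ν q.1.1 [p.1.2]))).cons μ
        have hflat3 : (flat L).Perm (μ :: ν :: s.1.1 :: s.1.2 :: flat t₂) :=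
          hflat2.trans (hperm4.append_right (flat t₂))
        have hnd3 : (μ :: ν :: s.1.1 :: s.1.2 :: flat t₂).Nodup := hflat3.nodup_iff.mp hnd
        have hndst : (flat (s :: t₂)).Nodup :=
          (show (s.1.1 :: s.1.2 :: flat t₂).Nodup from (hnd3.of_cons).of_cons)
        have hlt2 : t₂.length + 1 = t.length := List.length_erase_add_one hq
        obtain ⟨c₂, l₂, hsort₂, hfin₂, hmem₂, hphi₂⟩ :=
          IH t.length (by omega) (s :: t₂) (by simpa using hlt2) hndst
        have hPpq : Φ (X p * X q) = ([p.1.1, p.1.2, q.1.1, q.1.2].map (e K)).prod := by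
          have h1 := Phi_list Φ hΦ [p, q]
          simpa [flat] using h1
        have hPrs : Φ (X r * X s) = ([μ, ν, s.1.1, s.1.2].map (e K)).prod := by
          have h1 := Phi_list Φ hΦ [r, s]
          simpa [flat, hr] using h1
        obtain ⟨ε, -, hε⟩ := perm_sign (K := K) hperm4
        have hquad : (X p * X q : MvPolynomial (σf N) K) - ε • (X r * X s) ∈ Igen Φ :=
          quad_mem Φ p q r s ε (by rw [hPpq, hPrs, hε])
        have hprodL : (L.map X).prod
            = (X p : MvPolynomial (σf N) K) * (X q * (t₂.map X).prod) := by
          rw [(hLperm.map X).prod_eq, List.map_cons, List.map_cons, List.prod_cons,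
            List.prod_cons]
        have hmem₂' : (X s : MvPolynomial (σf N) K) * (t₂.map X).prod
            - c₂ • (l₂.map X).prod ∈ Igen Φ := by simpa using hmem₂
        have hphi₂' : Φ ((X s : MvPolynomial (σf N) K) * (t₂.map X).prod)
            = c₂ • Φ ((l₂.map X).prod) := by simpa using hphi₂
        have hxkey : ∀ x ∈ flat l₂, μ < x ∧ ν < x := by
          intro x hx
          have hx' : x ∈ (s.1.1 :: s.1.2 :: flat t₂) := by
            have h1 : x ∈ (flat l₂).toFinset := List.mem_toFinset.mpr hx
            rw [hfin₂] at h1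
            exact List.mem_toFinset.mp h1
          have hxT : x ∈ T := by
            rw [hT, List.mem_toFinset]
            refine hflat3.mem_iff.mpr ?_
            exact List.mem_cons_of_mem μ (List.mem_cons_of_mem ν hx')
          have hxμ : x ≠ μ := by
            rintro rfl
            exact (List.nodup_cons.mp hnd3).1 (List.mem_cons_of_mem ν hx')
          have hxν : x ≠ ν := by
            rintro rfl
            exact (List.nodup_cons.mp hnd3.of_cons).1 hx'
          exact ⟨lt_of_le_of_ne (hμ_min x hxT) (Ne.symm hxμ), hgen x hxT hxμ hxν⟩
        refine ⟨ε * c₂, r :: l₂, ?_, ?_, ?_, ?_⟩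
        · show (μ :: ν :: flat l₂).Pairwise (· < ·)
          rw [List.pairwise_cons, List.pairwise_cons]
          refine ⟨?_, fun x hx => (hxkey x hx).2, hsort₂⟩
          intro x hx
          rcases List.mem_cons.mp hx with rfl | hx
          · exact hμν
          · exact (hxkey x hx).1
        · show (μ :: ν :: flat l₂).toFinset = T
          have hTeq : T = insert μ (insert ν (flat (s :: t₂)).toFinset) := by
            rw [hT, List.toFinset_eq_of_perm _ _ hflat3]
            simp [flat, List.toFinset_cons]
          rw [hTeq, ← hfin₂]
          simp [List.toFinset_cons]
        · rw [hprodL, List.map_cons, List.prod_cons]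
          have hkey : (X p : MvPolynomial (σf N) K) * (X q * (t₂.map X).prod)
                - (ε * c₂) • (X r * (l₂.map X).prod)
              = (X p * X q - ε • (X r * X s)) * (t₂.map X).prod
                + algebraMap K (MvPolynomial (σf N) K) ε *
                  (X r * (X s * (t₂.map X).prod - c₂ • (l₂.map X).prod)) := by
            simp only [Algebra.smul_def, map_mul]
            ring
          rw [hkey]
          exact add_mem (Ideal.mul_mem_right _ _ hquad)
            (Ideal.mul_mem_left _ _ (Ideal.mul_mem_left _ _ hmem₂'))
        · rw [hprodL, List.map_cons, List.prod_cons]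
          have hεΦ : Φ (X p) * Φ (X q) = ε • (Φ (X r) * Φ (X s)) := by
            have h : Φ (X p * X q) = ε • Φ (X r * X s) := by rw [hPpq, hPrs, hε]
            rwa [map_mul, map_mul] at h
          calc Φ (X p * (X q * (t₂.map X).prod))
              = (Φ (X p) * Φ (X q)) * Φ ((t₂.map X).prod) := by
                rw [map_mul, map_mul, mul_assoc]
            _ = (ε • (Φ (X r) * Φ (X s))) * Φ ((t₂.map X).prod) := by rw [hεΦ]
            _ = ε • (Φ (X r) * Φ (X s * (t₂.map X).prod)) := by
                rw [smul_mul_assoc, mul_assoc, map_mul]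
            _ = ε • (Φ (X r) * (c₂ • Φ ((l₂.map X).prod))) := by rw [hphi₂']
            _ = (ε * c₂) • (Φ (X r) * Φ ((l₂.map X).prod)) := by
                rw [mul_smul_comm, smul_smul]
            _ = (ε * c₂) • Φ (X r * (l₂.map X).prod) := by rw [map_mul]

end Phi

lemma altSum_apply {R M P ι α : Type*} [CommSemiring R] [AddCommMonoid M] [Module R M]
    [AddCommMonoid P] [Module R P] (s : Finset α) (g : α → M [⋀^ι]→ₗ[R] P)
    (v : ι → M) : (∑ a ∈ s, g a) v = ∑ a ∈ s, g a v := by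
  classical
  induction s using Finset.cons_induction with
  | empty => simp
  | cons a s ha ih => rw [Finset.sum_cons, Finset.sum_cons, AlternatingMap.add_apply, ih]

variable (K) in
noncomputable def stdP : List (Fin N) → MvPolynomial (σf N) K
  | [] => 1
  | [_] => 0
  | a :: b :: tl =>
      (if h : a < b then (X ⟨(a, b), h⟩ : MvPolynomial (σf N) K) else 0) * stdP tl

lemma stdP_flat (l : List (σf N)) : stdP K (flat l) = (l.map X).prod := by
  induction l with
  | nil => rfl
  | cons p tl ih =>
      show stdP K (p.1.1 :: p.1.2 :: flat tl) = _
      rw [stdP, dif_pos p.2, ih]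
      have hp' : (⟨(p.1.1, p.1.2), p.2⟩ : σf N) = p := rfl
      rw [hp', List.map_cons, List.prod_cons]

variable (K) in
noncomputable def Dmap (hN : 1 ≤ N) :
    ExteriorAlgebra K (Fin N → K) →ₗ[K] MvPolynomial (σf N) K :=
  ExteriorAlgebra.liftAlternating fun k =>
    ∑ S ∈ Finset.powersetCard k (Finset.univ : Finset (Fin N)),
      (LinearMap.toSpanSingleton K _ (stdP K (S.sort (· ≤ ·)))).compAlternatingMap
        ((Matrix.detRowAlternating).compLinearMap
          (LinearMap.funLeft K K fun b : Fin k => (S.sort (· ≤ ·)).getD b ⟨0, hN⟩))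

lemma Dmap_sorted (hN : 1 ≤ N) (g : List (Fin N)) (hs : g.Pairwise (· < ·)) :
    Dmap K hN ((g.map (e K)).prod) = stdP K g := by
  have hnd : g.Nodup := hs.nodup
  have h1 : (g.map (e K)).prod = ιMulti K g.length (fun i => Pi.single (g.get i) 1) := by
    rw [ExteriorAlgebra.ιMulti_apply]
    conv_lhs => rw [← List.ofFn_get g]
    rw [List.map_ofFn]
    rfl
  rw [h1, Dmap, ExteriorAlgebra.liftAlternating_apply_ιMulti, altSum_apply]
  have hcard : g.toFinset.card = g.length := List.toFinset_card_of_nodup hnd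
  have hsort : g.toFinset.sort (· ≤ ·) = g :=
    (List.toFinset_sort (· ≤ ·) hnd).mpr (hs.imp fun h => le_of_lt h)
  have hinj := List.nodup_iff_injective_get.mp hnd
  rw [Finset.sum_eq_single g.toFinset]
  · simp only [AlternatingMap.compLinearMap_apply, LinearMap.compAlternatingMap_apply,
      LinearMap.toSpanSingleton_apply, hsort]
    have hrow : (fun i => (LinearMap.funLeft K K fun b : Fin g.length =>
        g.getD b ⟨0, hN⟩) (Pi.single (g.get i) 1))
        = (1 : Matrix (Fin g.length) (Fin g.length) K) := by
      funext a b
      simp only [LinearMap.funLeft_apply, Function.comp]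
      have hb2 : g.getD ((b : Fin g.length) : ℕ) ⟨0, hN⟩ = g.get b := by
        rw [List.getD_eq_getElem g _ b.isLt, List.get_eq_getElem]
      rw [hb2]
      by_cases hab : a = b
      · subst hab; rw [Matrix.one_apply_eq, Pi.single_eq_same]
      · rw [Matrix.one_apply_ne hab, Pi.single_eq_of_ne (fun hc => hab (hinj hc).symm)]
    rw [hrow, show Matrix.detRowAlternating
      (1 : Matrix (Fin g.length) (Fin g.length) K) = 1 from Matrix.det_one, one_smul]
  · intro S hS hSne
    have hScard : S.card = g.length := (Finset.mem_powersetCard.mp hS).2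
    obtain ⟨x, hxg, hxS⟩ : ∃ x ∈ g.toFinset, x ∉ S := by
      by_contra hcon
      push_neg at hcon
      exact hSne ((Finset.eq_of_subset_of_card_le hcon (by omega)).symm)
    obtain ⟨a, ha⟩ := List.mem_iff_get.mp (List.mem_toFinset.mp hxg)
    simp only [AlternatingMap.compLinearMap_apply, LinearMap.compAlternatingMap_apply,
      LinearMap.toSpanSingleton_apply]
    have hlen : (S.sort (· ≤ ·)).length = g.length := by
      rw [Finset.length_sort]; exact hScard
    have hdet : Matrix.detRowAlternating (fun i => (LinearMap.funLeft K K
        fun b : Fin g.length => (S.sort (· ≤ ·)).getD b ⟨0, hN⟩)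
        (Pi.single (g.get i) 1)) = (0 : K) := by
      refine Matrix.det_eq_zero_of_row_eq_zero a fun b => ?_
      show (LinearMap.funLeft K K _) (Pi.single (g.get a) (1 : K)) b = 0
      simp only [LinearMap.funLeft_apply, Function.comp]
      have hblt : (b : ℕ) < (S.sort (· ≤ ·)).length := by rw [hlen]; exact b.isLt
      have hb2 : (S.sort (· ≤ ·)).getD (b : ℕ) ⟨0, hN⟩ = (S.sort (· ≤ ·))[(b : ℕ)] :=
        List.getD_eq_getElem _ _ hblt
      rw [hb2]
      refine Pi.single_eq_of_ne (fun hc => ?_) _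
      have hmem : (S.sort (· ≤ ·))[(b : ℕ)] ∈ S := by
        rw [← Finset.mem_sort (· ≤ ·)]
        exact List.getElem_mem _
      rw [hc, ha] at hmem
      exact hxS hmem
    rw [hdet, zero_smul]
  · intro hcon
    exact absurd (Finset.mem_powersetCard_univ.mpr hcard) hcon

section Phi2
variable (Φ : MvPolynomial (σf N) K →ₐ[K] ExteriorAlgebra K (Fin N → K))
variable (hΦ : ∀ p : σf N, Φ (X p) = e K p.1.1 * e K p.1.2)

include hΦ in
lemma ker_decomp (hN : 1 ≤ N) (f : MvPolynomial (σf N) K) :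
    f - Dmap K hN (Φ f) ∈ Igen Φ := by
  set L : MvPolynomial (σf N) K →ₗ[K] MvPolynomial (σf N) K :=
    LinearMap.id - (Dmap K hN).comp Φ.toLinearMap with hLdef
  set U : Submodule K (MvPolynomial (σf N) K) :=
    Submodule.comap L ((Igen Φ).restrictScalars K) with hU
  have hL : ∀ h : MvPolynomial (σf N) K, L h = h - Dmap K hN (Φ h) := by
    intro h
    simp [hLdef, LinearMap.sub_apply]
  suffices htop : (⊤ : Submodule K (MvPolynomial (σf N) K)) ≤ U by
    have := htop (Submodule.mem_top (x := f))
    rw [hU, Submodule.mem_comap, hL] at this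
    exact this
  have htop2 : (⊤ : Submodule K (MvPolynomial (σf N) K)) =
      Submodule.span K (Submonoid.closure (Set.range (X : σf N → MvPolynomial (σf N) K))) := by
    rw [← Algebra.adjoin_eq_span, MvPolynomial.adjoin_range_X, Algebra.top_toSubmodule]
  rw [htop2, Submodule.span_le]
  intro x hx
  obtain ⟨l₀, hl₀, rfl⟩ := Submonoid.exists_list_of_mem_closure hx
  obtain ⟨l, rfl⟩ : ∃ l : List (σf N), l₀ = l.map X := by
    clear hx
    induction l₀ with
    | nil => exact ⟨[], rfl⟩
    | cons y t ih =>
        obtain ⟨p, hp⟩ := hl₀ y List.mem_cons_self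
        obtain ⟨l, hl⟩ := ih fun z hz => hl₀ z (List.mem_cons_of_mem _ hz)
        exact ⟨p :: l, by rw [List.map_cons, hl, hp]⟩
  show (l.map X).prod ∈ U
  rw [hU, Submodule.mem_comap, hL]
  show _ ∈ Igen Φ
  by_cases hdup : (flat l).Nodup
  · obtain ⟨c, l', hsort, -, hmem, hphi⟩ := straighten Φ hΦ l.length l rfl hdup
    have h2 : Φ ((l.map X).prod) = c • ((flat l').map (e K)).prod := by
      rw [hphi, Phi_list Φ hΦ l']
    rw [h2, map_smul, Dmap_sorted hN _ hsort, stdP_flat]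
    exact hmem
  · have h0 : (l.map X).prod ∈ Igen Φ := prodX_mem_of_dup Φ hΦ l hdup
    have hz : Φ ((l.map X).prod) = 0 := Igen_le_ker Φ h0
    rw [hz, map_zero, sub_zero]
    exact h0

include hΦ in
lemma ker_le (hN : 1 ≤ N) : RingHom.ker Φ.toRingHom ≤ Igen Φ := by
  intro f hf
  have hf' : Φ f = 0 := hf
  have := ker_decomp Φ hΦ hN f
  rwa [hf', map_zero, sub_zero] at this

include hΦ in
lemma pair_mem (i j : Fin N) : e K i * e K j ∈ Φ.range := by
  rcases lt_trichotomy i j with h | rfl | h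
  · exact ⟨X ⟨(i, j), h⟩, hΦ _⟩
  · rw [show e K i * e K i = 0 from ι_sq_zero _]
    exact zero_mem _
  · refine ⟨-X ⟨(j, i), h⟩, ?_⟩
    rw [map_neg]
    show -(Φ (X ⟨(j, i), h⟩)) = e K i * e K j
    rw [hΦ]
    show -(e K j * e K i) = e K i * e K j
    rw [e_swap i j]

include hΦ in
lemma even_prod_mem : ∀ (n : ℕ) (l : List (Fin N)), l.length = n → Even n →
    (l.map (e K)).prod ∈ Φ.range := by
  intro n
  induction n using Nat.strong_induction_on with
  | _ n IH =>
    intro l hlen heven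
    match l with
    | [] => exact (by simpa using one_mem Φ.range)
    | [a] =>
        exfalso
        simp only [List.length_singleton] at hlen
        rw [← hlen] at heven
        exact (Nat.not_even_iff_odd.mpr odd_one) heven
    | a :: b :: tl =>
        have hlen2 : tl.length + 2 = n := by simpa using hlen
        have hev2 : Even tl.length := by
          obtain ⟨k, hk⟩ := heven
          exact ⟨k - 1, by omega⟩
        have htl : (tl.map (e K)).prod ∈ Φ.range :=
          IH tl.length (by omega) tl rfl hev2
        rw [List.map_cons, List.map_cons, List.prod_cons, List.prod_cons, ← mul_assoc]
        exact mul_mem (pair_mem Φ hΦ a b) htl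

end Phi2
end Stmt11

open Stmt11 MvPolynomial ExteriorAlgebra in
/-- let `K` be a field of characteristic zero, `E = K^N` with
standard basis `e i = Pi.single i 1`, and `Λ = ⋀ E` the exterior algebra.
Let `P = K[x_{ij} : i < j]` (variables indexed by pairs `i < j`, each of
degree 1) and let `Φ : P → Λ` be the `K`-algebra homomorphism determined by
`Φ(x_{ij}) = e_i ∧ e_j`.  Then:
(1) the image of `Φ` is the span of all products of an even number of basis
    vectors (the even part of `Λ`); and
(2) `ker Φ` is generated as an ideal by its homogeneous elements of degree 2. -/
theorem stmt_11 (K : Type*) [Field K] [CharZero K] (N : ℕ) (hN : 1 ≤ N)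
    (Φ : MvPolynomial {p : Fin N × Fin N // p.1 < p.2} K →ₐ[K]
        ExteriorAlgebra K (Fin N → K))
    (hΦ : ∀ p : {p : Fin N × Fin N // p.1 < p.2},
      Φ (MvPolynomial.X p) =
        ExteriorAlgebra.ι K (Pi.single p.1.1 (1 : K)) *
          ExteriorAlgebra.ι K (Pi.single p.1.2 (1 : K))) :
    Subalgebra.toSubmodule Φ.range =
      Submodule.span K {x : ExteriorAlgebra K (Fin N → K) |
        ∃ l : List (Fin N), Even l.length ∧
          x = (l.map fun i => ExteriorAlgebra.ι K (Pi.single i (1 : K))).prod} ∧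
    RingHom.ker Φ.toRingHom =
      Ideal.span {f | MvPolynomial.IsHomogeneous f 2 ∧ Φ f = 0} := by
  have hΦ' : ∀ p : σf N, Φ (X p) = e K p.1.1 * e K p.1.2 := hΦ
  constructor
  · apply le_antisymm
    · set V : Submodule K (ExteriorAlgebra K (Fin N → K)) :=
        Submodule.span K {x : ExteriorAlgebra K (Fin N → K) |
          ∃ l : List (Fin N), Even l.length ∧
            x = (l.map fun i => ExteriorAlgebra.ι K (Pi.single i (1 : K))).prod} with hV
      have h1V : (1 : ExteriorAlgebra K (Fin N → K)) ∈ V :=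
        Submodule.subset_span ⟨[], by simp, by simp⟩
      have hmulV : ∀ x y : ExteriorAlgebra K (Fin N → K), x ∈ V → y ∈ V → x * y ∈ V := by
        intro x y hx hy
        have hVV : V * V ≤ V := by
          rw [hV, Submodule.span_mul_span]
          refine Submodule.span_le.mpr ?_
          rintro z hz
          rw [Set.mem_mul] at hz
          obtain ⟨u, hu, w, hw, rfl⟩ := hz
          obtain ⟨l₁, he₁, rfl⟩ := hu
          obtain ⟨l₂, he₂, rfl⟩ := hw
          exact Submodule.subset_span ⟨l₁ ++ l₂, by simpa using he₁.add he₂, by simp⟩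
        exact hVV (Submodule.mul_mem_mul hx hy)
      have hrange : Φ.range ≤ V.toSubalgebra h1V hmulV := by
        rw [← Algebra.map_top (f := Φ), ← MvPolynomial.adjoin_range_X, AlgHom.map_adjoin]
        refine Algebra.adjoin_le ?_
        rintro z ⟨w, ⟨p, rfl⟩, rfl⟩
        show Φ (X p) ∈ V
        rw [hΦ' p]
        exact Submodule.subset_span ⟨[p.1.1, p.1.2], ⟨1, rfl⟩, by simp [e]⟩
      intro x hx
      exact hrange hx
    · refine Submodule.span_le.mpr ?_
      rintro x ⟨l, hev, rfl⟩
      exact even_prod_mem Φ hΦ' l.length l rfl hev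
  · show RingHom.ker Φ.toRingHom = Igen Φ
    exact le_antisymm (ker_le Φ hΦ' hN) (Igen_le_ker Φ)
end
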